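/- arXiv:2312.06898 — 9 statements merged into one kernel-verified Lean document; each statement's English description precedes it below -/
import Mathlib

section
/- Let p > 2 be a prime and let V′ be the set of vectors v ∈ {−1,1}^{4p} whose last coordinate equals 1 and whose coordinates sum to 0. Let G′ be the simple graph on vertex set V′ in which two distinct vectors are adjacent exactly when their inner product is 0. Then the chromatic number of G′ is at least C(4p, 2p) / (4 · C(4p, p−1)), where C(n,k) denotes the binomial coefficient. -/
/-- The set of vectors `v ∈ {-1,1}^{4p}` whose last coordinate equals `1` and whose
coordinates sum to `0`. -/
def FWVertices (p : ℕ) : Type :=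
  {v : Fin (4 * p) → ℤ //
    (∀ i, v i = 1 ∨ v i = -1) ∧
    (∀ i : Fin (4 * p), (i : ℕ) = 4 * p - 1 → v i = 1) ∧
    (∑ i, v i) = 0}

/-- The graph on `FWVertices p` in which two distinct vectors are adjacent exactly when
their inner product is `0`. -/
def FWGraph (p : ℕ) : SimpleGraph (FWVertices p) :=
  SimpleGraph.fromRel (fun u v => (∑ i, u.1 i * v.1 i) = 0)

open Finset


lemma alt_sum_choose (m k : ℕ) (hm : 1 ≤ m) :
    ∑ j ∈ Finset.range (k+1), (-1 : ℤ)^(k-j) * (m.choose j) = ((m-1).choose k : ℤ) := by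
  obtain ⟨n, rfl⟩ : ∃ n, m = n + 1 := ⟨m - 1, by omega⟩
  induction k with
  | zero => simp
  | succ k ih =>
    rw [Finset.sum_range_succ]
    have h1 : ∀ j ∈ Finset.range (k+1), (-1 : ℤ)^(k+1-j) * ((n+1).choose j)
        = -((-1 : ℤ)^(k-j) * ((n+1).choose j)) := by
      intro j hj
      rw [Finset.mem_range] at hj
      have : k+1-j = (k-j)+1 := by omega
      rw [this, pow_succ]
      ring
    rw [Finset.sum_congr rfl h1, Finset.sum_neg_distrib, ih]
    have : (n+1).choose (k+1) = n.choose k + n.choose (k+1) := Nat.choose_succ_succ' n k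
    push_cast [this]
    simp [Nat.sub_self]

-- divisibility lemma
lemma dvd_choose_of_ne (p m : ℕ) (hp : p.Prime) (hm1 : 1 ≤ m) (hm2 : m ≤ 2*p - 1)
    (hmp : m ≠ p) : p ∣ (m-1).choose (p-1) := by
  have hp2 : 2 ≤ p := hp.two_le
  rcases lt_or_gt_of_ne hmp with h | h
  · rw [Nat.choose_eq_zero_of_lt (by omega)]
    exact dvd_zero p
  · exact hp.dvd_choose (by omega) (by omega) (by omega)

-- nonvanishing: C(2p-1, p-1) ≡ 1 mod p
lemma choose_two_p_sub_one (p : ℕ) (hp : p.Prime) :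
    ((2*p-1).choose (p-1) : ZMod p) = 1 := by
  haveI : Fact p.Prime := ⟨hp⟩
  have hp2 := hp.two_le
  have h := Choose.choose_modEq_choose_mod_mul_choose_div_nat (n := 2*p-1) (k := p-1) (p := p)
  have h1 : (2*p-1) % p = p - 1 := by
    have : 2*p-1 = p + (p-1) := by omega
    rw [this, Nat.add_mod_left, Nat.mod_eq_of_lt (by omega)]
  have h2 : (2*p-1) / p = 1 := by
    have : 2*p-1 = p * 1 + (p-1) := by omega
    rw [this, Nat.mul_add_div (by omega), Nat.div_eq_of_lt (by omega)]
  have h3 : (p-1) % p = p - 1 := Nat.mod_eq_of_lt (by omega)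
  have h4 : (p-1) / p = 0 := Nat.div_eq_of_lt (by omega)
  rw [h1, h2, h3, h4] at h
  simp at h
  have h5 : ((2*p-1).choose (p-1) : ZMod p) = ((1:ℕ) : ZMod p) := (ZMod.natCast_eq_natCast_iff _ _ _).mpr h
  simpa using h5

lemma sum_choose_le (p m : ℕ) (hp2 : 2 < p) (hm : m ≤ p - 1) :
    ∑ i ∈ Finset.range (m+1), (4*p).choose i ≤ 2 * (4*p).choose m := by
  induction m with
  | zero => simp
  | succ m ih =>
    rw [Finset.sum_range_succ]
    have step : 2 * (4*p).choose m ≤ (4*p).choose (m+1) := by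
      have h := Nat.choose_succ_right_eq (4*p) m
      have hpos : 0 < m + 1 := Nat.succ_pos m
      have : 2 * (4*p).choose m * (m+1) ≤ (4*p).choose (m+1) * (m+1) := by
        rw [h]
        have : 2 * (m+1) ≤ 4*p - m := by omega
        calc 2 * (4*p).choose m * (m+1) = (4*p).choose m * (2*(m+1)) := by ring
          _ ≤ (4*p).choose m * (4*p - m) := Nat.mul_le_mul_left _ this
      exact Nat.le_of_mul_le_mul_right this hpos
    have ihm := ih (by omega)
    omega

lemma fw_core (p : ℕ) (hp : p.Prime) (hp2 : 2 < p) (e : Fin (4*p))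
    (F : Finset (Finset (Fin (4*p))))
    (hcard : ∀ A ∈ F, A.card = 2*p) (he : ∀ A ∈ F, e ∈ A)
    (hint : ∀ A ∈ F, ∀ B ∈ F, A ≠ B → (A ∩ B).card ≠ p) :
    F.card ≤ 2 * (4*p).choose (p-1) := by
  haveI : Fact p.Prime := ⟨hp⟩
  have hp0 : 0 < p := by omega
  set mT : Finset (Fin (4*p)) → ({A : Finset (Fin (4*p)) // A ∈ F} → ZMod p) :=
    fun T B => if T ⊆ B.1 then (1 : ZMod p) else 0 with hmT
  set S : Finset (Finset (Fin (4*p))) :=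
    (Finset.range p).biUnion (fun i => Finset.powersetCard i Finset.univ) with hS
  set S' : Finset ({A : Finset (Fin (4*p)) // A ∈ F} → ZMod p) := S.image mT with hS'
  set W : Submodule (ZMod p) ({A : Finset (Fin (4*p)) // A ∈ F} → ZMod p) :=
    Submodule.span (ZMod p) (S' : Set _) with hW
  set g : {A : Finset (Fin (4*p)) // A ∈ F} → ({A : Finset (Fin (4*p)) // A ∈ F} → ZMod p) :=
    fun A B => ((((A.1 ∩ B.1).card - 1).choose (p-1) : ℕ) : ZMod p) with hg
  have hcapcard : ∀ A B : {A : Finset (Fin (4*p)) // A ∈ F},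
      1 ≤ (A.1 ∩ B.1).card ∧ (A.1 ∩ B.1).card ≤ 2*p := by
    intro A B
    constructor
    · exact Finset.card_pos.mpr ⟨e, Finset.mem_inter.mpr ⟨he _ A.2, he _ B.2⟩⟩
    · calc (A.1 ∩ B.1).card ≤ A.1.card := Finset.card_le_card (Finset.inter_subset_left)
        _ = 2*p := hcard _ A.2
  have hoff : ∀ A B : {A : Finset (Fin (4*p)) // A ∈ F}, A ≠ B → g A B = 0 := by
    intro A B hAB
    have hne : A.1 ≠ B.1 := fun h => hAB (Subtype.ext h)
    have h1 := hcapcard A B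
    have h2 : (A.1 ∩ B.1).card ≠ 2*p := by
      intro h
      have hAA : A.1 ∩ B.1 = A.1 :=
        Finset.eq_of_subset_of_card_le Finset.inter_subset_left (by rw [hcard _ A.2, h])
      have hsub : A.1 ⊆ B.1 := by
        rw [← Finset.inter_eq_left]; exact hAA
      have : A.1 = B.1 := Finset.eq_of_subset_of_card_le hsub
        (by rw [hcard _ A.2, hcard _ B.2])
      exact hne this
    have h3 : (A.1 ∩ B.1).card ≠ p := hint _ A.2 _ B.2 hne
    have hdvd := dvd_choose_of_ne p (A.1 ∩ B.1).card hp h1.1 (by omega) h3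
    simp only [hg]
    exact (ZMod.natCast_eq_zero_iff _ p).mpr hdvd
  have hdiag : ∀ A : {A : Finset (Fin (4*p)) // A ∈ F}, g A A = 1 := by
    intro A
    have hAA : A.1 ∩ A.1 = A.1 := Finset.inter_self _
    simp only [hg, hAA, hcard _ A.2]
    exact choose_two_p_sub_one p hp
  have hgW : ∀ A : {A : Finset (Fin (4*p)) // A ∈ F}, g A ∈ W := by
    intro A
    have hrepr : g A = ∑ j ∈ Finset.range p,
        ((((-1 : ℤ)^(p-1-j) : ℤ) : ZMod p)) • (∑ T ∈ Finset.powersetCard j A.1, mT T) := by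
      funext B
      have hm1 := (hcapcard A B).1
      have hj : ∀ j, (∑ T ∈ Finset.powersetCard j A.1, mT T) B
          = (((A.1 ∩ B.1).card.choose j : ℕ) : ZMod p) := by
        intro j
        rw [Finset.sum_apply]
        have hstep : ∀ T ∈ Finset.powersetCard j A.1, mT T B
            = if T ⊆ B.1 then (1 : ZMod p) else 0 := fun T _ => rfl
        rw [Finset.sum_congr rfl hstep, Finset.sum_boole]
        have hfil : (Finset.powersetCard j A.1).filter (· ⊆ B.1)
            = Finset.powersetCard j (A.1 ∩ B.1) := by
          ext T
          simp only [Finset.mem_filter, Finset.mem_powersetCard, Finset.subset_inter_iff]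
          tauto
        rw [hfil, Finset.card_powersetCard]
      rw [Finset.sum_apply]
      simp only [Pi.smul_apply, hj, smul_eq_mul]
      have hZ : ∑ j ∈ Finset.range p, ((-1:ℤ)^(p-1-j)) * ((A.1 ∩ B.1).card.choose j : ℤ)
          = (((A.1 ∩ B.1).card - 1).choose (p-1) : ℤ) := by
        have := alt_sum_choose (A.1 ∩ B.1).card (p-1) hm1
        have hpp : p - 1 + 1 = p := by omega
        rwa [hpp] at this
      have hcast := congrArg (fun z : ℤ => ((z : ZMod p))) hZ
      push_cast at hcast
      simp only [hg]
      rw [← hcast]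
      push_cast
      rfl
    rw [hrepr]
    apply Submodule.sum_mem
    intro j hj
    apply Submodule.smul_mem
    apply Submodule.sum_mem
    intro T hT
    apply Submodule.subset_span
    simp only [hS', Finset.coe_image, Set.mem_image]
    refine ⟨T, ?_, rfl⟩
    simp only [hS, Finset.mem_coe, Finset.mem_biUnion, Finset.mem_range]
    exact ⟨j, Finset.mem_range.mp hj,
      Finset.mem_powersetCard.mpr ⟨Finset.subset_univ _, (Finset.mem_powersetCard.mp hT).2⟩⟩
  have hli : LinearIndependent (ZMod p) g := by
    rw [Fintype.linearIndependent_iff]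
    intro c hc B
    have hB : ∑ A : {A : Finset (Fin (4*p)) // A ∈ F}, c A * g A B = 0 := by
      have := congrFun hc B
      simpa using this
    rw [Finset.sum_eq_single B (fun A _ hAB => by rw [hoff A B hAB, mul_zero])
      (fun h => absurd (Finset.mem_univ B) h)] at hB
    rwa [hdiag B, mul_one] at hB
  have hfin : FiniteDimensional (ZMod p) W := FiniteDimensional.span_of_finite _ (S'.finite_toSet)
  have hg' : LinearIndependent (ZMod p)
      (fun A : {A : Finset (Fin (4*p)) // A ∈ F} => (⟨g A, hgW A⟩ : W)) := by
    apply LinearIndependent.of_comp W.subtype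
    exact hli
  have hcardle : Fintype.card {A : Finset (Fin (4*p)) // A ∈ F} ≤ Module.finrank (ZMod p) W :=
    hg'.fintype_card_le_finrank
  have h1 : Fintype.card {A : Finset (Fin (4*p)) // A ∈ F} = F.card := Fintype.card_coe F
  have h2 : Module.finrank (ZMod p) W ≤ S'.card := finrank_span_finset_le_card S'
  have h3 : S'.card ≤ S.card := Finset.card_image_le
  have h4 : S.card ≤ ∑ i ∈ Finset.range p, (4*p).choose i := by
    calc S.card ≤ ∑ i ∈ Finset.range p,
          (Finset.powersetCard i (Finset.univ : Finset (Fin (4*p)))).card :=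
          Finset.card_biUnion_le
      _ = ∑ i ∈ Finset.range p, (4*p).choose i := by
          apply Finset.sum_congr rfl
          intro i _
          rw [Finset.card_powersetCard, Finset.card_univ, Fintype.card_fin]
  have h5 : ∑ i ∈ Finset.range p, (4*p).choose i ≤ 2 * (4*p).choose (p-1) := by
    have h5' := sum_choose_le p (p-1) hp2 le_rfl
    have hpp : p - 1 + 1 = p := by omega
    rwa [hpp] at h5'
  omega

variable {p : ℕ}

/-- positions of +1 -/
def Phi (u : FWVertices p) : Finset (Fin (4*p)) := Finset.univ.filter (fun i => u.1 i = 1)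

lemma phi_spec (u : FWVertices p) (i : Fin (4*p)) :
    u.1 i = if i ∈ Phi u then 1 else -1 := by
  rcases u.2.1 i with h | h <;> simp [Phi, h]

lemma sum_pm (m : ℕ) (s : Finset (Fin m)) :
    ∑ i : Fin m, (if i ∈ s then (1:ℤ) else -1) = 2 * s.card - m := by
  have h : ∀ i ∈ Finset.univ, (if i ∈ s then (1:ℤ) else -1)
      = 2 * (if i ∈ s then (1:ℤ) else 0) - 1 := by
    intro i _; split <;> ring
  rw [Finset.sum_congr rfl h, Finset.sum_sub_distrib, ← Finset.mul_sum]
  simp [Finset.sum_ite_mem, mul_comm]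

lemma phi_card (hp : 0 < p) (u : FWVertices p) : (Phi u).card = 2 * p := by
  have h0 := u.2.2.2
  have h : ∑ i, u.1 i = 2 * ((Phi u).card : ℤ) - (4*p : ℕ) := by
    rw [Finset.sum_congr rfl (fun i _ => phi_spec u i), sum_pm]
  rw [h0] at h
  have : (2 * (Phi u).card : ℤ) = ((4 * p : ℕ) : ℤ) := by linarith
  have := this
  omega

lemma inner_eq (hp : 0 < p) (u v : FWVertices p) :
    (∑ i, u.1 i * v.1 i) = 4 * ((Phi u ∩ Phi v).card : ℤ) - 4 * p := by
  have h : ∀ i ∈ Finset.univ, u.1 i * v.1 i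
      = 4 * (if i ∈ Phi u ∩ Phi v then (1:ℤ) else 0)
        - 2 * (if i ∈ Phi u then (1:ℤ) else 0)
        - 2 * (if i ∈ Phi v then (1:ℤ) else 0) + 1 := by
    intro i _
    rw [phi_spec u i, phi_spec v i]
    by_cases hu : i ∈ Phi u <;> by_cases hv : i ∈ Phi v <;>
      simp [hu, hv, Finset.mem_inter] <;> ring
  rw [Finset.sum_congr rfl h]
  simp only [Finset.sum_add_distrib, Finset.sum_sub_distrib, ← Finset.mul_sum]
  have hu := phi_card hp u
  have hv := phi_card hp v
  have hfil : Finset.univ.filter (fun x => x ∈ Phi u ∧ x ∈ Phi v) = Phi u ∩ Phi v := by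
    ext x; simp
  simp [Finset.sum_ite_mem, hu, hv, hfil]
  push_cast
  ring

/-- vertex from a set -/
def psi (hp : 0 < p) (A : Finset (Fin (4*p))) (h1 : A.card = 2*p)
    (h2 : (⟨4*p-1, by omega⟩ : Fin (4*p)) ∈ A) : FWVertices p := by
  refine ⟨fun i => if i ∈ A then 1 else -1, fun i => ?_, fun i hi => ?_, ?_⟩
  · simp only []
    split <;> simp
  · have hie : i = (⟨4*p-1, by omega⟩ : Fin (4*p)) := by
      apply Fin.ext; exact hi
    simp only [hie]
    rw [if_pos h2]
  · rw [sum_pm, h1]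
    push_cast
    ring

lemma phi_psi (hp : 0 < p) (A : Finset (Fin (4*p))) (h1 : A.card = 2*p)
    (h2 : (⟨4*p-1, by omega⟩ : Fin (4*p)) ∈ A) : Phi (psi hp A h1 h2) = A := by
  ext i
  simp only [Phi, Finset.mem_filter, Finset.mem_univ, true_and, psi]
  by_cases h : i ∈ A <;> simp [h]

lemma calA_card (hp : 0 < p) :
    ((Finset.univ : Finset (Finset (Fin (4*p)))).filter
      (fun A => A.card = 2*p ∧ (⟨4*p-1, by omega⟩ : Fin (4*p)) ∈ A)).card
      = (4*p-1).choose (2*p-1) := by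
  classical
  set e : Fin (4*p) := ⟨4*p-1, by omega⟩
  have h : ((Finset.univ : Finset (Finset (Fin (4*p)))).filter
      (fun A => A.card = 2*p ∧ e ∈ A)).card
      = (Finset.powersetCard (2*p-1) (Finset.univ.erase e)).card := by
    refine Finset.card_bij' (fun A _ => A.erase e) (fun B _ => insert e B) ?_ ?_ ?_ ?_
    · intro A hA
      simp only [Finset.mem_filter] at hA
      rw [Finset.mem_powersetCard]
      constructor
      · intro x hx
        simp only [Finset.mem_erase] at hx ⊢
        exact ⟨hx.1, Finset.mem_univ x⟩
      · rw [Finset.card_erase_of_mem hA.2.2, hA.2.1]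
    · intro B hB
      rw [Finset.mem_powersetCard] at hB
      have heB : e ∉ B := fun h => (Finset.mem_erase.mp (hB.1 h)).1 rfl
      simp only [Finset.mem_filter, Finset.mem_univ, true_and]
      constructor
      · rw [Finset.card_insert_of_notMem heB, hB.2]
        omega
      · exact Finset.mem_insert_self e B
    · intro A hA
      simp only [Finset.mem_filter] at hA
      exact Finset.insert_erase hA.2.2
    · intro B hB
      rw [Finset.mem_powersetCard] at hB
      have heB : e ∉ B := fun h => (Finset.mem_erase.mp (hB.1 h)).1 rfl
      exact Finset.erase_insert heB
  rw [h, Finset.card_powersetCard, Finset.card_erase_of_mem (Finset.mem_univ e),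
    Finset.card_univ, Fintype.card_fin]

/-- For a prime `p > 2`, the chromatic number of the graph `G'` on the vectors of
`{-1,1}^{4p}` with last coordinate `1` and coordinate sum `0`, with adjacency given by
orthogonality, is at least `C(4p, 2p) / (4 * C(4p, p-1))`. -/
theorem FWGraph_chromatic_lower_bound (p : ℕ) (hp : p.Prime) (hp2 : 2 < p) :
    ∀ n : ℕ, (FWGraph p).Colorable n →
      ((4 * p).choose (2 * p) : ℝ) / (4 * ((4 * p).choose (p - 1))) ≤ (n : ℝ) := by
  intro n hcol
  classical
  have hp0 : 0 < p := by omega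
  obtain ⟨C⟩ := hcol
  set e : Fin (4*p) := ⟨4*p-1, by omega⟩ with he
  set calA : Finset (Finset (Fin (4*p))) :=
    (Finset.univ : Finset (Finset (Fin (4*p)))).filter
      (fun A => A.card = 2*p ∧ e ∈ A) with hcalA
  -- color of a set
  set f : Finset (Fin (4*p)) → ℕ := fun A =>
    if h : A.card = 2*p ∧ e ∈ A then (C (psi hp0 A h.1 h.2)).val else 0 with hf
  have hmaps : ∀ A ∈ calA, f A ∈ Finset.range n := by
    intro A hA
    simp only [hcalA, Finset.mem_filter] at hA
    simp only [hf, dif_pos hA.2]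
    exact Finset.mem_range.mpr (C (psi hp0 A hA.2.1 hA.2.2)).isLt
  have hsplit := Finset.card_eq_sum_card_fiberwise hmaps
  -- each fiber is small
  have hfiber : ∀ c ∈ Finset.range n,
      (calA.filter (fun A => f A = c)).card ≤ 2 * (4*p).choose (p-1) := by
    intro c _
    apply fw_core p hp hp2 e
    · intro A hA
      simp only [hcalA, Finset.mem_filter] at hA
      exact hA.1.2.1
    · intro A hA
      simp only [hcalA, Finset.mem_filter] at hA
      exact hA.1.2.2
    · intro A hA B hB hAB hcap
      simp only [Finset.mem_filter, hcalA, Finset.mem_filter] at hA hB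
      obtain ⟨⟨-, hA1, hA2⟩, hAc⟩ := hA
      obtain ⟨⟨-, hB1, hB2⟩, hBc⟩ := hB
      set u := psi hp0 A hA1 hA2
      set v := psi hp0 B hB1 hB2
      have huv : u ≠ v := by
        intro h
        apply hAB
        have := congrArg Phi h
        rwa [phi_psi, phi_psi] at this
      have hadj : (FWGraph p).Adj u v := by
        rw [FWGraph, SimpleGraph.fromRel_adj]
        refine ⟨huv, Or.inl ?_⟩
        rw [inner_eq hp0, phi_psi, phi_psi, hcap]
        push_cast
        ring
      have := C.valid hadj
      apply this
      have hfA : f A = c := hAc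
      have hfB : f B = c := hBc
      simp only [hf, dif_pos (And.intro hA1 hA2), dif_pos (And.intro hB1 hB2)] at hfA hfB
      exact Fin.ext (hfA.trans hfB.symm)
  -- combine
  have hcount : calA.card ≤ n * (2 * (4*p).choose (p-1)) := by
    rw [hsplit]
    calc ∑ c ∈ Finset.range n, (calA.filter (fun A => f A = c)).card
        ≤ ∑ c ∈ Finset.range n, 2 * (4*p).choose (p-1) := Finset.sum_le_sum hfiber
      _ = n * (2 * (4*p).choose (p-1)) := by rw [Finset.sum_const, Finset.card_range, smul_eq_mul]
  have hAcard : calA.card = (4*p-1).choose (2*p-1) := calA_card hp0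
  have hdouble : (4*p).choose (2*p) = 2 * ((4*p-1).choose (2*p-1)) := by
    have h := Nat.add_one_mul_choose_eq (4*p-1) (2*p-1)
    have h1 : 4*p-1+1 = 4*p := by omega
    have h2 : 2*p-1+1 = 2*p := by omega
    rw [h1, h2] at h
    -- h : 4*p * (4*p-1).choose (2*p-1) = (4*p).choose (2*p) * (2*p)
    have h3 : ((4*p).choose (2*p)) * (2*p) = (2 * ((4*p-1).choose (2*p-1))) * (2*p) := by
      rw [← h]; ring
    exact Nat.eq_of_mul_eq_mul_right (by omega) h3
  -- final arithmetic
  have hnat : (4*p).choose (2*p) ≤ n * (4 * (4*p).choose (p-1)) := by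
    calc (4*p).choose (2*p) = 2 * calA.card := by rw [hAcard, hdouble]
      _ ≤ 2 * (n * (2 * (4*p).choose (p-1))) := by omega
      _ = n * (4 * (4*p).choose (p-1)) := by ring
  have hpos : (0:ℝ) < 4 * ((4*p).choose (p-1)) := by
    have := Nat.choose_pos (show p-1 ≤ 4*p by omega)
    positivity
  rw [div_le_iff₀ hpos]
  calc ((4*p).choose (2*p) : ℝ) ≤ (n * (4 * (4*p).choose (p-1)) : ℕ) := by exact_mod_cast hnat
    _ = n * (4 * ((4*p).choose (p-1))) := by push_cast; ring
end

section
/- Let p > 2 be a prime and let S be a finite set of vectors v ∈ {−1,1}^{4p} whose last coordinate equals 1 and whose coordinates sum to 0. If no two distinct vectors of S have inner product equal to 0 (i.e., S contains no orthogonal pair), then |S| ≤ 2 · C(4p, p−1), where C(n,k) denotes the binomial coefficient. -/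
open Finset

lemma binom_ratio (p k : ℕ) (hp2 : 2 < p) (hk : k + 1 ≤ p - 1) :
    3 * (4*p).choose k ≤ (4*p).choose (k+1) := by
  have key : (4*p).choose (k+1) * (k+1) = (4*p).choose k * (4*p - k) :=
    Nat.choose_succ_right_eq _ _
  have h1 : 3 * (k+1) ≤ 4*p - k := by omega
  have h2 : 3 * (4*p).choose k * (k+1) ≤ (4*p).choose (k+1) * (k+1) := by
    calc 3 * (4*p).choose k * (k+1) = (4*p).choose k * (3*(k+1)) := by ring
    _ ≤ (4*p).choose k * (4*p - k) := Nat.mul_le_mul_left _ h1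
    _ = (4*p).choose (k+1) * (k+1) := key.symm
  exact Nat.le_of_mul_le_mul_right h2 (Nat.succ_pos k)

lemma binom_sum_le (p : ℕ) (hp2 : 2 < p) :
    ∑ k ∈ range p, (4*p).choose k ≤ 2 * (4*p).choose (p-1) := by
  have main : ∀ m, m ≤ p - 1 → 2 * ∑ k ∈ range (m+1), (4*p).choose k ≤ 3 * (4*p).choose m := by
    intro m
    induction m with
    | zero => intro _; simp
    | succ n ih =>
      intro hm
      have hn : n ≤ p - 1 := by omega
      have h3 := binom_ratio p n hp2 (by omega)
      have := ih hn
      rw [Finset.sum_range_succ]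
      omega
  have hp1 : p - 1 + 1 = p := by omega
  have := main (p-1) le_rfl
  rw [hp1] at this
  omega

open Finset

lemma inner_ne_zero_mod (p : ℕ) (hp : p.Prime) (hp2 : 2 < p)
    (u v : Fin (4*p) → ℤ)
    (hu1 : ∀ i, u i = 1 ∨ u i = -1) (hv1 : ∀ i, v i = 1 ∨ v i = -1)
    (hulast : ∀ i : Fin (4*p), (i : ℕ) = 4*p - 1 → u i = 1)
    (hvlast : ∀ i : Fin (4*p), (i : ℕ) = 4*p - 1 → v i = 1)
    (hus : (∑ i, u i) = 0) (hvs : (∑ i, v i) = 0)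
    (hne : u ≠ v) (hnz : (∑ i, u i * v i) ≠ 0)
    (hdvd : (p : ℤ) ∣ (∑ i, u i * v i)) : False := by
  set s : ℤ := ∑ i, u i * v i with hs
  have hcard : (Finset.univ : Finset (Fin (4*p))).card = 4*p := by simp
  -- 4 ∣ s + 4p
  have hsum4 : (∑ i, (1 - u i) * (1 - v i)) = (4*p : ℤ) + s := by
    have : (∑ i, (1 - u i) * (1 - v i))
        = (∑ _i : Fin (4*p), (1:ℤ)) - (∑ i, u i) - (∑ i, v i) + ∑ i, u i * v i := by
      rw [← Finset.sum_sub_distrib, ← Finset.sum_sub_distrib, ← Finset.sum_add_distrib]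
      apply Finset.sum_congr rfl; intro i _; ring
    rw [this, hus, hvs]
    simp only [Finset.sum_const, hcard, nsmul_eq_mul, mul_one]
    push_cast
    ring
  have h4 : (4 : ℤ) ∣ (4*p : ℤ) + s := by
    rw [← hsum4]
    apply Finset.dvd_sum
    intro i _
    rcases hu1 i with h | h <;> rcases hv1 i with h' | h' <;> rw [h, h'] <;> norm_num
  have h4s : (4 : ℤ) ∣ s := by
    have : (4:ℤ) ∣ (4*p : ℤ) := ⟨p, rfl⟩
    omega
  -- coprime
  have hcop : IsCoprime (4 : ℤ) (p : ℤ) := by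
    have h2 : Nat.Coprime 2 p := (Nat.coprime_primes Nat.prime_two hp).mpr (by omega)
    have h4 : Nat.Coprime 4 p := by
      have := Nat.Coprime.pow_left 2 h2
      simpa using this
    exact_mod_cast Nat.isCoprime_iff_coprime.mpr h4
  have h4p : ((4*p : ℕ) : ℤ) ∣ s := by
    push_cast
    have := hcop.mul_dvd h4s hdvd
    convert this using 2
  -- bounds
  have hterm : ∀ i, u i * v i = 1 ∨ u i * v i = -1 := by
    intro i; rcases hu1 i with h | h <;> rcases hv1 i with h' | h' <;> rw [h, h'] <;> norm_num
  have hub : s ≤ 4*p := by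
    calc s ≤ ∑ _i : Fin (4*p), (1:ℤ) := by
            apply Finset.sum_le_sum; intro i _; rcases hterm i with h | h <;> omega
    _ = 4*p := by simp [hcard]
  have hlb : -(4*p) ≤ s := by
    calc (-(4*p) : ℤ) = ∑ _i : Fin (4*p), (-1:ℤ) := by simp [hcard]
    _ ≤ s := by apply Finset.sum_le_sum; intro i _; rcases hterm i with h | h <;> omega
  obtain ⟨k, hk⟩ := h4p
  push_cast at hk
  have hk1 : k = 1 ∨ k = -1 := by
    have hp0 : (0:ℤ) < 4*p := by positivity
    rcases lt_trichotomy k 0 with h | h | h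
    · right; nlinarith
    · exfalso; apply hnz; rw [hk, h]; ring
    · left; nlinarith
  rcases hk1 with h | h
  · -- s = 4p : u = v
    rw [h, mul_one] at hk
    apply hne
    have hz : (∑ i, (1 - u i * v i)) = 0 := by
      rw [Finset.sum_sub_distrib, ← hs, hk]; simp [hcard]
    have hall := (Finset.sum_eq_zero_iff_of_nonneg (by
      intro i _; rcases hterm i with h' | h' <;> omega)).mp hz
    funext i
    have := hall i (Finset.mem_univ i)
    rcases hu1 i with h' | h' <;> rcases hv1 i with h'' | h'' <;> rw [h', h''] <;>
      rw [h', h''] at this <;> omega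
  · -- s = -4p : contradiction at last coordinate
    rw [h] at hk
    have hz : (∑ i, (1 + u i * v i)) = 0 := by
      rw [Finset.sum_add_distrib, ← hs, hk]; simp [hcard]
    have hall := (Finset.sum_eq_zero_iff_of_nonneg (by
      intro i _; rcases hterm i with h' | h' <;> omega)).mp hz
    have hplt : 4*p - 1 < 4*p := by omega
    set i0 : Fin (4*p) := ⟨4*p-1, hplt⟩
    have := hall i0 (Finset.mem_univ i0)
    rw [hulast i0 rfl, hvlast i0 rfl] at this
    omega

open Finset

variable {p : ℕ} [Fact p.Prime] {S : Finset (Fin (4*p) → ℤ)}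

noncomputable def mon (p : ℕ) (S : Finset (Fin (4*p) → ℤ)) (T : Finset (Fin (4*p))) :
    (↥S) → ZMod p :=
  fun u => ∏ i ∈ T, ((u.1 i : ℤ) : ZMod p)

noncomputable def Mk (p : ℕ) (S : Finset (Fin (4*p) → ℤ)) (k : ℕ) :
    Submodule (ZMod p) ((↥S) → ZMod p) :=
  Submodule.span (ZMod p) (mon p S '' {T | T.card ≤ k})

lemma coord_mul_mon (hS1 : ∀ v ∈ S, ∀ i, v i = 1 ∨ v i = -1)
    (i : Fin (4*p)) (T : Finset (Fin (4*p))) (u : ↥S) :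
    ((u.1 i : ℤ) : ZMod p) * mon p S T u
      = mon p S (if i ∈ T then T.erase i else insert i T) u := by
  have hsq : ((u.1 i : ℤ) : ZMod p) * ((u.1 i : ℤ) : ZMod p) = 1 := by
    rcases hS1 u u.2 i with h | h <;> rw [h] <;> norm_num
  by_cases hi : i ∈ T
  · rw [if_pos hi]
    unfold mon
    rw [← Finset.mul_prod_erase T _ hi, ← mul_assoc, hsq, one_mul]
  · rw [if_neg hi]
    unfold mon
    rw [Finset.prod_insert hi]

lemma mul_linear_mem (hS1 : ∀ v ∈ S, ∀ i, v i = 1 ∨ v i = -1)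
    (c : Fin (4*p) → ZMod p) (a : ZMod p) {k : ℕ} {f : (↥S) → ZMod p}
    (hf : f ∈ Mk p S k) :
    (fun (u : ↥S) => ((∑ i, c i * ((u.1 i : ℤ) : ZMod p)) - a) * f u) ∈ Mk p S (k+1) := by
  induction hf using Submodule.span_induction with
  | mem g hg =>
    obtain ⟨T, hT, rfl⟩ := hg
    simp only [Set.mem_setOf_eq] at hT
    have heq : (fun (u : ↥S) => ((∑ i, c i * ((u.1 i : ℤ) : ZMod p)) - a) * mon p S T u)
        = (∑ i : Fin (4*p), c i • mon p S (if i ∈ T then T.erase i else insert i T))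
          - a • mon p S T := by
      funext u
      simp only [Pi.sub_apply, Finset.sum_apply, Pi.smul_apply, smul_eq_mul]
      rw [sub_mul, Finset.sum_mul]
      congr 1
      apply Finset.sum_congr rfl
      intro i _
      rw [mul_assoc, coord_mul_mon hS1 i T u]
    rw [heq]
    apply Submodule.sub_mem
    · apply Submodule.sum_mem
      intro i _
      apply Submodule.smul_mem
      apply Submodule.subset_span
      refine ⟨_, ?_, rfl⟩
      simp only [Set.mem_setOf_eq]
      by_cases hi : i ∈ T
      · rw [if_pos hi]; have := Finset.card_erase_le (s := T) (a := i); omega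
      · rw [if_neg hi]; rw [Finset.card_insert_of_notMem hi]; omega
    · apply Submodule.smul_mem
      apply Submodule.subset_span
      exact ⟨T, by simp only [Set.mem_setOf_eq]; omega, rfl⟩
  | zero =>
    have : (fun (u : ↥S) => ((∑ i, c i * ((u.1 i : ℤ) : ZMod p)) - a)
          * (0 : (↥S) → ZMod p) u) = 0 := by funext u; simp
    rw [this]; exact Submodule.zero_mem _
  | add x y hx hy ihx ihy =>
    have : (fun (u : ↥S) => ((∑ i, c i * ((u.1 i : ℤ) : ZMod p)) - a) * (x + y) u)
        = (fun (u : ↥S) => ((∑ i, c i * ((u.1 i : ℤ) : ZMod p)) - a) * x u)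
          + fun (u : ↥S) => ((∑ i, c i * ((u.1 i : ℤ) : ZMod p)) - a) * y u := by
      funext u; simp only [Pi.add_apply]; ring
    rw [this]; exact Submodule.add_mem _ ihx ihy
  | smul r x hx ihx =>
    have : (fun (u : ↥S) => ((∑ i, c i * ((u.1 i : ℤ) : ZMod p)) - a) * (r • x) u)
        = r • fun (u : ↥S) => ((∑ i, c i * ((u.1 i : ℤ) : ZMod p)) - a) * x u := by
      funext u; simp only [Pi.smul_apply, smul_eq_mul]; ring
    rw [this]; exact Submodule.smul_mem _ _ ihx

lemma prod_form_mem (hS1 : ∀ v ∈ S, ∀ i, v i = 1 ∨ v i = -1)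
    (c : Fin (4*p) → ZMod p) (t : Finset (ZMod p)) :
    (fun (u : ↥S) => ∏ j ∈ t, ((∑ i, c i * ((u.1 i : ℤ) : ZMod p)) - j))
      ∈ Mk p S t.card := by
  induction t using Finset.induction_on with
  | empty =>
    simp only [Finset.prod_empty, Finset.card_empty]
    apply Submodule.subset_span
    exact ⟨∅, by simp, by funext u; simp [mon]⟩
  | @insert a t' ha ih =>
    have heq : (fun (u : ↥S) => ∏ j ∈ insert a t',
          ((∑ i, c i * ((u.1 i : ℤ) : ZMod p)) - j))
        = fun (u : ↥S) => ((∑ i, c i * ((u.1 i : ℤ) : ZMod p)) - a)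
            * ∏ j ∈ t', ((∑ i, c i * ((u.1 i : ℤ) : ZMod p)) - j) := by
      funext u; rw [Finset.prod_insert ha]
    rw [heq, Finset.card_insert_of_notMem ha]
    exact mul_linear_mem hS1 c a ih

set_option maxHeartbeats 1000000 in
/-- For a prime `p > 2`, any set `S` of vectors of `{-1,1}^{4p}` with last coordinate `1`
and coordinate sum `0`, containing no orthogonal pair, satisfies `|S| ≤ 2 * C(4p, p-1)`. -/
theorem no_orthogonal_pair_card_bound (p : ℕ) (hp : p.Prime) (hp2 : 2 < p)
    (S : Finset (Fin (4 * p) → ℤ))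
    (hS : ∀ v ∈ S, (∀ i, v i = 1 ∨ v i = -1) ∧
      (∀ i : Fin (4 * p), (i : ℕ) = 4 * p - 1 → v i = 1) ∧ (∑ i, v i) = 0)
    (horth : ∀ u ∈ S, ∀ v ∈ S, u ≠ v → (∑ i, u i * v i) ≠ 0) :
    S.card ≤ 2 * (4 * p).choose (p - 1) := by
  haveI : Fact p.Prime := ⟨hp⟩
  haveI : NeZero p := ⟨hp.ne_zero⟩
  classical
  have hS1 : ∀ v ∈ S, ∀ i, v i = 1 ∨ v i = -1 := fun v hv => (hS v hv).1
  set t0 : Finset (ZMod p) := Finset.univ.erase 0 with ht0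
  have ht0card : t0.card = p - 1 := by
    rw [ht0, Finset.card_erase_of_mem (Finset.mem_univ _), Finset.card_univ, ZMod.card]
  -- the functions
  set g : ↥S → (↥S → ZMod p) := fun v u =>
    ∏ j ∈ t0, ((∑ i, ((v.1 i : ℤ) : ZMod p) * ((u.1 i : ℤ) : ZMod p)) - j) with hg
  -- membership in span of low degree monomials
  have hginM : ∀ v : ↥S, g v ∈ Mk p S (p - 1) := by
    intro v
    have := prod_form_mem (S := S) hS1 (fun i => ((v.1 i : ℤ) : ZMod p)) t0
    rwa [ht0card] at this
  -- diagonal values nonzero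
  have hdiag : ∀ v : ↥S, g v v ≠ 0 := by
    intro v
    have hone : ∀ i, ((v.1 i : ℤ) : ZMod p) * ((v.1 i : ℤ) : ZMod p) = 1 := by
      intro i; rcases hS1 v v.2 i with h | h <;> rw [h] <;> norm_num
    have hzero : (∑ i, ((v.1 i : ℤ) : ZMod p) * ((v.1 i : ℤ) : ZMod p)) = 0 := by
      rw [Finset.sum_congr rfl (fun i _ => hone i)]
      simp only [Finset.sum_const, Finset.card_univ, Fintype.card_fin, nsmul_eq_mul, mul_one]
      push_cast
      simp [ZMod.natCast_self]
    rw [hg]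
    simp only [hzero]
    rw [Finset.prod_ne_zero_iff]
    intro j hj
    have hj0 : j ≠ 0 := (Finset.mem_erase.mp hj).1
    intro h
    apply hj0
    have : j = 0 - (0 - j) := by ring
    rw [this, h, sub_zero]
  -- off-diagonal values zero
  have hoff : ∀ v u : ↥S, u ≠ v → g v u = 0 := by
    intro v u hne
    set c : ZMod p := ((∑ i, v.1 i * u.1 i : ℤ) : ZMod p) with hc
    have hcast : (∑ i, ((v.1 i : ℤ) : ZMod p) * ((u.1 i : ℤ) : ZMod p)) = c := by
      rw [hc]; push_cast; rfl
    have hcne : c ≠ 0 := by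
      intro h0
      have hdvd : (p : ℤ) ∣ (∑ i, v.1 i * u.1 i) :=
        (ZMod.intCast_zmod_eq_zero_iff_dvd _ p).mp h0
      have hvu : v.1 ≠ u.1 := fun h => hne (Subtype.ext h.symm)
      exact inner_ne_zero_mod p hp hp2 v.1 u.1 (hS v.1 v.2).1 (hS u.1 u.2).1
        (hS v.1 v.2).2.1 (hS u.1 u.2).2.1 (hS v.1 v.2).2.2 (hS u.1 u.2).2.2
        hvu (horth v.1 v.2 u.1 u.2 hvu) hdvd
    rw [hg]
    simp only [hcast]
    exact Finset.prod_eq_zero (Finset.mem_erase.mpr ⟨hcne, Finset.mem_univ c⟩) (by ring)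
  -- linear independence
  have hli : LinearIndependent (ZMod p) g := by
    rw [linearIndependent_iff']
    intro s a hsum v hv
    have heval := congrFun hsum v
    simp only [Finset.sum_apply, Pi.smul_apply, smul_eq_mul, Pi.zero_apply] at heval
    rw [Finset.sum_eq_single v (fun w _ hwv => by rw [hoff w v (Ne.symm hwv), mul_zero])
      (fun h => absurd hv h)] at heval
    rcases mul_eq_zero.mp heval with h | h
    · exact h
    · exact absurd h (hdiag v)
  -- dimension counting
  set 𝒯 : Finset (Finset (Fin (4*p))) :=
    (Finset.range p).biUnion (fun k => Finset.powersetCard k Finset.univ) with h𝒯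
  have hsetT : {T : Finset (Fin (4*p)) | T.card ≤ p - 1} = ↑𝒯 := by
    ext T
    simp only [Set.mem_setOf_eq, h𝒯, Finset.coe_biUnion, Finset.coe_range, Set.mem_iUnion,
      Finset.mem_coe, Finset.mem_powersetCard_univ, Set.mem_Iio]
    constructor
    · intro h; exact ⟨T.card, by omega, rfl⟩
    · rintro ⟨k, hk, rfl⟩; omega
  have hMkeq : Mk p S (p-1) = Submodule.span (ZMod p) ↑(𝒯.image (mon p S)) := by
    rw [Mk, hsetT, Finset.coe_image]
  haveI hfd : Module.Finite (ZMod p) (Mk p S (p-1)) := by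
    rw [hMkeq]
    exact Module.Finite.span_of_finite _ (Finset.finite_toSet _)
  set g' : ↥S → ↥(Mk p S (p-1)) := fun v => ⟨g v, hginM v⟩ with hg'
  have hli' : LinearIndependent (ZMod p) g' := by
    apply LinearIndependent.of_comp (Mk p S (p-1)).subtype
    exact hli
  have hcard1 : Fintype.card ↥S ≤ Module.finrank (ZMod p) (Mk p S (p-1)) :=
    hli'.fintype_card_le_finrank
  have hcard2 : Module.finrank (ZMod p) (Mk p S (p-1)) ≤ 𝒯.card := by
    have h := finrank_span_finset_le_card (R := ZMod p) (𝒯.image (mon p S))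
    unfold Set.finrank at h
    rw [hMkeq]
    exact le_trans h Finset.card_image_le
  have hTcard : 𝒯.card = ∑ k ∈ Finset.range p, (4*p).choose k := by
    rw [h𝒯, Finset.card_biUnion]
    · apply Finset.sum_congr rfl
      intro k _
      rw [Finset.card_powersetCard, Finset.card_univ, Fintype.card_fin]
    · intro x _ y _ hxy
      apply Finset.disjoint_left.mpr
      intro T hTx hTy
      rw [Finset.mem_powersetCard_univ] at hTx hTy
      exact hxy (hTx.symm.trans hTy)
  have : S.card = Fintype.card ↥S := (Fintype.card_coe S).symm
  rw [this]
  calc Fintype.card ↥S ≤ 𝒯.card := le_trans hcard1 hcard2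
  _ = ∑ k ∈ Finset.range p, (4*p).choose k := hTcard
  _ ≤ 2 * (4*p).choose (p-1) := binom_sum_le p hp2
end

section
/- For every real ε with 0 < ε < 27/16, there exists p₀ such that for every integer p ≥ p₀ one has C(4p, 2p) / (4 · C(4p, p−1)) ≥ (27/16 − ε)^p, where C(n,k) denotes the binomial coefficient and the quotient is taken in the real numbers. -/
/-!
The ratio `C(4p, 2p) / C(4p, p) = (3p)! p! / ((2p)!)²` has consecutive quotients
`3(3p+1)(3p+2) / (4(2p+1)²) → 27/16`, so it eventually dominates any constant multiple of
`s^p` for `s < 27/16`. Since `C(4p, p-1) ≤ C(4p, p)`, the claimed bound follows.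
-/

open Filter Topology Nat

theorem mul_pow_sub_le_of_forall_mul_le {u : ℕ → ℝ} {r : ℝ} {N : ℕ} (hr : 0 ≤ r)
    (h : ∀ n ≥ N, r * u n ≤ u (n + 1)) : ∀ n ≥ N, u N * r ^ (n - N) ≤ u n := by
  intro n hn
  induction n, hn using Nat.le_induction with
  | base => simp
  | succ n hn ih =>
    calc u N * r ^ (n + 1 - N) = u N * r ^ (n - N) * r := by
          rw [Nat.sub_add_comm hn, pow_succ, mul_assoc]
      _ ≤ u n * r := by gcongr
      _ ≤ u (n + 1) := by rw [mul_comm]; exact h n hn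

theorem eventually_const_mul_pow_le_of_tendsto_ratio {u : ℕ → ℝ} (hu : ∀ n, 0 < u n)
    {L s : ℝ} (h : Tendsto (fun n ↦ u (n + 1) / u n) atTop (𝓝 L)) (hs : 0 ≤ s) (hsL : s < L)
    (C : ℝ) : ∀ᶠ n in atTop, C * s ^ n ≤ u n := by
  obtain ⟨r, hsr, hrL⟩ := exists_between hsL
  have hr : 0 < r := hs.trans_lt hsr
  obtain ⟨N, hN⟩ := eventually_atTop.1 <| (h.eventually (lt_mem_nhds hrL)).mono
    fun n hn ↦ ((lt_div_iff₀ (hu n)).1 hn).le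
  have hsmall : Tendsto (fun n ↦ C * (s / r) ^ n) atTop (𝓝 0) := by
    simpa using (tendsto_pow_atTop_nhds_zero_of_lt_one (div_nonneg hs hr.le)
      ((div_lt_one hr).2 hsr)).const_mul C
  filter_upwards [eventually_ge_atTop N,
    hsmall.eventually (gt_mem_nhds (div_pos (hu N) (pow_pos hr N)))] with n hnN hn
  calc C * s ^ n = C * (s / r) ^ n * r ^ n := by
        rw [div_pow, mul_assoc, div_mul_cancel₀ _ (pow_pos hr n).ne']
    _ ≤ u N / r ^ N * r ^ n := by gcongr
    _ = u N * r ^ (n - N) := by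
        rw [div_mul_eq_mul_div, div_eq_iff (pow_pos hr N).ne', mul_assoc, ← pow_add,
          Nat.sub_add_cancel hnN]
    _ ≤ u n := mul_pow_sub_le_of_forall_mul_le hr.le hN n hnN

theorem Nat.choose_pred_le_choose {n r : ℕ} (h : r ≤ n / 2) : n.choose (r - 1) ≤ n.choose r := by
  rcases r with _ | r
  · rfl
  · exact choose_le_succ_of_lt_half_left h

noncomputable def chooseRatio (p : ℕ) : ℝ := (4 * p).choose (2 * p) / (4 * p).choose p

theorem chooseRatio_eq (p : ℕ) : chooseRatio p = (3 * p)! * p ! / ((2 * p)! : ℝ) ^ 2 := by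
  rw [chooseRatio, Nat.cast_choose ℝ (by omega : 2 * p ≤ 4 * p),
    Nat.cast_choose ℝ (by omega : p ≤ 4 * p), show 4 * p - 2 * p = 2 * p by omega,
    show 4 * p - p = 3 * p by omega]
  field_simp

theorem chooseRatio_pos (p : ℕ) : 0 < chooseRatio p := by
  rw [chooseRatio_eq]
  positivity

theorem chooseRatio_succ_div (p : ℕ) :
    chooseRatio (p + 1) / chooseRatio p =
      3 * (3 * p + 1) * (3 * p + 2) / (4 * (2 * p + 1) ^ 2) := by
  rw [chooseRatio_eq, chooseRatio_eq, show 3 * (p + 1) = 3 * p + 2 + 1 by ring,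
    show 2 * (p + 1) = 2 * p + 1 + 1 by ring]
  simp only [factorial_succ]
  push_cast
  field_simp
  ring

theorem tendsto_chooseRatio_succ_div :
    Tendsto (fun p ↦ chooseRatio (p + 1) / chooseRatio p) atTop (𝓝 (27 / 16)) := by
  have hinv := tendsto_inv_atTop_nhds_zero_nat (𝕜 := ℝ)
  have h : Tendsto
      (fun p : ℕ ↦ 3 * (3 + (p : ℝ)⁻¹) * (3 + 2 * (p : ℝ)⁻¹) / (4 * (2 + (p : ℝ)⁻¹) ^ 2))
      atTop (𝓝 (3 * (3 + 0) * (3 + 2 * 0) / (4 * (2 + 0) ^ 2))) :=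
    (((tendsto_const_nhds.add hinv).const_mul 3).mul
      (tendsto_const_nhds.add (hinv.const_mul 2))).div
      (((tendsto_const_nhds.add hinv).pow 2).const_mul 4) (by norm_num)
  norm_num at h
  refine h.congr' ((eventually_ne_atTop 0).mono fun p hp ↦ ?_)
  simp only [chooseRatio_succ_div]
  field_simp

/-- For every `0 < ε < 27/16`, for all sufficiently large `p` one has
`C(4p, 2p) / (4 * C(4p, p-1)) ≥ (27/16 - ε)^p`. -/
theorem choose_ratio_exponential_lower_bound (ε : ℝ) (hε : 0 < ε) (hε' : ε < 27 / 16) :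
    ∃ p₀ : ℕ, ∀ p : ℕ, p₀ ≤ p →
      (27 / 16 - ε) ^ p ≤ ((4 * p).choose (2 * p) : ℝ) / (4 * ((4 * p).choose (p - 1))) := by
  have hdom : ∀ᶠ p in atTop, 4 * (27 / 16 - ε) ^ p ≤ chooseRatio p :=
    eventually_const_mul_pow_le_of_tendsto_ratio chooseRatio_pos tendsto_chooseRatio_succ_div
      (by linarith) (by linarith) 4
  refine eventually_atTop.1 (hdom.mono fun p hp ↦ ?_)
  have hpos : (0 : ℝ) < (4 * p).choose (p - 1) := by
    exact_mod_cast choose_pos (by omega)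
  have hle : ((4 * p).choose (p - 1) : ℝ) ≤ (4 * p).choose p := by
    exact_mod_cast choose_pred_le_choose (by omega)
  calc (27 / 16 - ε) ^ p ≤ chooseRatio p / 4 := by linarith
    _ = (4 * p).choose (2 * p) / (4 * (4 * p).choose p) := by rw [chooseRatio]; ring
    _ ≤ (4 * p).choose (2 * p) / (4 * (4 * p).choose (p - 1)) := by gcongr
end

section
/- Every orthogonality graph in S^{d−1} whose representation contains no antipodal pair is a diameter graph in ℝ^{d²}. Precisely: if G is a finite simple graph and f is an injective map from V(G) to EuclideanSpace ℝ (Fin d) with ‖f(v)‖ = 1 for all v, with ⟨f(u), f(v)⟩ = 0 whenever u and v are adjacent, and with f(u) ≠ −f(v) for all distinct vertices u, v, then there exists an injective map F from V(G) to EuclideanSpace ℝ (Fin (d·d)) such that dist(F(u), F(v)) ≤ √2 for all vertices u, v, and dist(F(u), F(v)) = √2 whenever u and v are adjacent. -/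
open scoped RealInnerProductSpace

noncomputable def tensorMap (d : ℕ) (x : EuclideanSpace ℝ (Fin d)) :
    EuclideanSpace ℝ (Fin (d * d)) :=
  WithLp.toLp 2 (fun k => x (finProdFinEquiv.symm k).1 * x (finProdFinEquiv.symm k).2)

lemma tensorMap_inner (d : ℕ) (x y : EuclideanSpace ℝ (Fin d)) :
    ⟪tensorMap d x, tensorMap d y⟫ = ⟪x, y⟫ ^ 2 := by
  simp only [PiLp.inner_apply, RCLike.inner_apply, starRingEnd_apply, star_trivial, tensorMap, PiLp.toLp_apply]
  rw [Equiv.sum_comp (finProdFinEquiv (m := d) (n := d)).symm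
    (fun p : Fin d × Fin d => y p.1 * y p.2 * (x p.1 * x p.2))]
  rw [Fintype.sum_prod_type, sq, Finset.sum_mul_sum]
  congr 1; ext i; congr 1; ext j; ring

lemma tensorMap_norm_sq (d : ℕ) (x : EuclideanSpace ℝ (Fin d)) (hx : ‖x‖ = 1) :
    ‖tensorMap d x‖ = 1 := by
  have h : ‖tensorMap d x‖ ^ 2 = 1 := by
    rw [← real_inner_self_eq_norm_sq, tensorMap_inner, real_inner_self_eq_norm_sq, hx]; norm_num
  nlinarith [norm_nonneg (tensorMap d x)]

/-- Every orthogonality graph in `S^{d-1}` whose representation contains no antipodal pair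
is a diameter graph in `ℝ^{d²}`, realized via the tensor map `v ↦ v ⊗ v` with diameter `√2`. -/
theorem orthogonality_imp_diameter {V : Type} [Fintype V] (G : SimpleGraph V) (d : ℕ)
    (f : V → EuclideanSpace ℝ (Fin d)) (hf : Function.Injective f)
    (hnorm : ∀ v : V, ‖f v‖ = 1)
    (horth : ∀ u v : V, G.Adj u v → ⟪f u, f v⟫ = 0)
    (hanti : ∀ u v : V, u ≠ v → f u ≠ -f v) :
    ∃ F : V → EuclideanSpace ℝ (Fin (d * d)),
      Function.Injective F ∧
      (∀ u v : V, dist (F u) (F v) ≤ Real.sqrt 2) ∧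
      (∀ u v : V, G.Adj u v → dist (F u) (F v) = Real.sqrt 2) := by
  refine ⟨fun v => tensorMap d (f v), ?_, ?_, ?_⟩
  · intro u v huv
    replace huv : tensorMap d (f u) = tensorMap d (f v) := huv
    by_contra hne
    have h1 : ⟪f u, f v⟫ ^ 2 = 1 := by
      rw [← tensorMap_inner, huv, real_inner_self_eq_norm_sq, tensorMap_norm_sq d _ (hnorm v)]
      norm_num
    have h2 : ⟪f u, f v⟫ = 1 ∨ ⟪f u, f v⟫ = -1 := by
      rcases mul_eq_zero.mp (show (⟪f u, f v⟫ - 1) * (⟪f u, f v⟫ + 1) = 0 by nlinarith) with h | h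
      · left; linarith
      · right; linarith
    rcases h2 with h | h
    · exact hne (hf ((inner_eq_one_iff_of_norm_eq_one (hnorm u) (hnorm v)).mp h))
    · have h' : ⟪f u, -f v⟫ = 1 := by rw [inner_neg_right, h]; norm_num
      have hn : ‖-f v‖ = 1 := by rw [norm_neg]; exact hnorm v
      exact hanti u v hne ((inner_eq_one_iff_of_norm_eq_one (hnorm u) hn).mp h')
  · intro u v
    rw [dist_eq_norm, ← Real.sqrt_sq (norm_nonneg _), ← real_inner_self_eq_norm_sq,
      real_inner_sub_sub_self, tensorMap_inner, tensorMap_inner, tensorMap_inner,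
      real_inner_self_eq_norm_sq, real_inner_self_eq_norm_sq, hnorm, hnorm]
    apply Real.sqrt_le_sqrt
    nlinarith [sq_nonneg (⟪f u, f v⟫)]
  · intro u v hadj
    rw [dist_eq_norm, ← Real.sqrt_sq (norm_nonneg _), ← real_inner_self_eq_norm_sq,
      real_inner_sub_sub_self, tensorMap_inner, tensorMap_inner, tensorMap_inner,
      real_inner_self_eq_norm_sq, real_inner_self_eq_norm_sq, hnorm, hnorm, horth u v hadj]
    norm_num
end

section
/- For every positive integer m, every blow-up of an orthogonality graph in S^{d−1} is an orthogonality graph in S^{2d−1}. Precisely: if G is a finite simple graph and f is an injective map from V(G) to EuclideanSpace ℝ (Fin d) with ‖f(v)‖ = 1 for all v and ⟨f(u), f(v)⟩ = 0 whenever u and v are adjacent, then for every positive integer m there exists an injective map F from V(G) × Fin m to EuclideanSpace ℝ (Fin (2d)) with ‖F(v, i)‖ = 1 for all (v, i) and ⟨F(u, i), F(v, j)⟩ = 0 whenever u and v are adjacent in G (for all i, j). -/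
open scoped RealInnerProductSpace

/-- For any `m ∈ ℕ` and any orthogonality graph `G` in `S^{d-1}`, the blow-up `G^m`
is an orthogonality graph in `S^{2d-1}`. -/
theorem blowup_orthogonality {V : Type} [Fintype V] (G : SimpleGraph V) (d : ℕ)
    (f : V → EuclideanSpace ℝ (Fin d)) (hf : Function.Injective f)
    (hnorm : ∀ v : V, ‖f v‖ = 1)
    (horth : ∀ u v : V, G.Adj u v → ⟪f u, f v⟫ = 0)
    (m : ℕ) (hm : 0 < m) :
    ∃ F : V × Fin m → EuclideanSpace ℝ (Fin (2 * d)),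
      Function.Injective F ∧
      (∀ x : V × Fin m, ‖F x‖ = 1) ∧
      (∀ (u v : V) (i j : Fin m), G.Adj u v → ⟪F (u, i), F (v, j)⟫ = 0) := by
  -- an isometry from the L2 product to Euclidean space of dimension 2*d
  have hrank : Module.finrank ℝ (WithLp 2 ((EuclideanSpace ℝ (Fin d)) × (EuclideanSpace ℝ (Fin d)))) = 2 * d := by
    rw [(WithLp.linearEquiv 2 ℝ ((EuclideanSpace ℝ (Fin d)) × (EuclideanSpace ℝ (Fin d)))).finrank_eq]
    simp [finrank_euclideanSpace_fin, two_mul]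
  let b := (stdOrthonormalBasis ℝ (WithLp 2 ((EuclideanSpace ℝ (Fin d)) × (EuclideanSpace ℝ (Fin d))))).reindex (finCongr hrank)
  let e : WithLp 2 ((EuclideanSpace ℝ (Fin d)) × (EuclideanSpace ℝ (Fin d))) ≃ₗᵢ[ℝ] EuclideanSpace ℝ (Fin (2 * d)) := b.repr
  -- scalars
  set t : Fin m → ℝ := fun i => ((i : ℕ) + 1) / (m + 1) with ht
  have ht0 : ∀ i, 0 < t i := fun i => by
    apply div_pos <;> positivity
  have ht1 : ∀ i, t i ≤ 1 := fun i => by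
    rw [ht]
    rw [div_le_one (by positivity)]
    have : ((i : ℕ) : ℝ) < m := by exact_mod_cast i.2
    linarith
  have htinj : Function.Injective t := by
    intro i j hij
    have h : ((i : ℕ) : ℝ) = ((j : ℕ) : ℝ) := by
      simp only [ht, div_left_inj' (by positivity : (m:ℝ) + 1 ≠ 0), add_left_inj] at hij
      exact_mod_cast hij
    exact Fin.ext (by exact_mod_cast h)
  set a : Fin m → ℝ := fun i => Real.sqrt (1 - t i ^ 2) with ha
  have hab : ∀ i, a i ^ 2 + t i ^ 2 = 1 := fun i => by
    rw [ha, Real.sq_sqrt (by nlinarith [ht0 i, ht1 i])]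
    ring
  set g : V × Fin m → WithLp 2 ((EuclideanSpace ℝ (Fin d)) × (EuclideanSpace ℝ (Fin d))) :=
    fun x => (WithLp.equiv 2 ((EuclideanSpace ℝ (Fin d)) × (EuclideanSpace ℝ (Fin d)))).symm (a x.2 • f x.1, t x.2 • f x.1) with hg
  refine ⟨fun x => e (g x), ?_, ?_, ?_⟩
  · intro x y hxy
    have hgxy : g x = g y := e.injective hxy
    have h2 : t x.2 • f x.1 = t y.2 • f y.1 := congrArg (fun p => p.ofLp.2) hgxy
    have hn : t x.2 = t y.2 := by
      have := congrArg (‖·‖) h2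
      simpa [norm_smul, hnorm, abs_of_pos (ht0 _)] using this
    have hi : x.2 = y.2 := htinj hn
    have hv : f x.1 = f y.1 := by
      rw [hn] at h2
      exact smul_right_injective _ (ne_of_gt (ht0 y.2)) h2
    exact Prod.ext (hf hv) hi
  · intro x
    rw [e.norm_map]
    have : ‖g x‖ ^ 2 = 1 := by
      rw [hg, ← real_inner_self_eq_norm_sq]
      simp only [WithLp.prod_inner_apply, WithLp.equiv_symm_apply, WithLp.ofLp_toLp]
      rw [real_inner_smul_left, real_inner_smul_left, real_inner_smul_right,
        real_inner_smul_right, real_inner_self_eq_norm_sq, hnorm x.1]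
      have := hab x.2
      nlinarith
    nlinarith [norm_nonneg (g x), this]
  · intro u v i j huv
    rw [e.inner_map_map]
    simp only [hg, WithLp.prod_inner_apply, WithLp.equiv_symm_apply, WithLp.ofLp_toLp]
    rw [real_inner_smul_left, real_inner_smul_left, real_inner_smul_right,
      real_inner_smul_right, horth u v huv]
    ring
end

section
/- Let G be a finite simple graph, let k ≥ 2 be an integer with χ(G) ≥ k, let m be a positive integer, and let H be a spanning subgraph of the blow-up G^m with the following property: for every edge uv of G and every pair of subsets W ⊆ {u} × {1,…,m} and U ⊆ {v} × {1,…,m} with |W| ≥ m/(k−1) and |U| ≥ m/(k−1), there is an edge of H joining some vertex of W to some vertex of U. Then χ(H) ≥ k, i.e., H admits no proper colouring with k−1 colours. -/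
/-!
Colour `H` with `k - 1` colours. By pigeonhole, every fibre `{u} × [m]` has a colour class of
size at least `m / (k - 1)`; give `u` that colour. If adjacent `u, v` of `G` received the same
colour, the two large classes would be joined by an edge of `H` with both ends of one colour.
So `G` would be `(k - 1)`-colourable, contradicting `χ(G) ≥ k`.
-/

/-- The blow-up `G^m` of a graph `G`. -/
def SimpleGraph.blowup {V : Type} (G : SimpleGraph V) (m : ℕ) : SimpleGraph (V × Fin m) :=
  G.comap Prod.fst

open Finset

variable {V ι β : Type*} [Fintype ι] [Fintype β] [Nonempty β]

theorem exists_card_div_card_le_card_colorClass_in_fiber [DecidableEq β]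
    (c : V × ι → β) (u : V) :
    ∃ i : β, (Fintype.card ι : ℝ) / Fintype.card β ≤ #{x ∈ {u} ×ˢ univ | c x = i} := by
  obtain ⟨i, -, hi⟩ := exists_le_card_fiber_of_nsmul_le_card_of_maps_to
    (s := {u} ×ˢ (univ : Finset ι)) (t := univ) (f := c)
    (b := (Fintype.card ι : ℝ) / Fintype.card β) (fun _ _ => mem_univ _) univ_nonempty
    (by
      rw [nsmul_eq_mul, card_univ, mul_div_cancel₀ _ (Nat.cast_ne_zero.mpr Fintype.card_ne_zero)]
      simp)
  exact ⟨i, hi⟩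

theorem SimpleGraph.Coloring.colorable_of_fibers_joined {G : SimpleGraph V}
    {H : SimpleGraph (V × ι)} (c : H.Coloring β)
    (hjoined : ∀ u v : V, G.Adj u v → ∀ W U : Finset (V × ι),
      (∀ w ∈ W, w.1 = u) → (∀ x ∈ U, x.1 = v) →
      (Fintype.card ι : ℝ) / Fintype.card β ≤ #W →
      (Fintype.card ι : ℝ) / Fintype.card β ≤ #U →
      ∃ w ∈ W, ∃ x ∈ U, H.Adj w x) :
    G.Colorable (Fintype.card β) := by
  classical
  choose f hf using exists_card_div_card_le_card_colorClass_in_fiber c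
  refine (Coloring.mk f fun {u v} huv hfuv => ?_).colorable
  obtain ⟨w, hw, x, hx, hwx⟩ := hjoined u v huv _ _ (by simp) (by simp) (hf u) (hf v)
  simp only [mem_filter, mem_product, mem_singleton] at hw hx
  exact c.valid hwx (by rw [hw.2, hx.2, hfuv])

theorem subsampled_blowup_chromatic_general {V : Type} (G : SimpleGraph V)
    (k : ℕ) (hk : 2 ≤ k) (hχ : (k : ℕ∞) ≤ G.chromaticNumber)
    (m : ℕ)
    (H : SimpleGraph (V × Fin m))
    (hedges : ∀ u v : V, G.Adj u v →
      ∀ W U : Finset (V × Fin m),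
        (∀ w ∈ W, w.1 = u) → (∀ x ∈ U, x.1 = v) →
        (m : ℝ) / ((k : ℝ) - 1) ≤ (W.card : ℝ) →
        (m : ℝ) / ((k : ℝ) - 1) ≤ (U.card : ℝ) →
        ∃ w ∈ W, ∃ x ∈ U, H.Adj w x) :
    ¬ H.Colorable (k - 1) := by
  rintro ⟨c⟩
  have : Nonempty (Fin (k - 1)) := ⟨⟨0, by omega⟩⟩
  have hcard : ((k - 1 : ℕ) : ℝ) = (k : ℝ) - 1 := by
    rw [Nat.cast_sub (by omega), Nat.cast_one]
  have hG := c.colorable_of_fibers_joined (by simpa only [Fintype.card_fin, hcard] using hedges)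
  rw [Fintype.card_fin] at hG
  have := hχ.trans hG.chromaticNumber_le
  norm_cast at this
  omega

/-- If `χ(G) ≥ k` and `H` is a spanning subgraph of the blow-up `G^m` such that for every
edge `uv` of `G`, any two subsets of the fibres over `u` and `v` of size at least
`m/(k-1)` are joined by an edge of `H`, then `χ(H) ≥ k`, i.e. `H` has no proper colouring
with `k-1` colours. -/
theorem subsampled_blowup_chromatic {V : Type} [Fintype V] (G : SimpleGraph V)
    (k : ℕ) (hk : 2 ≤ k) (hχ : (k : ℕ∞) ≤ G.chromaticNumber)
    (m : ℕ) (hm : 0 < m)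
    (H : SimpleGraph (V × Fin m)) (hH : H ≤ G.blowup m)
    (hedges : ∀ u v : V, G.Adj u v →
      ∀ W U : Finset (V × Fin m),
        (∀ w ∈ W, w.1 = u) → (∀ x ∈ U, x.1 = v) →
        (m : ℝ) / ((k : ℝ) - 1) ≤ (W.card : ℝ) →
        (m : ℝ) / ((k : ℝ) - 1) ≤ (U.card : ℝ) →
        ∃ w ∈ W, ∃ x ∈ U, H.Adj w x) :
    ¬ H.Colorable (k - 1) :=
  subsampled_blowup_chromatic_general G k hk hχ m H hedges
end

section
/- Let G be a finite simple graph with at least one edge and let k = χ(G) ≥ 2. For every integer g ≥ 3 there exist a positive integer m and a spanning subgraph G₀ of the blow-up G^m such that: (i) G₀ has girth greater than g, and (ii) for every edge uv of G and every pair of subsets W ⊆ {u} × {1,…,m} and U ⊆ {v} × {1,…,m} with |W| ≥ m/(k−1) and |U| ≥ m/(k−1), there is an edge of G₀ joining some vertex of W to some vertex of U. -/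
set_option linter.unusedSectionVars false
set_option maxHeartbeats 1600000

namespace SubBlow

open Finset

variable {V : Type} [Fintype V] [DecidableEq V] {m N g : ℕ}

abbrev VB (V : Type) (m : ℕ) := V × Fin m
abbrev Key (V : Type) (m : ℕ) := Sym2 (VB V m)
abbrev Om (V : Type) (m N : ℕ) := Key V m → Fin N

def Gr (G : SimpleGraph V) [NeZero N] (ω : Om V m N) : SimpleGraph (VB V m) where
  Adj w x := (G.blowup m).Adj w x ∧ ω s(w, x) = 0
  symm := ⟨fun w x h => ⟨h.1.symm, by rw [Sym2.eq_swap]; exact h.2⟩⟩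
  loopless := ⟨fun w h => (G.blowup m).loopless.irrefl w h.1⟩

lemma Gr_le (G : SimpleGraph V) [NeZero N] (ω : Om V m N) : Gr G ω ≤ G.blowup m :=
  fun _ _ h => h.1


open scoped Classical in
lemma count_cylinder [NeZero N] (s t : Finset (Key V m)) (hst : Disjoint s t) :
    (univ.filter fun ω : Om V m N => (∀ x ∈ s, ω x = 0) ∧ (∀ x ∈ t, ω x ≠ 0)).card
      = (N - 1) ^ t.card * N ^ (Fintype.card (Key V m) - s.card - t.card) := by
  have hfilt : (univ.filter fun ω : Om V m N => (∀ x ∈ s, ω x = 0) ∧ (∀ x ∈ t, ω x ≠ 0))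
      = Fintype.piFinset (fun x : Key V m =>
          if x ∈ s then {0} else if x ∈ t then ({0}ᶜ : Finset (Fin N)) else univ) := by
    ext ω
    simp only [mem_filter, mem_univ, true_and, Fintype.mem_piFinset]
    constructor
    · rintro ⟨h1, h2⟩ x
      by_cases hxs : x ∈ s
      · simp [hxs, h1 x hxs]
      · by_cases hxt : x ∈ t
        · simp [hxs, hxt, h2 x hxt]
        · simp [hxs, hxt]
    · intro h
      constructor
      · intro x hx
        have := h x
        simpa [hx] using this
      · intro x hx
        have hxs : x ∉ s := fun hxs => (disjoint_left.1 hst hxs hx)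
        have := h x
        simpa [hx, hxs] using this
  rw [hfilt, Fintype.card_piFinset]
  have hcard : ∀ x : Key V m,
      ((if x ∈ s then {0} else if x ∈ t then ({0}ᶜ : Finset (Fin N)) else univ)).card
        = if x ∈ s then 1 else if x ∈ t then N - 1 else N := by
    intro x
    split_ifs <;> simp [Finset.card_compl, Fintype.card_fin]
  simp only [hcard]
  rw [← prod_sdiff (subset_univ (s ∪ t)), prod_union hst]
  have h1 : ∏ x ∈ s, (if x ∈ s then 1 else if x ∈ t then N - 1 else N) = 1 := by
    apply prod_eq_one; intro x hx; simp [hx]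
  have h2 : ∏ x ∈ t, (if x ∈ s then 1 else if x ∈ t then N - 1 else N) = (N - 1) ^ t.card := by
    rw [prod_congr rfl (fun x hx => ?_), prod_const]
    have hxs : x ∉ s := fun h => disjoint_left.1 hst h hx
    simp [hxs, hx]
  have h3 : ∏ x ∈ (univ \ (s ∪ t)), (if x ∈ s then 1 else if x ∈ t then N - 1 else N)
      = N ^ (Fintype.card (Key V m) - s.card - t.card) := by
    rw [prod_congr rfl (fun x hx => ?_), prod_const]
    · congr 1
      rw [card_sdiff_of_subset (subset_univ _), card_union_of_disjoint hst, card_univ]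
      omega
    · simp only [mem_sdiff, mem_univ, mem_union, true_and] at hx
      push_neg at hx
      simp [hx.1, hx.2]
  rw [h1, h2, h3]; ring

open scoped Classical in
lemma count_zeros [NeZero N] (s : Finset (Key V m)) :
    (univ.filter fun ω : Om V m N => ∀ x ∈ s, ω x = 0).card
      = N ^ (Fintype.card (Key V m) - s.card) := by
  have := count_cylinder (N := N) (V := V) (m := m) s ∅ (disjoint_empty_right _)
  simpa using this


def Lp (p : Fin g × (Fin g → VB V m)) : ℕ := p.1.1 + 3

lemma Lp_pos (p : Fin g × (Fin g → VB V m)) : 0 < Lp p := by simp [Lp]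

def wrap (p : Fin g × (Fin g → VB V m)) (i : Fin g) : Fin g :=
  ⟨(i.1 + 1) % Lp p % g, Nat.mod_lt _ i.pos⟩

def StructOK (p : Fin g × (Fin g → VB V m)) : Prop :=
  Lp p ≤ g ∧ (∀ i : Fin g, Lp p ≤ i.1 → ∀ j : Fin g, j.1 = 0 → p.2 i = p.2 j) ∧
    (∀ i j : Fin g, i.1 < Lp p → j.1 < Lp p → p.2 i = p.2 j → i = j)

def IsWitness (G : SimpleGraph V) [NeZero N] (ω : Om V m N)
    (p : Fin g × (Fin g → VB V m)) : Prop :=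
  StructOK p ∧ ∀ i : Fin g, i.1 < Lp p → (Gr G ω).Adj (p.2 i) (p.2 (wrap p i))

def keyf (p : Fin g × (Fin g → VB V m)) (i : Fin g) : Key V m :=
  s(p.2 i, p.2 (wrap p i))

open scoped Classical in
noncomputable def Wit (g : ℕ) (G : SimpleGraph V) [NeZero N] (ω : Om V m N) :
    Finset (Fin g × (Fin g → VB V m)) :=
  univ.filter fun p => IsWitness G ω p

lemma mem_Wit {G : SimpleGraph V} [NeZero N] {ω : Om V m N}
    {p : Fin g × (Fin g → VB V m)} : p ∈ Wit g G ω ↔ IsWitness G ω p := by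
  classical
  simp [Wit]

lemma wrap_val {p : Fin g × (Fin g → VB V m)} (hL : Lp p ≤ g) (i : Fin g) :
    (wrap p i).1 = (i.1 + 1) % Lp p := by
  have h1 : (i.1 + 1) % Lp p < Lp p := Nat.mod_lt _ (Lp_pos p)
  simp [wrap, Nat.mod_eq_of_lt (lt_of_lt_of_le h1 hL)]

lemma succ_mod {L b : ℕ} (hb : b < L) : (b + 1) % L = if b + 1 = L then 0 else b + 1 := by
  split_ifs with h
  · simp [h]
  · exact Nat.mod_eq_of_lt (by omega)

lemma keyf_injOn {p : Fin g × (Fin g → VB V m)} (hp : StructOK p) :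
    ∀ i j : Fin g, i.1 < Lp p → j.1 < Lp p → keyf p i = keyf p j → i = j := by
  obtain ⟨hL, hpad, hinj⟩ := hp
  intro i j hi hj hk
  have hwi : (wrap p i).1 = (i.1 + 1) % Lp p := wrap_val hL i
  have hwj : (wrap p j).1 = (j.1 + 1) % Lp p := wrap_val hL j
  have hwi' : (wrap p i).1 < Lp p := by rw [hwi]; exact Nat.mod_lt _ (Lp_pos p)
  have hwj' : (wrap p j).1 < Lp p := by rw [hwj]; exact Nat.mod_lt _ (Lp_pos p)
  have hL3 : 3 ≤ Lp p := by simp [Lp]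
  rw [keyf, keyf, Sym2.eq_iff] at hk
  rcases hk with ⟨h1, _h2⟩ | ⟨h1, h2⟩
  · exact hinj i j hi hj h1
  · -- p.2 i = p.2 (wrap p j) and p.2 (wrap p i) = p.2 j
    have e1 : i = wrap p j := hinj _ _ hi hwj' h1
    have e2 : wrap p i = j := hinj _ _ hwi' hj h2
    -- so i.1 = (j.1+1) % L and (i.1+1) % L = j.1
    have v1 : i.1 = (j.1 + 1) % Lp p := by rw [e1]; exact hwj
    have v2 : (i.1 + 1) % Lp p = j.1 := by rw [← hwi, e2]
    rw [succ_mod hj] at v1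
    rw [succ_mod hi] at v2
    split_ifs at v1 with hc1 <;> split_ifs at v2 with hc2 <;> omega


lemma card_lt_filter (L : ℕ) (hL : L ≤ g) :
    ((univ : Finset (Fin g)).filter fun i => i.1 < L).card = L := by
  have himg : ((univ : Finset (Fin g)).filter fun i => i.1 < L).image Fin.val
      = Finset.range L := by
    ext x
    simp only [mem_image, mem_filter, mem_univ, true_and, mem_range]
    constructor
    · rintro ⟨i, hi, rfl⟩; exact hi
    · intro hx; exact ⟨⟨x, lt_of_lt_of_le hx hL⟩, hx, rfl⟩
  have := congrArg Finset.card himg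
  rwa [card_image_of_injOn (Set.injOn_of_injective Fin.val_injective), card_range] at this

open scoped Classical in
lemma count_wit_le (G : SimpleGraph V) [NeZero N] (p : Fin g × (Fin g → VB V m)) :
    (univ.filter fun ω : Om V m N => IsWitness G ω p).card
      ≤ if StructOK p then N ^ (Fintype.card (Key V m) - Lp p) else 0 := by
  split_ifs with hs
  · -- subset of the zero cylinder on the key set
    set ks : Finset (Key V m) := (univ.filter fun i : Fin g => i.1 < Lp p).image (keyf p) with hks
    have hsub : (univ.filter fun ω : Om V m N => IsWitness G ω p)
        ⊆ (univ.filter fun ω : Om V m N => ∀ x ∈ ks, ω x = 0) := by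
      intro ω hω
      simp only [mem_filter, mem_univ, true_and] at hω ⊢
      intro x hx
      simp only [hks, mem_image, mem_filter, mem_univ, true_and] at hx
      obtain ⟨i, hi, rfl⟩ := hx
      exact (hω.2 i hi).2
    have hcard : ks.card = Lp p := by
      rw [hks, card_image_of_injOn, card_lt_filter _ hs.1]
      intro i hi j hj hij
      simp only [coe_filter, Set.mem_setOf_eq, mem_univ, true_and] at hi hj
      exact keyf_injOn hs i j hi hj hij
    calc (univ.filter fun ω : Om V m N => IsWitness G ω p).card
        ≤ (univ.filter fun ω : Om V m N => ∀ x ∈ ks, ω x = 0).card := card_le_card hsub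
      _ = N ^ (Fintype.card (Key V m) - Lp p) := by rw [count_zeros, hcard]
  · have : (univ.filter fun ω : Om V m N => IsWitness G ω p) = ∅ := by
      apply filter_eq_empty_iff.2
      intro ω _ h
      exact hs h.1
    simp [this]

open scoped Classical in
lemma sum_wit_le (G : SimpleGraph V) [NeZero N] (M : ℕ) (hM : 1 ≤ M)
    (hNM : Fintype.card (VB V m) = N * M) (hgD : g ≤ Fintype.card (Key V m)) :
    (∑ ω : Om V m N, (Wit g G ω).card) ≤ g * M ^ g * N ^ (Fintype.card (Key V m)) := by
  classical
  set D := Fintype.card (Key V m) with hD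
  have hswap : (∑ ω : Om V m N, (Wit g G ω).card)
      = ∑ p : Fin g × (Fin g → VB V m),
          (univ.filter fun ω : Om V m N => IsWitness G ω p).card := by
    simp only [Wit, card_filter]
    rw [Finset.sum_comm]
  rw [hswap, Fintype.sum_prod_type]
  have hbound : ∀ c : Fin g, (∑ f : Fin g → VB V m,
      (univ.filter fun ω : Om V m N => IsWitness G ω (⟨c, f⟩ : Fin g × (Fin g → VB V m))).card)
        ≤ M ^ g * N ^ D := by
    intro c
    have hg0 : 0 < g := c.pos
    by_cases hcg : c.1 + 3 ≤ g
    · -- structural count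
      have hstruct : ((univ : Finset (Fin g → VB V m)).filter
          fun f => StructOK (⟨c, f⟩ : Fin g × (Fin g → VB V m))).card
            ≤ (N * M) ^ (c.1 + 3) := by
        have hle : ((univ : Finset (Fin g → VB V m)).filter
            fun f => StructOK (⟨c, f⟩ : Fin g × (Fin g → VB V m))).card
              ≤ (univ : Finset (Fin (c.1 + 3) → VB V m)).card := by
          apply Finset.card_le_card_of_injOn
            (fun f => fun i : Fin (c.1 + 3) => f ⟨i.1 % g, Nat.mod_lt _ hg0⟩)
          · intro f hf; exact mem_univ _
          · intro f1 hf1 f2 hf2 heq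
            simp only [coe_filter, Set.mem_setOf_eq, mem_univ, true_and] at hf1 hf2
            have key : ∀ j : Fin g, j.1 < c.1 + 3 → f1 j = f2 j := by
              intro j hj
              have h := congrFun heq ⟨j.1, hj⟩
              dsimp only at h
              have hidx : (⟨j.1 % g, Nat.mod_lt _ hg0⟩ : Fin g) = j :=
                Fin.ext (Nat.mod_eq_of_lt j.isLt)
              rwa [hidx] at h
            funext j
            by_cases hj : j.1 < c.1 + 3
            · exact key j hj
            · have h0 : (0:ℕ) < c.1 + 3 := by omega
              have e1 := hf1.2.1 j (by simp only [Lp]; omega) ⟨0, hg0⟩ rfl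
              have e2 := hf2.2.1 j (by simp only [Lp]; omega) ⟨0, hg0⟩ rfl
              simp only at e1 e2
              rw [e1, e2]
              exact key ⟨0, hg0⟩ h0
        calc _ ≤ _ := hle
          _ = (Fintype.card (VB V m)) ^ (c.1+3) := by simp [Fintype.card_fun]
          _ = (N * M) ^ (c.1 + 3) := by rw [hNM]
      have h1 : (∑ f : Fin g → VB V m,
          (univ.filter fun ω : Om V m N => IsWitness G ω (⟨c, f⟩ : Fin g × (Fin g → VB V m))).card)
            ≤ ∑ f : Fin g → VB V m, (if StructOK (⟨c, f⟩ : Fin g × (Fin g → VB V m))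
                then N ^ (D - (c.1 + 3)) else 0) := by
        apply Finset.sum_le_sum
        intro f _
        have := count_wit_le (N := N) G (⟨c, f⟩ : Fin g × (Fin g → VB V m))
        simpa [Lp] using this
      have h2 : (∑ f : Fin g → VB V m, (if StructOK (⟨c, f⟩ : Fin g × (Fin g → VB V m))
          then N ^ (D - (c.1 + 3)) else 0))
            = ((univ : Finset (Fin g → VB V m)).filter
                fun f => StructOK (⟨c, f⟩ : Fin g × (Fin g → VB V m))).card * N ^ (D - (c.1+3)) := by
        rw [← Finset.sum_filter, Finset.sum_const, smul_eq_mul]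
      have h3 : (N * M) ^ (c.1 + 3) * N ^ (D - (c.1+3)) = M ^ (c.1+3) * N ^ D := by
        have hc3D : c.1 + 3 ≤ D := le_trans hcg hgD
        rw [mul_pow]
        have : N ^ (c.1+3) * N ^ (D - (c.1+3)) = N ^ D := by
          rw [← pow_add]
          congr 1
          omega
        calc N ^ (c.1+3) * M ^ (c.1+3) * N ^ (D - (c.1+3))
            = M ^ (c.1+3) * (N ^ (c.1+3) * N ^ (D - (c.1+3))) := by ring
          _ = M ^ (c.1+3) * N ^ D := by rw [this]
      calc (∑ f : Fin g → VB V m,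
          (univ.filter fun ω : Om V m N => IsWitness G ω (⟨c, f⟩ : Fin g × (Fin g → VB V m))).card)
          ≤ _ := h1
        _ = _ := h2
        _ ≤ (N * M) ^ (c.1 + 3) * N ^ (D - (c.1+3)) :=
            Nat.mul_le_mul_right _ hstruct
        _ = M ^ (c.1+3) * N ^ D := h3
        _ ≤ M ^ g * N ^ D := Nat.mul_le_mul_right _ (Nat.pow_le_pow_right hM hcg)
    · -- no witnesses at all
      have : ∀ f : Fin g → VB V m,
          (univ.filter fun ω : Om V m N => IsWitness G ω (⟨c, f⟩ : Fin g × (Fin g → VB V m))).card = 0 := by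
        intro f
        rw [Finset.card_eq_zero, filter_eq_empty_iff]
        intro ω _ h
        exact hcg h.1.1
      simp only [this, Finset.sum_const_zero]
      exact Nat.zero_le _
  calc (∑ c : Fin g, ∑ f : Fin g → VB V m,
      (univ.filter fun ω : Om V m N => IsWitness G ω (⟨c, f⟩ : Fin g × (Fin g → VB V m))).card)
      ≤ ∑ _c : Fin g, M ^ g * N ^ D := Finset.sum_le_sum fun c _ => hbound c
    _ = g * M ^ g * N ^ D := by simp [mul_assoc]
    _ = g * M ^ g * N ^ (Fintype.card (Key V m)) := by rw [hD]

def fiber (V : Type) [Fintype V] [DecidableEq V] (m : ℕ) (u : V) : Finset (VB V m) :=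
  univ.filter fun w => w.1 = u

open scoped Classical in
noncomputable def Zset [NeZero N] (ω : Om V m N) (Wq Uq : Finset (VB V m)) :
    Finset (VB V m × VB V m) :=
  (Wq ×ˢ Uq).filter fun wx => ω s(wx.1, wx.2) = 0

def PairOK (t : ℕ) (q : V × V × Finset (VB V m) × Finset (VB V m)) : Prop :=
  q.1 ≠ q.2.1 ∧ q.2.2.1 ⊆ fiber V m q.1 ∧ q.2.2.2 ⊆ fiber V m q.2.1 ∧
    q.2.2.1.card = t ∧ q.2.2.2.card = t

lemma key_injOn {u v : V} (hne : u ≠ v) {Wq Uq : Finset (VB V m)}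
    (hW : Wq ⊆ fiber V m u) (hU : Uq ⊆ fiber V m v) :
    Set.InjOn (fun wx : VB V m × VB V m => s(wx.1, wx.2)) (↑(Wq ×ˢ Uq) : Set (VB V m × VB V m)) := by
  rintro ⟨w, x⟩ h1 ⟨w', x'⟩ h2 heq
  simp only [coe_product, Set.mem_prod] at h1 h2
  have hw : w.1 = u := by have := hW h1.1; simpa [fiber] using this
  have hx : x.1 = v := by have := hU h1.2; simpa [fiber] using this
  have hw' : w'.1 = u := by have := hW h2.1; simpa [fiber] using this
  have hx' : x'.1 = v := by have := hU h2.2; simpa [fiber] using this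
  simp only [Sym2.eq_iff] at heq
  rcases heq with ⟨rfl, rfl⟩ | ⟨h3, h4⟩
  · rfl
  · exfalso; apply hne; rw [← hw, h3, hx']

open scoped Classical in
lemma count_badpair [NeZero N] {t C : ℕ} {q : V × V × Finset (VB V m) × Finset (VB V m)}
    (hq : PairOK t q) (hCt : C ≤ t ^ 2) (hNt : N ≤ t ^ 2 + 1)
    (htD : t ^ 2 ≤ Fintype.card (Key V m)) :
    (univ.filter fun ω : Om V m N => (Zset ω q.2.2.1 q.2.2.2).card ≤ C).card
      ≤ (C + 1) * t ^ (2 * C) * (N - 1) ^ (t ^ 2 - C) *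
          N ^ (Fintype.card (Key V m) - t ^ 2) := by
  classical
  obtain ⟨hne, hWf, hUf, hWc, hUc⟩ := hq
  set D := Fintype.card (Key V m) with hD
  set Wq := q.2.2.1
  set Uq := q.2.2.2
  set K : Finset (Key V m) := (Wq ×ˢ Uq).image (fun wx => s(wx.1, wx.2)) with hK
  have hinj := key_injOn hne hWf hUf
  have hKcard : K.card = t ^ 2 := by
    rw [hK, card_image_of_injOn hinj, card_product, hWc, hUc, sq]
  -- the trace map
  set φ : Om V m N → Finset (Key V m) := fun ω => K.filter fun x => ω x = 0 with hφ
  have htrace : ∀ ω : Om V m N, φ ω = (Zset ω Wq Uq).image (fun wx => s(wx.1, wx.2)) := by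
    intro ω
    ext x
    simp only [hφ, mem_filter, hK, mem_image, Zset, mem_filter]
    constructor
    · rintro ⟨⟨wx, hwx, rfl⟩, h0⟩
      exact ⟨wx, ⟨hwx, h0⟩, rfl⟩
    · rintro ⟨wx, ⟨hwx, h0⟩, rfl⟩
      exact ⟨⟨wx, hwx, rfl⟩, h0⟩
  have hφcard : ∀ ω : Om V m N, (φ ω).card = (Zset ω Wq Uq).card := by
    intro ω
    rw [htrace ω]
    apply card_image_of_injOn
    apply hinj.mono
    intro wx h
    simp only [Finset.mem_coe] at h
    exact Finset.mem_coe.2 (mem_of_mem_filter _ h)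
  set S : Finset (Finset (Key V m)) := K.powerset.filter fun T => T.card ≤ C with hS
  have hmaps : ∀ ω ∈ (univ.filter fun ω : Om V m N => (Zset ω Wq Uq).card ≤ C), φ ω ∈ S := by
    intro ω hω
    simp only [mem_filter, mem_univ, true_and] at hω
    simp only [hS, mem_filter, mem_powerset]
    exact ⟨filter_subset _ _, by rw [hφcard ω]; exact hω⟩
  rw [Finset.card_eq_sum_card_fiberwise hmaps]
  -- bound each fiber
  have hfiber : ∀ T ∈ S,
      ((univ.filter fun ω : Om V m N => (Zset ω Wq Uq).card ≤ C).filter fun ω => φ ω = T).card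
        ≤ (N - 1) ^ (t ^ 2 - T.card) * N ^ (D - t ^ 2) := by
    intro T hT
    simp only [hS, mem_filter, mem_powerset] at hT
    obtain ⟨hTK, hTC⟩ := hT
    have hsub : ((univ.filter fun ω : Om V m N => (Zset ω Wq Uq).card ≤ C).filter fun ω => φ ω = T)
        ⊆ univ.filter fun ω : Om V m N => (∀ x ∈ T, ω x = 0) ∧ (∀ x ∈ K \ T, ω x ≠ 0) := by
      intro ω hω
      simp only [mem_filter, mem_univ, true_and] at hω ⊢
      obtain ⟨_, hφT⟩ := hω
      constructor
      · intro x hx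
        have : x ∈ φ ω := by rw [hφT]; exact hx
        simp only [hφ, mem_filter] at this
        exact this.2
      · intro x hx h0
        simp only [mem_sdiff] at hx
        apply hx.2
        rw [← hφT]
        simp only [hφ, mem_filter]
        exact ⟨hx.1, h0⟩
    calc _ ≤ _ := card_le_card hsub
      _ = (N - 1) ^ (K \ T).card * N ^ (D - T.card - (K \ T).card) :=
          count_cylinder T (K \ T) (disjoint_sdiff)
      _ = (N - 1) ^ (t ^ 2 - T.card) * N ^ (D - t ^ 2) := by
          have h1 : (K \ T).card = t ^ 2 - T.card := by
            rw [card_sdiff_of_subset hTK, hKcard]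
          rw [h1]
          congr 1
          congr 1
          have hTle : T.card ≤ t ^ 2 := by rw [← hKcard]; exact card_le_card hTK
          omega
  calc (∑ T ∈ S, ((univ.filter fun ω : Om V m N => (Zset ω Wq Uq).card ≤ C).filter
        fun ω => φ ω = T).card)
      ≤ ∑ T ∈ S, (N - 1) ^ (t ^ 2 - T.card) * N ^ (D - t ^ 2) := Finset.sum_le_sum hfiber
    _ ≤ (C + 1) * t ^ (2 * C) * (N - 1) ^ (t ^ 2 - C) * N ^ (D - t ^ 2) := ?_
  -- group by cardinality
  have hmaps2 : ∀ T ∈ S, T.card ∈ Finset.range (C + 1) := by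
    intro T hT
    simp only [hS, mem_filter] at hT
    simp only [mem_range]
    omega
  rw [← Finset.sum_fiberwise_of_maps_to hmaps2]
  have hper : ∀ j ∈ Finset.range (C + 1),
      (∑ T ∈ S.filter fun T => T.card = j, (N - 1) ^ (t ^ 2 - T.card) * N ^ (D - t ^ 2))
        ≤ t ^ (2 * C) * (N - 1) ^ (t ^ 2 - C) * N ^ (D - t ^ 2) := by
    intro j hj
    simp only [mem_range] at hj
    have hj' : j ≤ C := by omega
    have hsum : (∑ T ∈ S.filter fun T => T.card = j, (N - 1) ^ (t ^ 2 - T.card) * N ^ (D - t ^ 2))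
        = (S.filter fun T => T.card = j).card * ((N - 1) ^ (t ^ 2 - j) * N ^ (D - t ^ 2)) := by
      rw [Finset.sum_congr rfl (fun T hT => ?_), Finset.sum_const, smul_eq_mul]
      simp only [mem_filter] at hT
      rw [hT.2]
    rw [hsum]
    have hcard : (S.filter fun T => T.card = j).card ≤ (t ^ 2).choose j := by
      have : (S.filter fun T => T.card = j) ⊆ K.powersetCard j := by
        intro T hT
        simp only [hS, mem_filter, mem_powerset] at hT
        rw [mem_powersetCard]
        exact ⟨hT.1.1, hT.2⟩
      calc _ ≤ _ := card_le_card this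
        _ = _ := by rw [card_powersetCard, hKcard]
    have hkey : (t ^ 2).choose j * (N - 1) ^ (t ^ 2 - j) ≤ t ^ (2 * C) * (N - 1) ^ (t ^ 2 - C) := by
      have h1 : (t ^ 2).choose j ≤ (t ^ 2) ^ j := Nat.choose_le_pow _ _
      have h2 : (N - 1) ^ (t ^ 2 - j) = (N - 1) ^ (t ^ 2 - C) * (N - 1) ^ (C - j) := by
        rw [← pow_add]; congr 1; omega
      have h3 : (N - 1) ^ (C - j) ≤ (t ^ 2) ^ (C - j) :=
        Nat.pow_le_pow_left (by omega) _
      calc (t ^ 2).choose j * (N - 1) ^ (t ^ 2 - j)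
          = (t ^ 2).choose j * ((N - 1) ^ (t ^ 2 - C) * (N - 1) ^ (C - j)) := by rw [h2]
        _ ≤ (t ^ 2) ^ j * ((N - 1) ^ (t ^ 2 - C) * (t ^ 2) ^ (C - j)) := by
            exact Nat.mul_le_mul h1 (Nat.mul_le_mul_left _ h3)
        _ = (t ^ 2) ^ j * (t ^ 2) ^ (C - j) * (N - 1) ^ (t ^ 2 - C) := by ring
        _ = (t ^ 2) ^ C * (N - 1) ^ (t ^ 2 - C) := by
            rw [← pow_add]; congr 2; omega
        _ = t ^ (2 * C) * (N - 1) ^ (t ^ 2 - C) := by rw [← pow_mul]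
    calc (S.filter fun T => T.card = j).card * ((N - 1) ^ (t ^ 2 - j) * N ^ (D - t ^ 2))
        ≤ (t ^ 2).choose j * ((N - 1) ^ (t ^ 2 - j) * N ^ (D - t ^ 2)) :=
          Nat.mul_le_mul_right _ hcard
      _ = ((t ^ 2).choose j * (N - 1) ^ (t ^ 2 - j)) * N ^ (D - t ^ 2) := by ring
      _ ≤ (t ^ (2 * C) * (N - 1) ^ (t ^ 2 - C)) * N ^ (D - t ^ 2) :=
          Nat.mul_le_mul_right _ hkey
      _ = t ^ (2 * C) * (N - 1) ^ (t ^ 2 - C) * N ^ (D - t ^ 2) := by ring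
  calc (∑ j ∈ Finset.range (C + 1), ∑ T ∈ S.filter fun T => T.card = j,
        (N - 1) ^ (t ^ 2 - T.card) * N ^ (D - t ^ 2))
      ≤ ∑ _j ∈ Finset.range (C + 1), t ^ (2 * C) * (N - 1) ^ (t ^ 2 - C) * N ^ (D - t ^ 2) :=
        Finset.sum_le_sum hper
    _ = (C + 1) * t ^ (2 * C) * (N - 1) ^ (t ^ 2 - C) * N ^ (D - t ^ 2) := by
        rw [Finset.sum_const, Finset.card_range, smul_eq_mul]; ring

lemma add_pow_ge (a n : ℕ) (hn : 1 ≤ n) : a ^ n + n * a ^ (n - 1) ≤ (a + 1) ^ n := by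
  induction n with
  | zero => omega
  | succ n ih =>
    rcases Nat.eq_zero_or_pos n with rfl | hn'
    · simp
    · have ih' := ih hn'
      have h2 : (a ^ n + n * a ^ (n - 1)) * (a + 1) ≤ (a + 1) ^ n * (a + 1) :=
        Nat.mul_le_mul_right _ ih'
      have hpow : a ^ (n - 1) * a = a ^ n := by
        rw [← pow_succ]
        congr 1
        omega
      have hexp : (a ^ n + n * a ^ (n - 1)) * (a + 1)
          = a ^ (n+1) + a ^ n + n * (a ^ (n-1) * a) + n * a ^ (n - 1) := by ring
      rw [hexp, hpow] at h2
      have h3 : a ^ (n + 1) + (n + 1) * a ^ (n + 1 - 1)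
          ≤ a ^ (n+1) + a ^ n + n * a ^ n + n * a ^ (n - 1) := by
        simp only [Nat.add_sub_cancel]
        nlinarith [Nat.zero_le (a ^ (n-1))]
      calc a ^ (n + 1) + (n + 1) * a ^ (n + 1 - 1) ≤ _ := h3
        _ ≤ (a + 1) ^ n * (a + 1) := h2
        _ = (a + 1) ^ (n + 1) := by ring

lemma two_pow_base (N : ℕ) (hN : 1 ≤ N) : 2 * (N - 1) ^ N ≤ N ^ N := by
  rcases Nat.lt_or_ge N 2 with h | h
  · have : N = 1 := by omega
    subst this; simp
  have h1 : N = (N - 1) + 1 := by omega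
  have h2 := add_pow_ge (N - 1) N (by omega)
  rw [← h1] at h2
  have h4 : (N - 1) * (N - 1) ^ (N - 1) = (N - 1) ^ N := by
    rw [← pow_succ']
    congr 1
    omega
  have h3 : (N - 1) ^ N + (N - 1) * (N - 1) ^ (N - 1) ≤ (N - 1) ^ N + N * (N - 1) ^ (N - 1) :=
    Nat.add_le_add_left (Nat.mul_le_mul_right _ (by omega)) _
  omega

lemma ratio_pow_le (N E : ℕ) (hN : 2 ≤ N) :
    ((N - 1 : ℕ) : ℝ) ^ E ≤ (1 / 2 : ℝ) ^ (E / N) * (N : ℝ) ^ E := by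
  have hN0 : (0 : ℝ) < (N : ℝ) := by positivity
  have hbase : (0 : ℝ) ≤ ((N - 1 : ℕ) : ℝ) / N := by positivity
  have hbase1 : ((N - 1 : ℕ) : ℝ) / N ≤ 1 := by
    rw [div_le_one hN0]
    exact_mod_cast Nat.sub_le N 1
  have hkey : (((N - 1 : ℕ) : ℝ) / N) ^ N ≤ 1 / 2 := by
    have h2 := two_pow_base N (by omega)
    have h2' : (2 : ℝ) * ((N - 1 : ℕ) : ℝ) ^ N ≤ (N : ℝ) ^ N := by exact_mod_cast h2
    rw [div_pow, div_le_div_iff₀ (by positivity) (by norm_num)]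
    linarith
  have hmain : (((N - 1 : ℕ) : ℝ) / N) ^ E ≤ (1 / 2 : ℝ) ^ (E / N) := by
    have h1 : (((N - 1 : ℕ) : ℝ) / N) ^ E ≤ ((((N - 1 : ℕ) : ℝ) / N) ^ N) ^ (E / N) := by
      rw [← pow_mul]
      apply pow_le_pow_of_le_one hbase hbase1
      calc N * (E / N) = E / N * N := by ring
        _ ≤ E := Nat.div_mul_le_self E N
    calc (((N - 1 : ℕ) : ℝ) / N) ^ E ≤ ((((N - 1 : ℕ) : ℝ) / N) ^ N) ^ (E / N) := h1
      _ ≤ (1 / 2 : ℝ) ^ (E / N) := pow_le_pow_left₀ (by positivity) hkey _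
  calc ((N - 1 : ℕ) : ℝ) ^ E = (((N - 1 : ℕ) : ℝ) / N) ^ E * (N : ℝ) ^ E := by
        rw [div_pow]
        field_simp
    _ ≤ (1 / 2 : ℝ) ^ (E / N) * (N : ℝ) ^ E :=
        mul_le_mul_of_nonneg_right hmain (by positivity)

open SimpleGraph in
lemma getVert_eq_support_getElem {V : Type} {G : SimpleGraph V} {u v : V}
    (p : G.Walk u v) (i : ℕ) (h : i < p.support.length) :
    p.getVert i = p.support[i] := by
  induction p generalizing i with
  | nil => 
    simp only [SimpleGraph.Walk.support_nil, List.length_singleton] at h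
    interval_cases i
    simp [SimpleGraph.Walk.getVert_zero]
  | cons hadj q ih =>
    cases i with
    | zero => simp [SimpleGraph.Walk.getVert_zero]
    | succ n =>
      simp only [SimpleGraph.Walk.support_cons, List.length_cons] at h
      simp only [SimpleGraph.Walk.getVert_cons_succ, SimpleGraph.Walk.support_cons]
      rw [ih n (by omega)]
      simp

lemma cycle_getVert_inj {V : Type} {G : SimpleGraph V} {a : V} {c : G.Walk a a}
    (hc : c.IsCycle) {i j : ℕ} (hi : i < c.length) (hj : j < c.length)
    (h : c.getVert i = c.getVert j) : i = j := by
  have hlen : c.support.length = c.length + 1 := SimpleGraph.Walk.length_support c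
  have htlen : c.support.tail.length = c.length := by
    rw [List.length_tail, hlen]; omega
  have hnodup : c.support.tail.Nodup := hc.support_nodup
  have hsup : ∀ (x : ℕ) (hx : x < c.length), 1 ≤ x → c.getVert x = c.support.tail[x-1]'(by omega) := by
    intro x hx h1
    rw [getVert_eq_support_getElem c x (by omega), List.getElem_tail]
    congr 1
    omega
  have h3 := hc.three_le_length
  have hlast : c.support.tail[c.length - 1]'(by omega) = a := by
    have hgv := getVert_eq_support_getElem c c.length (by omega)
    rw [SimpleGraph.Walk.getVert_length] at hgv
    have h2 : c.length - 1 + 1 = c.length := by omega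
    rw [List.getElem_tail]
    simp only [h2]
    exact hgv.symm
  rcases Nat.eq_zero_or_pos i with rfl | hi1 <;> rcases Nat.eq_zero_or_pos j with rfl | hj1
  · rfl
  · -- i = 0 : a = getVert j
    exfalso
    rw [SimpleGraph.Walk.getVert_zero, hsup j hj hj1] at h
    have h4 : c.support.tail[c.length - 1]'(by omega) = c.support.tail[j-1]'(by omega) :=
      hlast.trans h
    have := (hnodup.getElem_inj_iff).1 h4
    omega
  · exfalso
    rw [hsup i hi hi1, SimpleGraph.Walk.getVert_zero] at h
    have h4 : c.support.tail[c.length - 1]'(by omega) = c.support.tail[i-1]'(by omega) :=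
      hlast.trans h.symm
    have := (hnodup.getElem_inj_iff).1 h4
    omega
  · rw [hsup i hi hi1, hsup j hj hj1] at h
    have := (hnodup.getElem_inj_iff).1 h
    omega


/-! ### The pruned graph -/

def Del (G : SimpleGraph V) [NeZero N] (ω : Om V m N) (g : ℕ) : Set (Key V m) :=
  {e | ∃ (a b : VB V m) (h : (Gr G ω).Adj a b) (w : (Gr G ω).Walk b a),
    (w.cons h).IsCycle ∧ (w.cons h).length ≤ g ∧ e = s(a, b)}

noncomputable def Gfin (G : SimpleGraph V) [NeZero N] (ω : Om V m N) (g : ℕ) :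
    SimpleGraph (VB V m) :=
  (Gr G ω).deleteEdges (Del G ω g)

lemma Gfin_le (G : SimpleGraph V) [NeZero N] (ω : Om V m N) (g : ℕ) :
    Gfin G ω g ≤ G.blowup m :=
  le_trans (SimpleGraph.deleteEdges_le _) (Gr_le G ω)

lemma Gfin_cycle_long (G : SimpleGraph V) [NeZero N] (ω : Om V m N) (g : ℕ)
    {a : VB V m} (c : (Gfin G ω g).Walk a a) (hc : c.IsCycle) : g < c.length := by
  by_contra hle
  push_neg at hle
  have le1 : Gfin G ω g ≤ Gr G ω := SimpleGraph.deleteEdges_le _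
  cases c with
  | nil => exact hc.not_nil SimpleGraph.Walk.nil_nil
  | @cons _ b _ h w =>
    rw [SimpleGraph.Walk.length_cons] at hle
    have hdel : (Gfin G ω g).Adj a b := h
    rw [Gfin, SimpleGraph.deleteEdges_adj] at hdel
    apply hdel.2
    refine ⟨a, b, hdel.1, w.mapLe le1, ?_, ?_, rfl⟩
    · have := hc.mapLe le1
      simpa [SimpleGraph.Walk.mapLe] using this
    · simp only [SimpleGraph.Walk.length_cons, SimpleGraph.Walk.mapLe,
        SimpleGraph.Walk.length_map]
      omega

lemma Gfin_girth (G : SimpleGraph V) [NeZero N] (ω : Om V m N) (g : ℕ) :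
    (g : ℕ∞) < (Gfin G ω g).egirth := by
  have h1 : ((g : ℕ) + 1 : ℕ∞) ≤ (Gfin G ω g).egirth := by
    rw [SimpleGraph.le_egirth]
    intro a w hw
    have := Gfin_cycle_long G ω g w hw
    exact_mod_cast Nat.succ_le_of_lt this
  calc (g : ℕ∞) < ((g + 1 : ℕ) : ℕ∞) := by exact_mod_cast Nat.lt_succ_self g
    _ = ((g : ℕ) : ℕ∞) + 1 := by push_cast; rfl
    _ ≤ _ := h1

noncomputable def DelF (G : SimpleGraph V) [NeZero N] (ω : Om V m N) (g : ℕ) :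
    Finset (Key V m) :=
  (Set.toFinite (Del G ω g)).toFinset

lemma del_witness (G : SimpleGraph V) [NeZero N] (ω : Om V m N) (hg : 3 ≤ g)
    {e : Key V m} (he : e ∈ Del G ω g) :
    ∃ p ∈ Wit g G ω, ∃ (h0 : (0:ℕ) < g) (h1 : (1:ℕ) < g),
      e = s(p.2 ⟨0, h0⟩, p.2 ⟨1, h1⟩) := by
  obtain ⟨a, b, h, w, hcyc, hlen, rfl⟩ := he
  set c : (Gr G ω).Walk a a := w.cons h with hc
  have hL3 : 3 ≤ c.length := hcyc.three_le_length
  have hLg : c.length ≤ g := hlen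
  have hg0 : (0:ℕ) < g := by omega
  have hg1 : (1:ℕ) < g := by omega
  set L : ℕ := c.length with hLdef
  refine ⟨⟨⟨L - 3, by omega⟩, fun i => if i.1 < L then c.getVert i.1 else a⟩, ?_, hg0, hg1, ?_⟩
  · -- it is a witness
    have hLp : Lp (⟨⟨L - 3, by omega⟩, fun i : Fin g => if i.1 < L then c.getVert i.1 else a⟩ :
        Fin g × (Fin g → VB V m)) = L := by
      simp only [Lp]
      omega
    have hstruct : StructOK (⟨⟨L - 3, by omega⟩, fun i : Fin g => if i.1 < L then c.getVert i.1 else a⟩ :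
        Fin g × (Fin g → VB V m)) := by
      refine ⟨by rw [hLp]; omega, ?_, ?_⟩
      · intro i hi j hj
        rw [hLp] at hi
        simp only
        rw [if_neg (by omega), if_pos (by omega : j.1 < L)]
        have : j.1 = 0 := hj
        rw [this, SimpleGraph.Walk.getVert_zero]
      · intro i j hi hj hij
        rw [hLp] at hi hj
        simp only [if_pos hi, if_pos hj] at hij
        exact Fin.ext (cycle_getVert_inj hcyc hi hj hij)
    rw [mem_Wit]
    refine ⟨hstruct, ?_⟩
    intro i hi
    rw [hLp] at hi
    have hwv : (wrap (⟨⟨L - 3, by omega⟩, fun i : Fin g => if i.1 < L then c.getVert i.1 else a⟩ :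
        Fin g × (Fin g → VB V m)) i).1 = (i.1 + 1) % L := by
      rw [wrap_val (by rw [hLp]; omega), hLp]
    have hmod : (i.1 + 1) % L < L := Nat.mod_lt _ (by omega)
    simp only [if_pos hi, hwv, if_pos hmod]
    have hadj := c.adj_getVert_succ (i := i.1) (by omega)
    rcases Nat.lt_or_ge (i.1 + 1) L with hlt | hge
    · rwa [Nat.mod_eq_of_lt hlt]
    · have hiL : i.1 + 1 = L := by omega
      have h0 : (i.1 + 1) % L = 0 := by rw [hiL, Nat.mod_self]
      rw [h0, SimpleGraph.Walk.getVert_zero]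
      have hLeq : c.getVert L = a := by rw [hLdef]; exact c.getVert_length
      have hadj2 : (Gr G ω).Adj (c.getVert i.1) (c.getVert L) := by
        rw [← hiL]; exact hadj
      simpa only [hLeq] using hadj2
  · -- the edge is recovered
    have hb : c.getVert 1 = b := by
      rw [hc]; exact (SimpleGraph.Walk.getVert_cons_succ (n := 0) w h).trans w.getVert_zero
    simp only
    rw [if_pos (by omega : (0:ℕ) < L), if_pos (by omega : (1:ℕ) < L),
      SimpleGraph.Walk.getVert_zero, hb]

lemma DelF_card_le (G : SimpleGraph V) [NeZero N] [Nonempty V] [NeZero m]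
    (ω : Om V m N) (hg : 3 ≤ g) :
    (DelF G ω g).card ≤ (Wit g G ω).card := by
  classical
  have hg0 : (0:ℕ) < g := by omega
  have hg1 : (1:ℕ) < g := by omega
  have hVB : Nonempty (VB V m) := by
    refine ⟨⟨Classical.arbitrary V, ⟨0, Nat.pos_of_ne_zero (NeZero.ne m)⟩⟩⟩
  have hP : Nonempty (Fin g × (Fin g → VB V m)) := by
    refine ⟨⟨⟨0, hg0⟩, fun _ => Classical.arbitrary _⟩⟩
  have hchoice : ∀ e ∈ DelF G ω g, ∃ p ∈ Wit g G ω,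
      e = s(p.2 ⟨0, hg0⟩, p.2 ⟨1, hg1⟩) := by
    intro e he
    rw [DelF, Set.Finite.mem_toFinset] at he
    obtain ⟨p, hp, h0, h1, hep⟩ := del_witness G ω hg he
    exact ⟨p, hp, hep⟩
  choose! f hf1 hf2 using hchoice
  apply Finset.card_le_card_of_injOn f hf1
  intro e1 he1 e2 he2 hf
  rw [Finset.mem_coe] at he1 he2
  rw [hf2 e1 he1, hf2 e2 he2, hf]

lemma join_of_lt (G : SimpleGraph V) [NeZero N] (ω : Om V m N) (g : ℕ)
    {u v : V} (hadj : G.Adj u v) {Wq Uq : Finset (VB V m)}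
    (hW : Wq ⊆ fiber V m u) (hU : Uq ⊆ fiber V m v)
    (hlt : (DelF G ω g).card < (Zset ω Wq Uq).card) :
    ∃ w ∈ Wq, ∃ x ∈ Uq, (Gfin G ω g).Adj w x := by
  classical
  have hne : u ≠ v := G.ne_of_adj hadj
  have hinj := key_injOn hne hW hU
  set Z := Zset ω Wq Uq with hZ
  set Z' := Z.filter (fun wx => s(wx.1, wx.2) ∈ Del G ω g) with hZ'
  have hZsub : Z ⊆ Wq ×ˢ Uq := by
    intro wx hwx
    exact mem_of_mem_filter _ hwx
  have hZ'card : Z'.card ≤ (DelF G ω g).card := by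
    apply Finset.card_le_card_of_injOn (fun wx => s(wx.1, wx.2))
    · intro wx hwx
      simp only [Finset.mem_coe, hZ', mem_filter] at hwx
      rw [Finset.mem_coe, DelF, Set.Finite.mem_toFinset]
      exact hwx.2
    · apply hinj.mono
      intro wx hwx
      rw [Finset.mem_coe] at hwx
      exact Finset.mem_coe.2 (hZsub (mem_of_mem_filter _ hwx))
  have hsub : Z' ⊆ Z := filter_subset _ _
  have hpos : 0 < (Z \ Z').card := by
    rw [card_sdiff_of_subset hsub]
    omega
  obtain ⟨wx, hwx⟩ := Finset.card_pos.1 hpos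
  rw [mem_sdiff] at hwx
  obtain ⟨hwxZ, hwxZ'⟩ := hwx
  have hmem : wx ∈ Wq ×ˢ Uq := hZsub hwxZ
  rw [mem_product] at hmem
  refine ⟨wx.1, hmem.1, wx.2, hmem.2, ?_⟩
  have hkey : ω s(wx.1, wx.2) = 0 := by
    rw [hZ, Zset, mem_filter] at hwxZ
    exact hwxZ.2
  have hnotdel : s(wx.1, wx.2) ∉ Del G ω g := by
    intro hdel
    exact hwxZ' (by rw [hZ', mem_filter]; exact ⟨hwxZ, hdel⟩)
  have hfst1 : wx.1.1 = u := by
    have := hW hmem.1; simpa [fiber] using this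
  have hfst2 : wx.2.1 = v := by
    have := hU hmem.2; simpa [fiber] using this
  rw [Gfin, SimpleGraph.deleteEdges_adj]
  refine ⟨⟨?_, hkey⟩, hnotdel⟩
  show G.Adj wx.1.1 wx.2.1
  rw [hfst1, hfst2]
  exact hadj

end SubBlow


open Finset in
/-- For a finite graph `G` with at least one edge and chromatic number `k ≥ 2`, and for
every `g ≥ 3`, there are a positive integer `m` and a spanning subgraph `G₀` of the
blow-up `G^m` with girth greater than `g` such that for every edge `uv` of `G`, any two
subsets of the fibres over `u` and `v` of size at least `m/(k-1)` are joined by an edge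
of `G₀`. -/
theorem subsampled_blowup_exists {V : Type} [Fintype V] (G : SimpleGraph V)
    (hedge : ∃ u v : V, G.Adj u v)
    (k : ℕ) (hk : 2 ≤ k) (hχ : G.chromaticNumber = (k : ℕ∞))
    (g : ℕ) (hg : 3 ≤ g) :
    ∃ m : ℕ, 0 < m ∧ ∃ G₀ : SimpleGraph (V × Fin m),
      G₀ ≤ G.blowup m ∧
      (g : ℕ∞) < G₀.egirth ∧
      (∀ u v : V, G.Adj u v →
        ∀ W U : Finset (V × Fin m),
          (∀ w ∈ W, w.1 = u) → (∀ x ∈ U, x.1 = v) →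
          (m : ℝ) / ((k : ℝ) - 1) ≤ (W.card : ℝ) →
          (m : ℝ) / ((k : ℝ) - 1) ≤ (U.card : ℝ) →
          ∃ w ∈ W, ∃ x ∈ U, G₀.Adj w x) := by
  classical
  obtain ⟨u0, v0, huv0⟩ := hedge
  haveI : Nonempty V := ⟨u0⟩
  haveI : Nontrivial V := ⟨u0, v0, G.ne_of_adj huv0⟩
  set n := Fintype.card V with hn_def
  have hn2 : 2 ≤ n := Fintype.one_lt_card
  set M : ℕ := 16 * g ^ 2 * n * k ^ 2 * (1 + n) with hM_def
  have hM2 : 2 ≤ M := by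
    have h1 : 1 ≤ g ^ 2 := Nat.one_le_pow _ _ (by omega)
    have h2 : 1 ≤ k ^ 2 := Nat.one_le_pow _ _ (by omega)
    calc 2 ≤ 16 * 1 * 2 * 1 * 1 := by norm_num
      _ ≤ 16 * g ^ 2 * n * k ^ 2 * (1 + n) := by
          apply Nat.mul_le_mul
          apply Nat.mul_le_mul
          apply Nat.mul_le_mul
          apply Nat.mul_le_mul_left
          all_goals omega
      _ = M := by rw [hM_def]
  have hM1 : 1 ≤ M := by omega
  set m : ℕ := M ^ (2 * g) with hm_def
  have hm2 : 2 ≤ m := by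
    calc 2 ≤ M := hM2
      _ = M ^ 1 := (pow_one M).symm
      _ ≤ M ^ (2 * g) := Nat.pow_le_pow_right (by omega) (by omega)
  have hm0 : 0 < m := by omega
  haveI : NeZero m := ⟨by omega⟩
  set N : ℕ := n * M ^ (2 * g - 1) with hN_def
  have hN2 : 2 ≤ N := by
    have : 1 ≤ M ^ (2 * g - 1) := Nat.one_le_pow _ _ (by omega)
    calc 2 ≤ 2 * 1 := by omega
      _ ≤ n * M ^ (2 * g - 1) := Nat.mul_le_mul hn2 this
      _ = N := rfl
  haveI : NeZero N := ⟨by omega⟩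
  set C : ℕ := 2 * g * M ^ g with hC_def
  set t : ℕ := m / k + 1 with ht_def
  set D := Fintype.card (SubBlow.Key V m) with hD_def
  -- basic card facts
  have hVB : Fintype.card (SubBlow.VB V m) = n * m := by
    simp [SubBlow.VB, hn_def]
  have hNM : Fintype.card (SubBlow.VB V m) = N * M := by
    rw [hVB, hN_def, hm_def]
    rw [mul_assoc, ← pow_succ]
    congr 2
    omega
  have hmD : 2 * m ^ 2 ≤ D := by
    rw [hD_def]
    have hc : Fintype.card (SubBlow.Key V m)
        = (Fintype.card (SubBlow.VB V m) + 1).choose 2 := Sym2.card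
    rw [hVB] at hc
    rw [hc, Nat.choose_two_right]
    have h1 : 2 * m ≤ n * m := Nat.mul_le_mul_right m hn2
    rw [Nat.le_div_iff_mul_le (by norm_num)]
    calc 2 * m ^ 2 * 2 = (2 * m) * (2 * m) := by ring
      _ ≤ (n * m + 1) * (n * m + 1 - 1) := by
          apply Nat.mul_le_mul <;> omega
  have hgm : g ≤ m := by
    calc g ≤ 2 ^ g := Nat.le_of_lt (Nat.lt_two_pow_self (n := g))
      _ ≤ M ^ g := Nat.pow_le_pow_left (by omega) g
      _ ≤ M ^ (2 * g) := Nat.pow_le_pow_right (by omega) (by omega)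
  have hgD : g ≤ D := by
    calc g ≤ m := hgm
      _ ≤ 2 * m ^ 2 := by nlinarith
      _ ≤ D := hmD
  -- t facts
  have htm : t ≤ m := by
    rw [ht_def]
    have h1 : m / k ≤ m / 2 := Nat.div_le_div_left hk (by omega)
    have h2 : m / 2 ≤ m - 1 := by omega
    omega
  have hmkt : m < k * t := by
    rw [ht_def]
    have h1 := Nat.div_add_mod m k
    have h2 : m % k < k := Nat.mod_lt _ (by omega)
    calc m = k * (m / k) + m % k := h1.symm
      _ < k * (m / k) + k := by omega
      _ = k * (m / k + 1) := by ring
  have hm2kt2 : m ^ 2 ≤ k ^ 2 * t ^ 2 := by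
    calc m ^ 2 ≤ (k * t) ^ 2 := Nat.pow_le_pow_left (by omega) 2
      _ = k ^ 2 * t ^ 2 := by ring
  have hk2N : k ^ 2 * N ≤ m ^ 2 := by
    rw [hN_def, hm_def]
    have h1 : k ^ 2 * n ≤ M := by
      rw [hM_def]
      calc k ^ 2 * n = 1 * 1 * n * k ^ 2 * 1 := by ring
        _ ≤ 16 * g ^ 2 * n * k ^ 2 * (1 + n) := by
            apply Nat.mul_le_mul
            apply Nat.mul_le_mul
            apply Nat.mul_le_mul
            apply Nat.mul_le_mul
            all_goals first | omega | exact Nat.one_le_pow _ _ (by omega)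
    calc k ^ 2 * (n * M ^ (2 * g - 1)) = (k ^ 2 * n) * M ^ (2 * g - 1) := by ring
      _ ≤ M * M ^ (2 * g - 1) := Nat.mul_le_mul_right _ h1
      _ = M ^ (2 * g - 1 + 1) := (pow_succ' M _).symm
      _ = M ^ (2 * g) := by congr 1; omega
      _ ≤ (M ^ (2 * g)) ^ 2 := Nat.le_self_pow (by omega) _
  have hNt2 : N ≤ t ^ 2 := by
    have h1 : k ^ 2 * N ≤ k ^ 2 * t ^ 2 := le_trans hk2N hm2kt2
    exact Nat.le_of_mul_le_mul_left h1 (by positivity)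
  have hCN : C ≤ N := by
    rw [hC_def, hN_def]
    have h1 : 2 * g ≤ M := by
      rw [hM_def]
      calc 2 * g ≤ 2 * g ^ 2 := by nlinarith
        _ ≤ 16 * g ^ 2 * 1 * 1 * 1 := by omega
        _ ≤ 16 * g ^ 2 * n * k ^ 2 * (1 + n) := by
            apply Nat.mul_le_mul
            apply Nat.mul_le_mul
            apply Nat.mul_le_mul
            apply Nat.mul_le_mul_left
            all_goals first | omega | exact Nat.one_le_pow _ _ (by omega)
    calc 2 * g * M ^ g ≤ M * M ^ g := Nat.mul_le_mul_right _ h1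
      _ = M ^ (g + 1) := by rw [← pow_succ']
      _ ≤ M ^ (2 * g - 1) := Nat.pow_le_pow_right (by omega) (by omega)
      _ ≤ n * M ^ (2 * g - 1) := Nat.le_mul_of_pos_left _ (by omega)
  have hCt2 : C ≤ t ^ 2 := le_trans hCN hNt2
  have ht2D : t ^ 2 ≤ D := by
    calc t ^ 2 ≤ m ^ 2 := Nat.pow_le_pow_left htm 2
      _ ≤ 2 * m ^ 2 := by omega
      _ ≤ D := hmD
  have hCD : C ≤ D := le_trans hCt2 ht2D
  -- Markov for witnesses
  set Bad1 := (univ : Finset (SubBlow.Om V m N)).filter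
    (fun ω => C < (SubBlow.Wit g G ω).card) with hBad1_def
  have hb1 : 2 * Bad1.card ≤ N ^ D := by
    have hsum := SubBlow.sum_wit_le (N := N) G M hM1 hNM hgD
    have h1 : Bad1.card • (C + 1) ≤ ∑ ω ∈ Bad1, (SubBlow.Wit g G ω).card := by
      apply Finset.card_nsmul_le_sum
      intro ω hω
      rw [hBad1_def, mem_filter] at hω
      omega
    have h2 : ∑ ω ∈ Bad1, (SubBlow.Wit g G ω).card
        ≤ ∑ ω : SubBlow.Om V m N, (SubBlow.Wit g G ω).card :=
      Finset.sum_le_sum_of_subset (subset_univ _)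
    have h3 : Bad1.card * (C + 1) ≤ g * M ^ g * N ^ D := by
      rw [← smul_eq_mul]
      exact le_trans h1 (le_trans h2 hsum)
    have h4 : 2 * (g * M ^ g) = C := by rw [hC_def]; ring
    have h5 : (2 * Bad1.card) * (C + 1) ≤ (N ^ D) * (C + 1) := by
      calc (2 * Bad1.card) * (C + 1) = 2 * (Bad1.card * (C + 1)) := by ring
        _ ≤ 2 * (g * M ^ g * N ^ D) := by omega
        _ = C * N ^ D := by rw [← h4]; ring
        _ ≤ (N ^ D) * (C + 1) := by
            calc C * N ^ D ≤ (C + 1) * N ^ D := Nat.mul_le_mul_right _ (by omega)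
              _ = (N ^ D) * (C + 1) := by ring
    exact Nat.le_of_mul_le_mul_right h5 (by omega)
  -- union bound for bad pairs
  set Bad2 := (univ : Finset (SubBlow.Om V m N)).filter
    (fun ω => ∃ q : V × V × Finset (SubBlow.VB V m) × Finset (SubBlow.VB V m),
      SubBlow.PairOK t q ∧ (SubBlow.Zset ω q.2.2.1 q.2.2.2).card ≤ C) with hBad2_def
  set A := Fintype.card (V × V × Finset (SubBlow.VB V m) × Finset (SubBlow.VB V m)) with hA_def
  have hNt1 : N ≤ t ^ 2 + 1 := by omega
  have hb2nat : Bad2.card ≤ A * ((C + 1) * t ^ (2 * C) * (N - 1) ^ (t ^ 2 - C)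
      * N ^ (D - t ^ 2)) := by
    have hsub : Bad2 ⊆ (univ : Finset (V × V × Finset (SubBlow.VB V m) × Finset (SubBlow.VB V m))).biUnion
        (fun q => (univ : Finset (SubBlow.Om V m N)).filter
          (fun ω => SubBlow.PairOK t q ∧ (SubBlow.Zset ω q.2.2.1 q.2.2.2).card ≤ C)) := by
      intro ω hω
      rw [hBad2_def, mem_filter] at hω
      obtain ⟨-, q, hq1, hq2⟩ := hω
      rw [Finset.mem_biUnion]
      exact ⟨q, mem_univ _, by rw [mem_filter]; exact ⟨mem_univ _, hq1, hq2⟩⟩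
    calc Bad2.card ≤ _ := Finset.card_le_card hsub
      _ ≤ ∑ q ∈ (univ : Finset (V × V × Finset (SubBlow.VB V m) × Finset (SubBlow.VB V m))),
            ((univ : Finset (SubBlow.Om V m N)).filter
              (fun ω => SubBlow.PairOK t q ∧ (SubBlow.Zset ω q.2.2.1 q.2.2.2).card ≤ C)).card :=
          Finset.card_biUnion_le
      _ ≤ ∑ _q ∈ (univ : Finset (V × V × Finset (SubBlow.VB V m) × Finset (SubBlow.VB V m))),
            ((C + 1) * t ^ (2 * C) * (N - 1) ^ (t ^ 2 - C) * N ^ (D - t ^ 2)) := by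
          apply Finset.sum_le_sum
          intro q _
          by_cases hq : SubBlow.PairOK t q
          · calc _ ≤ ((univ : Finset (SubBlow.Om V m N)).filter
                (fun ω => (SubBlow.Zset ω q.2.2.1 q.2.2.2).card ≤ C)).card := by
                  apply Finset.card_le_card
                  intro ω hω
                  rw [mem_filter] at hω ⊢
                  exact ⟨hω.1, hω.2.2⟩
              _ ≤ _ := SubBlow.count_badpair hq hCt2 hNt1 ht2D
          · have : ((univ : Finset (SubBlow.Om V m N)).filter
                (fun ω => SubBlow.PairOK t q ∧ (SubBlow.Zset ω q.2.2.1 q.2.2.2).card ≤ C)) = ∅ := by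
              rw [filter_eq_empty_iff]
              intro ω _ h
              exact hq h.1
            rw [this]
            simp
      _ = A * ((C + 1) * t ^ (2 * C) * (N - 1) ^ (t ^ 2 - C) * N ^ (D - t ^ 2)) := by
          rw [Finset.sum_const, smul_eq_mul, Finset.card_univ, ← hA_def]
  -- the exponential bound
  set X := 2 + (2 * n + 2 * (n * m)) + C + M * (2 * g) * (2 * C) with hX_def
  have hpow : 4 * A * ((C + 1) * t ^ (2 * C)) ≤ 2 ^ X := by
    have pA : A ≤ 2 ^ (2 * n + 2 * (n * m)) := by
      have hcardA : A = n * (n * (2 ^ (n * m) * 2 ^ (n * m))) := by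
        rw [hA_def]
        simp only [Fintype.card_prod, Fintype.card_finset, hVB, ← hn_def]
      have hn2pow : n ≤ 2 ^ n := Nat.le_of_lt (Nat.lt_two_pow_self (n := n))
      calc A = n * (n * (2 ^ (n * m) * 2 ^ (n * m))) := hcardA
        _ ≤ 2 ^ n * (2 ^ n * (2 ^ (n * m) * 2 ^ (n * m))) := by
            apply Nat.mul_le_mul hn2pow
            apply Nat.mul_le_mul hn2pow
            exact le_refl _
        _ = 2 ^ (n + (n + (n * m + n * m))) := by
            rw [pow_add, pow_add, pow_add]
        _ = 2 ^ (2 * n + 2 * (n * m)) := by congr 1; ring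
    have pC : C + 1 ≤ 2 ^ C := Nat.lt_two_pow_self (n := C)
    have pt : t ^ (2 * C) ≤ 2 ^ (M * (2 * g) * (2 * C)) := by
      have ht2 : t ≤ 2 ^ (M * (2 * g)) := by
        calc t ≤ m := htm
          _ = M ^ (2 * g) := hm_def
          _ ≤ (2 ^ M) ^ (2 * g) := Nat.pow_le_pow_left (Nat.le_of_lt (Nat.lt_two_pow_self (n := M))) _
          _ = 2 ^ (M * (2 * g)) := by rw [← pow_mul]
      calc t ^ (2 * C) ≤ (2 ^ (M * (2 * g))) ^ (2 * C) := Nat.pow_le_pow_left ht2 _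
        _ = 2 ^ (M * (2 * g) * (2 * C)) := by rw [← pow_mul]
    calc 4 * A * ((C + 1) * t ^ (2 * C))
        ≤ 2 ^ 2 * (2 ^ (2 * n + 2 * (n * m)) * (2 ^ C * 2 ^ (M * (2 * g) * (2 * C)))) := by
          have := Nat.mul_le_mul pC pt
          calc 4 * A * ((C + 1) * t ^ (2 * C))
              = 4 * (A * ((C + 1) * t ^ (2 * C))) := by ring
            _ ≤ 4 * (2 ^ (2 * n + 2 * (n * m)) * (2 ^ C * 2 ^ (M * (2 * g) * (2 * C)))) := by
                apply Nat.mul_le_mul_left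
                exact Nat.mul_le_mul pA this
            _ = 2 ^ 2 * (2 ^ (2 * n + 2 * (n * m)) * (2 ^ C * 2 ^ (M * (2 * g) * (2 * C)))) := by
                norm_num
      _ = 2 ^ X := by
          rw [hX_def, pow_add, pow_add, pow_add, pow_add]
          ring
  -- X is at most (t^2 - C) / N
  have hXQ : X ≤ (t ^ 2 - C) / N := by
    have hXb : X + 1 ≤ 16 * g ^ 2 * (1 + n) * m := by
      have hMgC : M * (2 * g) * (2 * C) = 8 * g ^ 2 * (M * M ^ g) := by
        rw [hC_def]; ring
      have e1 : M * M ^ g ≤ m := by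
        rw [hm_def, ← pow_succ']
        exact Nat.pow_le_pow_right (by omega) (by omega)
      have e2 : M ^ g ≤ m := by
        rw [hm_def]
        exact Nat.pow_le_pow_right (by omega) (by omega)
      have e3 : 1 ≤ m := by omega
      have hsplit : X + 1 = 3 + 2 * n + 2 * (n * m) + 2 * g * M ^ g
          + 8 * g ^ 2 * (M * M ^ g) := by
        rw [hX_def, hMgC, hC_def]
        ring
      have hterms : 3 + 2 * n + 2 * (n * m) + 2 * g * M ^ g + 8 * g ^ 2 * (M * M ^ g)
          ≤ 3 * m + 2 * n * m + 2 * (n * m) + 2 * g * m + 8 * g ^ 2 * m := by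
        have t1 : 3 ≤ 3 * m := by omega
        have t2 : 2 * n ≤ 2 * n * m := by nlinarith
        have t4 : 2 * g * M ^ g ≤ 2 * g * m := Nat.mul_le_mul_left _ e2
        have t5 : 8 * g ^ 2 * (M * M ^ g) ≤ 8 * g ^ 2 * m := Nat.mul_le_mul_left _ e1
        omega
      have hcoef : 3 * m + 2 * n * m + 2 * (n * m) + 2 * g * m + 8 * g ^ 2 * m
          ≤ 16 * g ^ 2 * (1 + n) * m := by
        have : 3 + 2 * n + 2 * n + 2 * g + 8 * g ^ 2 ≤ 16 * g ^ 2 * (1 + n) := by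
          have hgg : 9 ≤ g ^ 2 := by nlinarith
          have h1 : 4 * n ≤ 16 * g ^ 2 * n := by nlinarith [hgg]
          have h2 : 3 + 2 * g ≤ 8 * g ^ 2 := by nlinarith [hgg]
          have h3 : 16 * g ^ 2 * (1 + n) = 16 * g ^ 2 + 16 * g ^ 2 * n := by ring
          rw [h3]
          linarith
        calc 3 * m + 2 * n * m + 2 * (n * m) + 2 * g * m + 8 * g ^ 2 * m
            = (3 + 2 * n + 2 * n + 2 * g + 8 * g ^ 2) * m := by ring
          _ ≤ 16 * g ^ 2 * (1 + n) * m := Nat.mul_le_mul_right _ this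
      omega
    have hkey : k ^ 2 * (N * X + C) ≤ m ^ 2 := by
      have h1 : N * X + C ≤ N * (X + 1) := by
        have : C ≤ N := hCN
        calc N * X + C ≤ N * X + N := by omega
          _ = N * (X + 1) := by ring
      have h2 : k ^ 2 * (N * (X + 1)) ≤ m ^ 2 := by
        calc k ^ 2 * (N * (X + 1))
            ≤ k ^ 2 * (N * (16 * g ^ 2 * (1 + n) * m)) := by
              apply Nat.mul_le_mul_left
              exact Nat.mul_le_mul_left _ hXb
          _ = (16 * g ^ 2 * n * k ^ 2 * (1 + n)) * M ^ (2 * g - 1) * m := by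
              rw [hN_def]; ring
          _ = M * M ^ (2 * g - 1) * m := by rw [← hM_def]
          _ = M ^ (2 * g - 1 + 1) * m := by rw [← pow_succ']
          _ = m * m := by
              congr 1
              rw [hm_def]
              congr 1
              omega
          _ = m ^ 2 := (sq m).symm
      calc k ^ 2 * (N * X + C) ≤ k ^ 2 * (N * (X + 1)) := Nat.mul_le_mul_left _ h1
        _ ≤ m ^ 2 := h2
    have h3 : N * X + C ≤ t ^ 2 := by
      have h4 : k ^ 2 * (N * X + C) ≤ k ^ 2 * t ^ 2 := le_trans hkey hm2kt2
      exact Nat.le_of_mul_le_mul_left h4 (by positivity)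
    rw [Nat.le_div_iff_mul_le (by omega : 0 < N)]
    have hcomm : X * N = N * X := Nat.mul_comm X N
    omega
  -- real-number union bound
  set NB := N - 1 with hNB_def
  have hb2 : 4 * Bad2.card ≤ N ^ D := by
    set E := t ^ 2 - C with hE_def
    have r1 : ((NB : ℕ) : ℝ) ^ E ≤ (1 / 2 : ℝ) ^ (E / N) * (N : ℝ) ^ E := by
      rw [hNB_def]
      exact SubBlow.ratio_pow_le N E hN2
    have r2 : ((1 : ℝ) / 2) ^ (E / N) ≤ (1 / 2 : ℝ) ^ X :=
      pow_le_pow_of_le_one (by norm_num) (by norm_num) (by rw [hE_def]; exact hXQ)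
    have hcast : (Bad2.card : ℝ)
        ≤ (A : ℝ) * (((C : ℝ) + 1) * (t : ℝ) ^ (2 * C) * ((NB : ℕ) : ℝ) ^ E
            * (N : ℝ) ^ (D - t ^ 2)) := by
      have h0 := (Nat.cast_le (α := ℝ)).2 hb2nat
      push_cast at h0 ⊢
      convert h0 using 3
    have hfact : ((2 : ℝ)) ^ X * ((1 : ℝ) / 2) ^ X = 1 := by
      rw [← mul_pow]
      norm_num
    have hpowR : (4 : ℝ) * (A : ℝ) * (((C : ℝ) + 1) * (t : ℝ) ^ (2 * C)) ≤ (2 : ℝ) ^ X := by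
      have h0 := (Nat.cast_le (α := ℝ)).2 hpow
      push_cast at h0 ⊢
      linarith
    have hEexp : (N : ℝ) ^ E * (N : ℝ) ^ (D - t ^ 2) ≤ (N : ℝ) ^ D := by
      rw [← pow_add]
      apply pow_le_pow_right₀ (by exact_mod_cast (by omega : 1 ≤ N))
      rw [hE_def]
      omega
    have hmain : (4 * Bad2.card : ℝ) ≤ (N : ℝ) ^ D := by
      have hAnn : (0:ℝ) ≤ (A : ℝ) := by positivity
      calc (4 * Bad2.card : ℝ)
          ≤ 4 * ((A : ℝ) * (((C : ℝ) + 1) * (t : ℝ) ^ (2 * C) * ((NB : ℕ) : ℝ) ^ E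
              * (N : ℝ) ^ (D - t ^ 2))) := by linarith
        _ ≤ 4 * ((A : ℝ) * (((C : ℝ) + 1) * (t : ℝ) ^ (2 * C)
              * ((1 / 2 : ℝ) ^ (E / N) * (N : ℝ) ^ E) * (N : ℝ) ^ (D - t ^ 2))) := by
            gcongr
        _ ≤ 4 * ((A : ℝ) * (((C : ℝ) + 1) * (t : ℝ) ^ (2 * C)
              * ((1 / 2 : ℝ) ^ X * (N : ℝ) ^ E) * (N : ℝ) ^ (D - t ^ 2))) := by
            gcongr
        _ = (4 * (A : ℝ) * (((C : ℝ) + 1) * (t : ℝ) ^ (2 * C)) * (1 / 2 : ℝ) ^ X)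
              * ((N : ℝ) ^ E * (N : ℝ) ^ (D - t ^ 2)) := by ring
        _ ≤ ((2 : ℝ) ^ X * (1 / 2 : ℝ) ^ X) * ((N : ℝ) ^ D) := by
            apply mul_le_mul _ hEexp (by positivity) (by positivity)
            exact mul_le_mul_of_nonneg_right hpowR (by positivity)
        _ = (N : ℝ) ^ D := by rw [hfact]; ring
    exact_mod_cast hmain
  -- a good ω exists
  have hOm : Fintype.card (SubBlow.Om V m N) = N ^ D := by
    rw [hD_def]
    simp [SubBlow.Om, Fintype.card_fun]
  have hgood : ∃ ω : SubBlow.Om V m N, ω ∉ Bad1 ∧ ω ∉ Bad2 := by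
    by_contra hall
    push_neg at hall
    have hsub : (univ : Finset (SubBlow.Om V m N)) ⊆ Bad1 ∪ Bad2 := by
      intro ω _
      rw [Finset.mem_union]
      by_cases h : ω ∈ Bad1
      · exact Or.inl h
      · exact Or.inr (hall ω h)
    have h1 := Finset.card_le_card hsub
    rw [Finset.card_univ, hOm] at h1
    have h2 := Finset.card_union_le Bad1 Bad2
    have hND0 : 0 < N ^ D := by positivity
    omega
  obtain ⟨ω, hω1, hω2⟩ := hgood
  have hωwit : (SubBlow.Wit g G ω).card ≤ C := by
    by_contra hcon
    push_neg at hcon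
    exact hω1 (by rw [hBad1_def, mem_filter]; exact ⟨mem_univ _, hcon⟩)
  have hωpair : ∀ q : V × V × Finset (SubBlow.VB V m) × Finset (SubBlow.VB V m),
      SubBlow.PairOK t q → C < (SubBlow.Zset ω q.2.2.1 q.2.2.2).card := by
    intro q hq
    by_contra hcon
    push_neg at hcon
    exact hω2 (by rw [hBad2_def, mem_filter]; exact ⟨mem_univ _, q, hq, hcon⟩)
  -- conclusion
  refine ⟨m, hm0, SubBlow.Gfin G ω g, SubBlow.Gfin_le G ω g, SubBlow.Gfin_girth G ω g, ?_⟩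
  intro u v hadj W U hWf hUf hWcard hUcard
  have hkR : (1 : ℝ) ≤ (k : ℝ) - 1 := by
    have : (2 : ℝ) ≤ (k : ℝ) := by exact_mod_cast hk
    linarith
  have hcardbig : ∀ (S : Finset (SubBlow.VB V m)),
      (m : ℝ) / ((k : ℝ) - 1) ≤ (S.card : ℝ) → t ≤ S.card := by
    intro S hS
    have hx : ((m / k : ℕ) : ℝ) < (S.card : ℝ) := by
      calc ((m / k : ℕ) : ℝ) ≤ (m : ℝ) / (k : ℝ) := Nat.cast_div_le
        _ < (m : ℝ) / ((k : ℝ) - 1) := by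
            apply div_lt_div_of_pos_left
            · exact_mod_cast hm0
            · linarith
            · linarith
        _ ≤ (S.card : ℝ) := hS
    have h5 : m / k < S.card := by exact_mod_cast hx
    rw [ht_def]
    omega
  obtain ⟨W', hW'sub, hW'card⟩ := Finset.exists_subset_card_eq (hcardbig W hWcard)
  obtain ⟨U', hU'sub, hU'card⟩ := Finset.exists_subset_card_eq (hcardbig U hUcard)
  have hW'f : W' ⊆ SubBlow.fiber V m u := by
    intro w hw
    rw [SubBlow.fiber, mem_filter]
    exact ⟨mem_univ _, hWf w (hW'sub hw)⟩
  have hU'f : U' ⊆ SubBlow.fiber V m v := by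
    intro x hx
    rw [SubBlow.fiber, mem_filter]
    exact ⟨mem_univ _, hUf x (hU'sub hx)⟩
  have hpairok : SubBlow.PairOK t ((u, v, W', U') :
      V × V × Finset (SubBlow.VB V m) × Finset (SubBlow.VB V m)) :=
    ⟨G.ne_of_adj hadj, hW'f, hU'f, hW'card, hU'card⟩
  have hZ := hωpair (u, v, W', U') hpairok
  have hdel : (SubBlow.DelF G ω g).card < (SubBlow.Zset ω W' U').card := by
    have h6 := SubBlow.DelF_card_le (N := N) G ω hg
    simp only at hZ
    omega
  obtain ⟨w, hw, x, hx, hadj'⟩ := SubBlow.join_of_lt G ω g hadj hW'f hU'f hdel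
  exact ⟨w, hW'sub hw, x, hU'sub hx, hadj'⟩
end

section
/- Let d and n be positive integers and suppose f : Fin d × Fin 3 → EuclideanSpace ℝ (Fin n) is an injective map with ‖f(i, a)‖ = 1 for all (i, a), such that ⟨f(i, a), f(j, b)⟩ = 0 whenever i ≠ j. Then n ≥ 2d. (That is, embedding the complete d-partite graph with parts of size 3 as an orthogonality graph on a sphere requires at least 2d dimensions.) -/
/-!
The parts span pairwise orthogonal subspaces, which are therefore independent, so their
dimensions add up to at most `n`. Each part spans at least a plane, because a line contains
only two unit vectors while a part consists of three distinct ones.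
-/

open scoped RealInnerProductSpace

open Module Submodule

theorem eq_or_eq_neg_of_mem_span_singleton {E : Type*} [NormedAddCommGroup E] [NormedSpace ℝ E]
    {x y : E} (hx : ‖x‖ = 1) (hy : ‖y‖ = 1) (h : y ∈ ℝ ∙ x) : y = x ∨ y = -x := by
  obtain ⟨c, rfl⟩ := mem_span_singleton.mp h
  rw [norm_smul, hx, mul_one, Real.norm_eq_abs] at hy
  rcases abs_eq zero_le_one |>.mp hy with rfl | rfl
  · exact .inl (one_smul ℝ x)
  · exact .inr (neg_one_smul ℝ x)

theorem two_le_finrank_span_range_of_injective_of_norm_eq_one {E : Type*} [NormedAddCommGroup E]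
    [NormedSpace ℝ E] {v : Fin 3 → E} (hv : Function.Injective v) (hnorm : ∀ a, ‖v a‖ = 1) :
    2 ≤ finrank ℝ (span ℝ (Set.range v)) := by
  by_contra! h
  have := FiniteDimensional.span_of_finite ℝ (Set.finite_range v)
  have hv0 : v 0 ≠ 0 := norm_ne_zero_iff.mp (by simp [hnorm])
  have hline : ℝ ∙ v 0 = span ℝ (Set.range v) :=
    eq_of_le_of_finrank_le (span_mono (by simp))
      (by rw [finrank_span_singleton hv0]; omega)
  have hsign (a : Fin 3) : v a = v 0 ∨ v a = -v 0 :=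
    eq_or_eq_neg_of_mem_span_singleton (hnorm 0) (hnorm a)
      (hline ▸ subset_span (Set.mem_range_self a))
  rcases hsign 1 with h1 | h1
  · exact absurd (hv h1) (by decide)
  rcases hsign 2 with h2 | h2
  · exact absurd (hv h2) (by decide)
  exact absurd (hv (h1.trans h2.symm)) (by decide)

theorem iSupIndep.sum_finrank_le {K E ι : Type*} [Field K] [AddCommGroup E] [Module K E]
    [FiniteDimensional K E] [Fintype ι] [DecidableEq ι] {V : ι → Submodule K E}
    (hV : iSupIndep V) : ∑ i, finrank K (V i) ≤ finrank K E := by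
  rw [← finrank_directSum K fun i => V i]
  exact LinearMap.finrank_le_finrank_of_injective hV.dfinsupp_lsum_injective

theorem complete_multipartite_orthogonality_dimension_general (d n : ℕ)
    (f : Fin d × Fin 3 → EuclideanSpace ℝ (Fin n))
    (hf : Function.Injective f)
    (hnorm : ∀ x : Fin d × Fin 3, ‖f x‖ = 1)
    (horth : ∀ (i j : Fin d) (a b : Fin 3), i ≠ j → ⟪f (i, a), f (j, b)⟫ = 0) :
    2 * d ≤ n := by
  let V (i : Fin d) := span ℝ (Set.range fun a => f (i, a))
  have hV : OrthogonalFamily ℝ (fun i => V i) fun i => (V i).subtypeₗᵢ :=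
    orthogonalFamily_iff_pairwise.mpr fun i j hij =>
      isOrtho_span.mpr (by rintro _ ⟨a, rfl⟩ _ ⟨b, rfl⟩; exact horth i j a b hij)
  calc 2 * d = ∑ _i : Fin d, 2 := by simp [mul_comm]
    _ ≤ ∑ i, finrank ℝ (V i) := Finset.sum_le_sum fun i _ =>
      two_le_finrank_span_range_of_injective_of_norm_eq_one
        (hf.comp (Prod.mk_right_injective i)) (hnorm ⟨i, ·⟩)
    _ ≤ finrank ℝ (EuclideanSpace ℝ (Fin n)) := hV.independent.sum_finrank_le
    _ = n := finrank_euclideanSpace_fin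

/-- Embedding the complete `d`-partite graph with parts of size `3` as an orthogonality
graph on a sphere requires at least `2d` dimensions. -/
theorem complete_multipartite_orthogonality_dimension (d n : ℕ) (hd : 0 < d) (hn : 0 < n)
    (f : Fin d × Fin 3 → EuclideanSpace ℝ (Fin n))
    (hf : Function.Injective f)
    (hnorm : ∀ x : Fin d × Fin 3, ‖f x‖ = 1)
    (horth : ∀ (i j : Fin d) (a b : Fin 3), i ≠ j → ⟪f (i, a), f (j, b)⟫ = 0) :
    2 * d ≤ n :=
  complete_multipartite_orthogonality_dimension_general d n f hf hnorm horth
end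

section
/- For all positive integers n ≥ 2, g ≥ 2 and k, there exists a finite n-uniform hypergraph H with girth at least g and chromatic number greater than k; that is, H contains no cycle of length less than g, and for every colouring of the vertices of H with k colours some hyperedge of H is monochromatic. -/
/-- A hypergraph with hyperedge set `E` has a cycle of length `ℓ`: a tuple of `ℓ` distinct
hyperedges `F₀, …, F_{ℓ-1}` together with distinct vertices `v₀, …, v_{ℓ-1}` such that
`vᵢ ∈ Fᵢ ∩ F_{i+1}` (indices mod `ℓ`). -/
def HypergraphCycle {V : Type} (E : Finset (Finset V)) (ℓ : ℕ) : Prop :=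
  ∃ (F : Fin ℓ → Finset V) (v : Fin ℓ → V),
    Function.Injective F ∧ (∀ i, F i ∈ E) ∧ Function.Injective v ∧
    ∀ i : Fin ℓ, v i ∈ F i ∧ v i ∈ F (i + ⟨1 % ℓ, Nat.mod_lt 1 i.pos⟩)

open Finset

section Measure
variable {α : Type} [DecidableEq α]

/-- weight of a sub-hypergraph -/
def pw (p q : ℚ) (U H : Finset α) : ℚ := p ^ H.card * q ^ (U \ H).card

theorem sum_pw (p q : ℚ) (U : Finset α) :
    ∑ H ∈ U.powerset, pw p q U H = (p + q) ^ U.card := by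
  rw [← Finset.prod_const, Finset.prod_add]
  simp [pw, Finset.prod_const]

theorem sum_pw_superset (p q : ℚ) {U S : Finset α} (hS : S ⊆ U) :
    ∑ H ∈ U.powerset.filter (fun H => S ⊆ H), pw p q U H
      = p ^ S.card * (p + q) ^ (U \ S).card := by
  rw [← sum_pw p q (U \ S), Finset.mul_sum]
  refine Finset.sum_nbij' (fun H => H \ S) (fun H' => H' ∪ S) ?_ ?_ ?_ ?_ ?_
  · intro H hH
    simp only [Finset.mem_filter, Finset.mem_powerset] at hH
    exact Finset.mem_powerset.2 (Finset.sdiff_subset_sdiff hH.1 (le_refl S))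
  · intro H' hH'
    simp only [Finset.mem_powerset] at hH'
    refine Finset.mem_filter.2 ⟨Finset.mem_powerset.2 ?_, Finset.subset_union_right⟩
    exact Finset.union_subset (hH'.trans Finset.sdiff_subset) hS
  · intro H hH
    simp only [Finset.mem_filter, Finset.mem_powerset] at hH
    exact Finset.sdiff_union_of_subset hH.2
  · intro H' hH'
    simp only [Finset.mem_powerset] at hH'
    exact Finset.union_sdiff_cancel_right (Finset.sdiff_disjoint.mono_left hH')
  · intro H hH
    simp only [Finset.mem_filter, Finset.mem_powerset] at hH
    have hc : S.card ≤ H.card := Finset.card_le_card hH.2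
    have h1 : H.card = S.card + (H \ S).card := by
      rw [Finset.card_sdiff_of_subset hH.2]; omega
    have h2 : U \ H = (U \ S) \ (H \ S) := by
      ext x
      simp only [Finset.mem_sdiff]
      constructor
      · rintro ⟨hxU, hxH⟩
        exact ⟨⟨hxU, fun hxS => hxH (hH.2 hxS)⟩, fun h3 => hxH h3.1⟩
      · rintro ⟨⟨hxU, hxS⟩, h3⟩
        exact ⟨hxU, fun hxH => h3 ⟨hxH, hxS⟩⟩
    rw [pw, pw, h1, pow_add, h2, mul_assoc]

theorem sum_pw_inter (p q : ℚ) {U T : Finset α} (hT : T ⊆ U) (j : ℕ) :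
    ∑ H ∈ U.powerset.filter (fun H => (H ∩ T).card = j), pw p q U H
      = (T.card.choose j : ℚ) * (p ^ j * q ^ (T.card - j) * (p + q) ^ (U \ T).card) := by
  have key : ∑ H ∈ U.powerset.filter (fun H => (H ∩ T).card = j), pw p q U H
      = ∑ AB ∈ (Finset.powersetCard j T) ×ˢ (U \ T).powerset,
          (p ^ j * q ^ (T.card - j)) * pw p q (U \ T) AB.2 := by
    refine Finset.sum_nbij' (fun H => (H ∩ T, H \ T)) (fun AB => AB.1 ∪ AB.2) ?_ ?_ ?_ ?_ ?_
    · intro H hH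
      simp only [Finset.mem_filter, Finset.mem_powerset] at hH
      refine Finset.mem_product.2 ⟨Finset.mem_powersetCard.2 ⟨Finset.inter_subset_right, hH.2⟩,
        Finset.mem_powerset.2 (Finset.sdiff_subset_sdiff hH.1 (le_refl T))⟩
    · intro AB hAB
      simp only [Finset.mem_product, Finset.mem_powersetCard, Finset.mem_powerset] at hAB
      obtain ⟨⟨hA, hAc⟩, hB⟩ := hAB
      have hBT : AB.2 ∩ T = ∅ := by
        apply Finset.eq_empty_of_forall_notMem
        intro x hx
        simp only [Finset.mem_inter] at hx
        exact (Finset.mem_sdiff.1 (hB hx.1)).2 hx.2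
      refine Finset.mem_filter.2 ⟨Finset.mem_powerset.2
        (Finset.union_subset (hA.trans hT) (hB.trans Finset.sdiff_subset)), ?_⟩
      rw [Finset.union_inter_distrib_right, hBT, Finset.union_empty,
        Finset.inter_eq_left.2 hA, hAc]
    · intro H _
      ext x
      simp only [Finset.mem_union, Finset.mem_inter, Finset.mem_sdiff]
      tauto
    · intro AB hAB
      simp only [Finset.mem_product, Finset.mem_powersetCard, Finset.mem_powerset] at hAB
      obtain ⟨⟨hA, _⟩, hB⟩ := hAB
      have h1 : (AB.1 ∪ AB.2) ∩ T = AB.1 := by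
        ext x
        simp only [Finset.mem_inter, Finset.mem_union]
        constructor
        · rintro ⟨hx | hx, hxT⟩
          · exact hx
          · exact absurd hxT (Finset.mem_sdiff.1 (hB hx)).2
        · intro hx; exact ⟨Or.inl hx, hA hx⟩
      have h2 : (AB.1 ∪ AB.2) \ T = AB.2 := by
        ext x
        simp only [Finset.mem_sdiff, Finset.mem_union]
        constructor
        · rintro ⟨hx | hx, hxT⟩
          · exact absurd (hA hx) hxT
          · exact hx
        · intro hx; exact ⟨Or.inr hx, (Finset.mem_sdiff.1 (hB hx)).2⟩
      simpa using Prod.ext h1 h2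
    · intro H hH
      simp only [Finset.mem_filter, Finset.mem_powerset] at hH
      obtain ⟨hHU, hHj⟩ := hH
      have hdisj : Disjoint (H ∩ T) (H \ T) := by
        refine Finset.disjoint_left.2 ?_
        intro x hx1 hx2
        exact (Finset.mem_sdiff.1 hx2).2 (Finset.mem_inter.1 hx1).2
      have hcard : H.card = j + (H \ T).card := by
        rw [← hHj, ← Finset.card_union_of_disjoint hdisj]
        congr 1
        ext x
        simp only [Finset.mem_union, Finset.mem_inter, Finset.mem_sdiff]
        tauto
      have hUset : U \ H = (T \ (H ∩ T)) ∪ ((U \ T) \ (H \ T)) := by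
        ext x
        simp only [Finset.mem_union, Finset.mem_sdiff, Finset.mem_inter]
        constructor
        · rintro ⟨hxU, hxH⟩
          by_cases hxT : x ∈ T
          · exact Or.inl ⟨hxT, fun h => hxH h.1⟩
          · exact Or.inr ⟨⟨hxU, hxT⟩, fun h => hxH h.1⟩
        · rintro (⟨hxT, hx2⟩ | ⟨⟨hxU, hxT⟩, hx2⟩)
          · exact ⟨hT hxT, fun hxH => hx2 ⟨hxH, hxT⟩⟩
          · exact ⟨hxU, fun hxH => hx2 ⟨hxH, hxT⟩⟩
      have hdisj2 : Disjoint (T \ (H ∩ T)) ((U \ T) \ (H \ T)) := by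
        refine Finset.disjoint_left.2 ?_
        intro x hx1 hx2
        exact (Finset.mem_sdiff.1 (Finset.mem_sdiff.1 hx2).1).2 (Finset.mem_sdiff.1 hx1).1
      have hcT : (T \ (H ∩ T)).card = T.card - j := by
        rw [Finset.card_sdiff_of_subset Finset.inter_subset_right, hHj]
      have hUcard : (U \ H).card = (T.card - j) + ((U \ T) \ (H \ T)).card := by
        rw [hUset, Finset.card_union_of_disjoint hdisj2, hcT]
      rw [pw, pw, hcard, hUcard, pow_add, pow_add]
      ring
  have inner : ∑ y ∈ (U \ T).powerset, p ^ j * q ^ (T.card - j) * pw p q (U \ T) y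
      = p ^ j * q ^ (T.card - j) * (p + q) ^ (U \ T).card := by
    rw [← Finset.mul_sum, sum_pw]
  rw [key, Finset.sum_product]
  simp only []
  rw [Finset.sum_congr rfl (fun x _ => inner), Finset.sum_const, Finset.card_powersetCard,
    nsmul_eq_mul]

theorem pw_nonneg {p q : ℚ} (hp : 0 ≤ p) (hq : 0 ≤ q) (U H : Finset α) :
    0 ≤ pw p q U H :=
  mul_nonneg (pow_nonneg hp _) (pow_nonneg hq _)

theorem markov_bound {p q : ℚ} (hp : 0 ≤ p) (hq : 0 ≤ q) (U : Finset α)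
    (X : Finset α → ℕ) (t : ℕ) :
    (t : ℚ) * ∑ H ∈ U.powerset.filter (fun H => t ≤ X H), pw p q U H
      ≤ ∑ H ∈ U.powerset, pw p q U H * (X H : ℚ) := by
  rw [Finset.mul_sum]
  calc ∑ H ∈ U.powerset.filter (fun H => t ≤ X H), (t : ℚ) * pw p q U H
      ≤ ∑ H ∈ U.powerset.filter (fun H => t ≤ X H), pw p q U H * (X H : ℚ) := by
        refine Finset.sum_le_sum ?_
        intro H hH
        have h1 : (t : ℚ) ≤ (X H : ℚ) := by
          exact_mod_cast (Finset.mem_filter.1 hH).2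
        rw [mul_comm]
        exact mul_le_mul_of_nonneg_left h1 (pw_nonneg hp hq U H)
    _ ≤ ∑ H ∈ U.powerset, pw p q U H * (X H : ℚ) := by
        refine Finset.sum_le_sum_of_subset_of_nonneg (Finset.filter_subset _ _) ?_
        intro H hH _
        exact mul_nonneg (pw_nonneg hp hq U H) (Nat.cast_nonneg _)

theorem sum_union_le_add {f : α → ℚ} (hf : ∀ x, 0 ≤ f x) (s t : Finset α) :
    ∑ x ∈ s ∪ t, f x ≤ ∑ x ∈ s, f x + ∑ x ∈ t, f x := by
  rw [← Finset.sum_union_inter]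
  have := Finset.sum_nonneg (fun x (_ : x ∈ s ∩ t) => hf x)
  linarith

theorem sum_biUnion_le_sum_sum {β : Type} [DecidableEq β] {f : β → ℚ} (hf : ∀ x, 0 ≤ f x)
    (s : Finset α) (t : α → Finset β) :
    ∑ x ∈ s.biUnion t, f x ≤ ∑ a ∈ s, ∑ x ∈ t a, f x := by
  induction s using Finset.induction_on with
  | empty => simp
  | insert _ _ h ih =>
    rename_i a s
    rw [Finset.biUnion_insert, Finset.sum_insert h]
    exact (sum_union_le_add hf _ _).trans (by linarith)

end Measure

section Hyper

variable {V : Type} [Fintype V] [DecidableEq V]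

/-- the finset of cycle configurations of length ℓ in edge set E -/
def cycleFinset (E : Finset (Finset V)) (ℓ : ℕ) :
    Finset ((Fin ℓ → Finset V) × (Fin ℓ → V)) :=
  Finset.univ.filter (fun c =>
    Function.Injective c.1 ∧ (∀ i, c.1 i ∈ E) ∧ Function.Injective c.2 ∧
    ∀ i : Fin ℓ, c.2 i ∈ c.1 i ∧ c.2 i ∈ c.1 (i + ⟨1 % ℓ, Nat.mod_lt 1 i.pos⟩))

theorem hypergraphCycle_iff (E : Finset (Finset V)) (ℓ : ℕ) :
    HypergraphCycle E ℓ ↔ (cycleFinset E ℓ).Nonempty := by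
  constructor
  · rintro ⟨F, v, h1, h2, h3, h4⟩
    exact ⟨(F, v), Finset.mem_filter.2 ⟨Finset.mem_univ _, h1, h2, h3, h4⟩⟩
  · rintro ⟨c, hc⟩
    obtain ⟨-, h1, h2, h3, h4⟩ := Finset.mem_filter.1 hc
    exact ⟨c.1, c.2, h1, h2, h3, h4⟩

def edgesBetween (U : Finset (Finset V)) (a b : V) : Finset (Finset V) :=
  U.filter (fun F => a ∈ F ∧ b ∈ F)

theorem card_edgesBetween {U : Finset (Finset V)} {n : ℕ} (hn : 2 ≤ n)
    (hU : ∀ F ∈ U, F.card = n) {a b : V} (hab : a ≠ b) :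
    (edgesBetween U a b).card ≤ (Fintype.card V) ^ (n - 2) := by
  have h1 : (edgesBetween U a b).card ≤ (Finset.powersetCard (n-2) (Finset.univ : Finset V)).card := by
    apply Finset.card_le_card_of_injOn (fun F => F \ {a, b})
    · intro F hF
      obtain ⟨hFU, haF, hbF⟩ := Finset.mem_filter.1 hF
      refine Finset.mem_powersetCard.2 ⟨Finset.subset_univ _, ?_⟩
      have hsub : ({a, b} : Finset V) ⊆ F := by
        intro x hx
        rcases Finset.mem_insert.1 hx with h | h
        · rwa [h]
        · rw [Finset.mem_singleton.1 h]; exact hbF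
      rw [Finset.card_sdiff_of_subset hsub, hU F hFU, Finset.card_pair hab]
    · intro F hF G hG hFG
      obtain ⟨hFU, haF, hbF⟩ := Finset.mem_filter.1 hF
      obtain ⟨hGU, haG, hbG⟩ := Finset.mem_filter.1 hG
      have hF' : F = (F \ {a, b}) ∪ {a, b} := by
        ext x
        simp only [Finset.mem_union, Finset.mem_sdiff, Finset.mem_insert, Finset.mem_singleton]
        constructor
        · intro hx
          by_cases h : x = a ∨ x = b
          · exact Or.inr h
          · exact Or.inl ⟨hx, h⟩
        · rintro (⟨hx, -⟩ | (rfl | rfl)) <;> assumption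
      have hG' : G = (G \ {a, b}) ∪ {a, b} := by
        ext x
        simp only [Finset.mem_union, Finset.mem_sdiff, Finset.mem_insert, Finset.mem_singleton]
        constructor
        · intro hx
          by_cases h : x = a ∨ x = b
          · exact Or.inr h
          · exact Or.inl ⟨hx, h⟩
        · rintro (⟨hx, -⟩ | (rfl | rfl)) <;> assumption
      simp only at hFG
      rw [hF', hG', hFG]
  calc (edgesBetween U a b).card ≤ _ := h1
    _ = (Fintype.card V).choose (n - 2) := by
        rw [Finset.card_powersetCard, Finset.card_univ]
    _ ≤ (Fintype.card V) ^ (n - 2) := by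
        calc (Fintype.card V).choose (n - 2)
            ≤ (Fintype.card V).descFactorial (n - 2) := by
              rw [Nat.descFactorial_eq_factorial_mul_choose]
              exact Nat.le_mul_of_pos_left _ (Nat.factorial_pos _)
          _ ≤ _ := Nat.descFactorial_le_pow _ _

theorem card_cycleFinset_le {U : Finset (Finset V)} {n : ℕ} (hn : 2 ≤ n)
    (hU : ∀ F ∈ U, F.card = n) {ℓ : ℕ} (hℓ : 2 ≤ ℓ) :
    (cycleFinset U ℓ).card ≤ (Fintype.card V) ^ ℓ * ((Fintype.card V) ^ (n - 2)) ^ ℓ := by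
  haveI : NeZero ℓ := ⟨by omega⟩
  have hone : ((1 : Fin ℓ) : ℕ) = 1 := by
    simp [Fin.val_one', Nat.mod_eq_of_lt (by omega : 1 < ℓ)]
  have hsub : cycleFinset U ℓ ⊆ (Finset.univ.filter
      (fun v : Fin ℓ → V => Function.Injective v)).biUnion (fun v =>
      (Fintype.piFinset (fun i => edgesBetween U (v i) (v (i - 1)))).image (fun F => (F, v))) := by
    intro c hc
    obtain ⟨-, h1, h2, h3, h4⟩ := Finset.mem_filter.1 hc
    refine Finset.mem_biUnion.2 ⟨c.2, Finset.mem_filter.2 ⟨Finset.mem_univ _, h3⟩, ?_⟩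
    refine Finset.mem_image.2 ⟨c.1, ?_, rfl⟩
    refine Fintype.mem_piFinset.2 ?_
    intro j
    refine Finset.mem_filter.2 ⟨h2 j, (h4 j).1, ?_⟩
    have hone' : (⟨1 % ℓ, Nat.mod_lt 1 (j-1).pos⟩ : Fin ℓ) = 1 := by
      apply Fin.ext
      simp [Fin.val_one', Nat.mod_eq_of_lt (by omega : 1 < ℓ)]
    have := (h4 (j - 1)).2
    rwa [hone', sub_add_cancel] at this
  have hne : ∀ v : Fin ℓ → V, Function.Injective v → ∀ j : Fin ℓ, v j ≠ v (j - 1) := by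
    intro v hv j hj
    have : j = j - 1 := hv hj
    have h10 : (1 : Fin ℓ) = 0 := by
      have := sub_eq_self.1 this.symm
      exact this
    have : ((1 : Fin ℓ) : ℕ) = ((0 : Fin ℓ) : ℕ) := by rw [h10]
    rw [hone] at this
    simp at this
  calc (cycleFinset U ℓ).card
      ≤ _ := Finset.card_le_card hsub
    _ ≤ ∑ v ∈ Finset.univ.filter (fun v : Fin ℓ → V => Function.Injective v),
          ((Fintype.piFinset
          (fun i => edgesBetween U (v i) (v (i - 1)))).image (fun F => (F, v))).card :=
        Finset.card_biUnion_le
    _ ≤ ∑ _v ∈ Finset.univ.filter (fun v : Fin ℓ → V => Function.Injective v),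
          ((Fintype.card V) ^ (n - 2)) ^ ℓ := by
        refine Finset.sum_le_sum ?_
        intro v hv
        have hvinj : Function.Injective v := (Finset.mem_filter.1 hv).2
        calc _ ≤ (Fintype.piFinset (fun i => edgesBetween U (v i) (v (i - 1)))).card :=
              Finset.card_image_le
          _ = ∏ i : Fin ℓ, (edgesBetween U (v i) (v (i - 1))).card := by
              rw [Fintype.card_piFinset]
          _ ≤ ∏ _i : Fin ℓ, (Fintype.card V) ^ (n - 2) := by
              refine Finset.prod_le_prod' ?_
              intro i _
              exact card_edgesBetween hn hU (hne v hvinj i)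
          _ = ((Fintype.card V) ^ (n - 2)) ^ ℓ := by
              simp [Finset.prod_const]
    _ ≤ (Fintype.card V) ^ ℓ * ((Fintype.card V) ^ (n - 2)) ^ ℓ := by
        rw [Finset.sum_const, smul_eq_mul]
        refine Nat.mul_le_mul_right _ ?_
        calc _ ≤ (Finset.univ : Finset (Fin ℓ → V)).card := Finset.card_le_card (Finset.filter_subset _ _)
          _ = (Fintype.card V) ^ ℓ := by simp [Finset.card_univ]

end Hyper

section Hyper2
variable {V : Type} [Fintype V] [DecidableEq V]

theorem expectation_cycle {p q : ℚ} (hpq : p + q = 1) (U : Finset (Finset V)) (ℓ : ℕ) :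
    ∑ H ∈ U.powerset, pw p q U H * ((cycleFinset H ℓ).card : ℚ)
      = ((cycleFinset U ℓ).card : ℚ) * p ^ ℓ := by
  have hcf : ∀ H ∈ U.powerset, cycleFinset H ℓ
      = (cycleFinset U ℓ).filter (fun c => ∀ i, c.1 i ∈ H) := by
    intro H hH
    rw [Finset.mem_powerset] at hH
    ext c
    simp only [cycleFinset, Finset.mem_filter, Finset.mem_univ, true_and]
    constructor
    · rintro ⟨h1, h2, h3, h4⟩
      exact ⟨⟨h1, fun i => hH (h2 i), h3, h4⟩, h2⟩
    · rintro ⟨⟨h1, -, h3, h4⟩, h2⟩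
      exact ⟨h1, h2, h3, h4⟩
  calc ∑ H ∈ U.powerset, pw p q U H * ((cycleFinset H ℓ).card : ℚ)
      = ∑ H ∈ U.powerset, ∑ c ∈ cycleFinset U ℓ,
          (if ∀ i, c.1 i ∈ H then pw p q U H else 0) := by
        refine Finset.sum_congr rfl ?_
        intro H hH
        rw [hcf H hH, Finset.card_filter]
        push_cast
        rw [Finset.mul_sum]
        refine Finset.sum_congr rfl ?_
        intro c _
        split <;> simp
    _ = ∑ c ∈ cycleFinset U ℓ, ∑ H ∈ U.powerset,
          (if ∀ i, c.1 i ∈ H then pw p q U H else 0) := Finset.sum_comm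
    _ = ∑ c ∈ cycleFinset U ℓ, (p : ℚ) ^ ℓ := by
        refine Finset.sum_congr rfl ?_
        intro c hc
        rw [← Finset.sum_filter]
        have hc' := Finset.mem_filter.1 hc
        obtain ⟨-, h1, h2, h3, h4⟩ := hc'
        have hfil : U.powerset.filter (fun H => ∀ i, c.1 i ∈ H)
            = U.powerset.filter (fun H => (Finset.image c.1 Finset.univ) ⊆ H) := by
          refine Finset.filter_congr ?_
          intro H _
          constructor
          · intro h
            intro x hx
            obtain ⟨i, -, rfl⟩ := Finset.mem_image.1 hx
            exact h i
          · intro h i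
            exact h (Finset.mem_image.2 ⟨i, Finset.mem_univ _, rfl⟩)
        have hSU : Finset.image c.1 Finset.univ ⊆ U := by
          intro x hx
          obtain ⟨i, -, rfl⟩ := Finset.mem_image.1 hx
          exact h2 i
        rw [hfil, sum_pw_superset p q hSU, hpq, one_pow, mul_one,
          Finset.card_image_of_injective _ h1]
        simp
    _ = ((cycleFinset U ℓ).card : ℚ) * p ^ ℓ := by
        rw [Finset.sum_const, nsmul_eq_mul]

theorem nat_choose_le_pow (a b : ℕ) : a.choose b ≤ a ^ b :=
  calc a.choose b ≤ a.descFactorial b := by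
        rw [Nat.descFactorial_eq_factorial_mul_choose]
        exact Nat.le_mul_of_pos_left _ (Nat.factorial_pos _)
    _ ≤ a ^ b := Nat.descFactorial_le_pow _ _

theorem badT_bound {α : Type} [DecidableEq α] {p q : ℚ} (hp0 : 0 ≤ p) (hp1 : p ≤ 1)
    (hq0 : 0 ≤ q) (hq1 : q ≤ 1) (hpq : p + q = 1) {U T : Finset α} (hT : T ⊆ U)
    {t : ℕ} (ht : t ≤ T.card) (hm : 1 ≤ T.card) :
    ∑ H ∈ U.powerset.filter (fun H => (H ∩ T).card < t), pw p q U H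
      ≤ (t : ℚ) * (T.card : ℚ) ^ t * q ^ (T.card - t) := by
  have hsub : U.powerset.filter (fun H => (H ∩ T).card < t)
      ⊆ (Finset.range t).biUnion (fun j => U.powerset.filter (fun H => (H ∩ T).card = j)) := by
    intro H hH
    obtain ⟨h1, h2⟩ := Finset.mem_filter.1 hH
    exact Finset.mem_biUnion.2 ⟨(H ∩ T).card, Finset.mem_range.2 h2,
      Finset.mem_filter.2 ⟨h1, rfl⟩⟩
  calc ∑ H ∈ U.powerset.filter (fun H => (H ∩ T).card < t), pw p q U H
      ≤ ∑ H ∈ (Finset.range t).biUnion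
            (fun j => U.powerset.filter (fun H => (H ∩ T).card = j)), pw p q U H :=
        Finset.sum_le_sum_of_subset_of_nonneg hsub (fun H _ _ => pw_nonneg hp0 hq0 U H)
    _ ≤ ∑ j ∈ Finset.range t, ∑ H ∈ U.powerset.filter (fun H => (H ∩ T).card = j),
          pw p q U H := sum_biUnion_le_sum_sum (pw_nonneg hp0 hq0 U) _ _
    _ ≤ ∑ _j ∈ Finset.range t, (T.card : ℚ) ^ t * q ^ (T.card - t) := by
        refine Finset.sum_le_sum ?_
        intro j hj
        have hjt : j < t := Finset.mem_range.1 hj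
        rw [sum_pw_inter p q hT j, hpq, one_pow, mul_one]
        have h1 : ((T.card.choose j : ℕ) : ℚ) ≤ (T.card : ℚ) ^ t := by
          have := nat_choose_le_pow T.card j
          have h2 : T.card ^ j ≤ T.card ^ t := Nat.pow_le_pow_right hm (le_of_lt hjt)
          exact_mod_cast le_trans this h2
        have h2 : p ^ j ≤ 1 := pow_le_one₀ hp0 hp1
        have h3 : q ^ (T.card - j) ≤ q ^ (T.card - t) :=
          pow_le_pow_of_le_one hq0 hq1 (by omega)
        calc ((T.card.choose j : ℕ) : ℚ) * (p ^ j * q ^ (T.card - j))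
            ≤ (T.card : ℚ) ^ t * (1 * q ^ (T.card - t)) := by
              refine mul_le_mul h1 ?_ ?_ ?_
              · exact mul_le_mul h2 h3 (pow_nonneg hq0 _) (zero_le_one)
              · exact mul_nonneg (pow_nonneg hp0 _) (pow_nonneg hq0 _)
              · exact pow_nonneg (Nat.cast_nonneg _) _
          _ = (T.card : ℚ) ^ t * q ^ (T.card - t) := by ring
    _ = (t : ℚ) * (T.card : ℚ) ^ t * q ^ (T.card - t) := by
        rw [Finset.sum_const, Finset.card_range, nsmul_eq_mul]
        ring

end Hyper2

theorem qpow_bound {p : ℚ} (hp0 : 0 ≤ p) (hp1 : p ≤ 1) (u r : ℕ)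
    (hu : (1 : ℚ) ≤ (u : ℚ) * p) : (1 - p) ^ r ≤ (1 / 2 : ℚ) ^ (r / u) := by
  have h1p : (0 : ℚ) < 1 + p := by linarith
  have hq0 : (0 : ℚ) ≤ 1 - p := by linarith
  have key : (2 : ℚ) ≤ (1 + p) ^ u := by
    have := one_add_mul_le_pow (by linarith : (-2 : ℚ) ≤ p) u
    linarith
  have h2 : (2 : ℚ) ^ (r / u) ≤ (1 + p) ^ r := by
    calc (2 : ℚ) ^ (r / u) ≤ ((1 + p) ^ u) ^ (r / u) :=
          pow_le_pow_left₀ (by norm_num) key _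
      _ = (1 + p) ^ (u * (r / u)) := (pow_mul _ _ _).symm
      _ ≤ (1 + p) ^ r := by
          refine pow_le_pow_right₀ (by linarith) ?_
          rw [mul_comm]
          exact Nat.div_mul_le_self r u
  have h3 : (1 - p) ^ r * (1 + p) ^ r ≤ 1 := by
    rw [← mul_pow]
    have he : (1 - p) * (1 + p) = 1 - p ^ 2 := by ring
    have h4 : (0 : ℚ) ≤ 1 - p ^ 2 := by nlinarith
    have h5 : (1 - p) * (1 + p) ≤ 1 := by nlinarith
    calc ((1 - p) * (1 + p)) ^ r ≤ 1 ^ r := by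
          refine pow_le_pow_left₀ ?_ h5 r
          rw [he]; exact h4
      _ = 1 := one_pow r
  have h6 : (0 : ℚ) < 2 ^ (r / u) := by positivity
  rw [div_pow, one_pow, le_div_iff₀ h6]
  calc (1 - p) ^ r * 2 ^ (r / u) ≤ (1 - p) ^ r * (1 + p) ^ r :=
        mul_le_mul_of_nonneg_left h2 (pow_nonneg hq0 _)
    _ ≤ 1 := h3

theorem aux_two_pow {c A R : ℕ} (hc : c ≤ A) (hR : R = 2 ^ (A + 4)) :
    c * (R + 1) ≤ 2 ^ R := by
  have h1 : c ≤ 2 ^ A := le_trans hc (le_of_lt ((Nat.lt_two_pow_self (n := A))))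
  have h2 : R + 1 ≤ 2 ^ (A + 5) := by
    have he : (2 : ℕ) ^ (A + 5) = 2 * 2 ^ (A + 4) := by ring
    have h1' : 1 ≤ 2 ^ (A + 4) := Nat.one_le_two_pow
    omega
  have h3 : c * (R + 1) ≤ 2 ^ A * 2 ^ (A + 5) := Nat.mul_le_mul h1 h2
  rw [← pow_add] at h3
  refine le_trans h3 (Nat.pow_le_pow_right (by norm_num) ?_)
  rw [hR]
  have h4 : A < 2 ^ A := (Nat.lt_two_pow_self (n := A))
  have h6 : (16 : ℕ) * 2 ^ A = 2 ^ (A + 4) := by ring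
  omega

theorem construction {V : Type} [Fintype V] [DecidableEq V] {n g k t s : ℕ}
    (H : Finset (Finset V))
    (hcard : ∀ F ∈ H, F.card = n)
    (hX : (∑ ℓ ∈ Finset.Ico 2 g, (cycleFinset H ℓ).card) < t)
    (hpig : ∀ c : V → Fin k, ∃ a : Fin k, s ≤ (Finset.univ.filter (fun x => c x = a)).card)
    (hgood : ∀ S ∈ Finset.powersetCard s (Finset.univ : Finset V),
      t ≤ (H ∩ Finset.powersetCard n S).card) :
    ∃ E : Finset (Finset V), (∀ F ∈ E, F.card = n) ∧
      (∀ ℓ : ℕ, 2 ≤ ℓ → ℓ < g → ¬ HypergraphCycle E ℓ) ∧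
      (∀ c : V → Fin k, ∃ F ∈ E, ∃ a : Fin k, ∀ x ∈ F, c x = a) := by
  classical
  set D : Finset (Finset V) := (Finset.Ico 2 g).biUnion (fun ℓ =>
    if h : 0 < ℓ then (cycleFinset H ℓ).image (fun c => c.1 ⟨0, h⟩) else ∅) with hD
  have hDcard : D.card < t := by
    calc D.card ≤ ∑ ℓ ∈ Finset.Ico 2 g, (if h : 0 < ℓ then
          (cycleFinset H ℓ).image (fun c => c.1 ⟨0, h⟩) else ∅).card := Finset.card_biUnion_le
      _ ≤ ∑ ℓ ∈ Finset.Ico 2 g, (cycleFinset H ℓ).card := by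
          refine Finset.sum_le_sum ?_
          intro ℓ _
          split
          · exact Finset.card_image_le
          · simp
      _ < t := hX
  refine ⟨H \ D, ?_, ?_, ?_⟩
  · intro F hF
    exact hcard F (Finset.mem_sdiff.1 hF).1
  · intro ℓ h2 hlg hcyc
    rw [hypergraphCycle_iff] at hcyc
    obtain ⟨c, hc⟩ := hcyc
    obtain ⟨-, h1, hmem, h3, h4⟩ := Finset.mem_filter.1 hc
    have hpos : 0 < ℓ := by omega
    have hcH : c ∈ cycleFinset H ℓ := by
      refine Finset.mem_filter.2 ⟨Finset.mem_univ _, h1, ?_, h3, h4⟩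
      intro i
      exact (Finset.mem_sdiff.1 (hmem i)).1
    have hF0D : c.1 ⟨0, hpos⟩ ∈ D := by
      rw [hD]
      refine Finset.mem_biUnion.2 ⟨ℓ, Finset.mem_Ico.2 ⟨h2, hlg⟩, ?_⟩
      rw [dif_pos hpos]
      exact Finset.mem_image_of_mem _ hcH
    exact (Finset.mem_sdiff.1 (hmem ⟨0, hpos⟩)).2 hF0D
  · intro col
    obtain ⟨a, ha⟩ := hpig col
    obtain ⟨S, hSsub, hScard⟩ := Finset.exists_subset_card_eq ha
    have hS : S ∈ Finset.powersetCard s (Finset.univ : Finset V) :=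
      Finset.mem_powersetCard.2 ⟨Finset.subset_univ _, hScard⟩
    have hgd := hgood S hS
    have h1 : (H ∩ Finset.powersetCard n S).card
        ≤ ((H ∩ Finset.powersetCard n S) \ D).card + D.card :=
      Finset.card_le_card_sdiff_add_card
    have h2 : 0 < ((H ∩ Finset.powersetCard n S) \ D).card := by omega
    obtain ⟨F, hF⟩ := Finset.card_pos.1 h2
    obtain ⟨hF1, hF2⟩ := Finset.mem_sdiff.1 hF
    obtain ⟨hFH, hFT⟩ := Finset.mem_inter.1 hF1
    refine ⟨F, Finset.mem_sdiff.2 ⟨hFH, hF2⟩, a, ?_⟩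
    intro x hx
    have hxS : x ∈ S := (Finset.mem_powersetCard.1 hFT).1 hx
    exact (Finset.mem_filter.1 (hSsub hxS)).2

theorem numeric_key {k n1 t b w P L : ℕ}
    (hL : L = 32 * k * (8 * k) ^ (n1+1) * (n1+1) ^ (n1+1))
    (hb2 : 2 * t * (n1+1) ≤ b)
    (hw : w ≤ 64 * k^2 * b)
    (hP : P ≤ (8 * k * b) ^ n1) :
    (L * t + 2 * P * w) * (n1+1) ^ (n1+1) ≤ L * b ^ (n1+1) := by
  have hbn : 2 * t * (n1+1)^(n1+1) ≤ b^(n1+1) := by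
    calc 2 * t * (n1+1)^(n1+1) ≤ 2^(n1+1) * t^(n1+1) * (n1+1)^(n1+1) := by
          have h2 : 2 ≤ 2^(n1+1) := by
            calc 2 = 2^1 := (pow_one 2).symm
              _ ≤ 2^(n1+1) := Nat.pow_le_pow_right (by norm_num) (by omega)
          have ht' : t ≤ t^(n1+1) := Nat.le_self_pow (by omega) t
          exact Nat.mul_le_mul (Nat.mul_le_mul h2 ht') le_rfl
      _ = (2 * t * (n1+1))^(n1+1) := by rw [mul_pow, mul_pow]
      _ ≤ b^(n1+1) := Nat.pow_le_pow_left hb2 _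
  have A1 : L * t * (n1+1)^(n1+1)
      ≤ 16 * k * (8*k)^(n1+1) * (n1+1)^(n1+1) * b^(n1+1) := by
    calc L * t * (n1+1)^(n1+1)
        = 16 * k * (8*k)^(n1+1) * (n1+1)^(n1+1) * (2 * t * (n1+1)^(n1+1)) := by rw [hL]; ring
      _ ≤ 16 * k * (8*k)^(n1+1) * (n1+1)^(n1+1) * b^(n1+1) := Nat.mul_le_mul_left _ hbn
  have A2 : 2 * P * w * (n1+1)^(n1+1)
      ≤ 16 * k * (8*k)^(n1+1) * (n1+1)^(n1+1) * b^(n1+1) := by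
    calc 2 * P * w * (n1+1)^(n1+1)
        ≤ 2 * ((8*k*b)^n1) * (64*k^2*b) * (n1+1)^(n1+1) := by
          exact Nat.mul_le_mul (Nat.mul_le_mul (Nat.mul_le_mul le_rfl hP) hw) le_rfl
      _ = 16 * k * (8*k)^(n1+1) * (n1+1)^(n1+1) * b^(n1+1) := by ring
  calc (L * t + 2 * P * w) * (n1+1) ^ (n1+1)
      = L * t * (n1+1)^(n1+1) + 2 * P * w * (n1+1)^(n1+1) := by ring
    _ ≤ 16 * k * (8*k)^(n1+1) * (n1+1)^(n1+1) * b^(n1+1)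
        + 16 * k * (8*k)^(n1+1) * (n1+1)^(n1+1) * b^(n1+1) :=
        Nat.add_le_add A1 A2
    _ = L * b ^ (n1+1) := by rw [hL]; ring

theorem pigeonhole_color {V : Type} [Fintype V] [DecidableEq V] {k : ℕ} (hk : 0 < k)
    (c : V → Fin k) :
    ∃ a : Fin k, (Fintype.card V / k) ≤ (Finset.univ.filter (fun x => c x = a)).card := by
  by_contra hcon
  push_neg at hcon
  haveI : Nonempty (Fin k) := ⟨⟨0, hk⟩⟩
  have hsum : ∑ a : Fin k, (Finset.univ.filter (fun x => c x = a)).card = Fintype.card V := by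
    rw [← Finset.card_univ (α := V)]
    exact (Finset.card_eq_sum_card_fiberwise (fun x _ => Finset.mem_univ (c x))).symm
  have hlt : ∑ a : Fin k, (Finset.univ.filter (fun x => c x = a)).card
      < ∑ _a : Fin k, Fintype.card V / k := by
    refine Finset.sum_lt_sum_of_nonempty Finset.univ_nonempty ?_
    intro a _
    exact hcon a
  rw [hsum, Finset.sum_const, Finset.card_univ, Fintype.card_fin, smul_eq_mul] at hlt
  have : k * (Fintype.card V / k) ≤ Fintype.card V := Nat.mul_div_le _ _
  omega


set_option maxHeartbeats 2000000 in
/-- (Erdős–Hajnal) For all `n ≥ 2`, `g ≥ 2` and `k ≥ 1`, there exists a finite `n`-uniform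
hypergraph with girth at least `g` (no cycle of length less than `g`) and chromatic number
greater than `k` (every `k`-colouring makes some hyperedge monochromatic). -/
theorem uniform_hypergraph_high_girth_high_chromatic
    (n g k : ℕ) (hn : 2 ≤ n) (hg : 2 ≤ g) (hk : 0 < k) :
    ∃ (V : Type) (_ : Fintype V) (E : Finset (Finset V)),
      (∀ F ∈ E, F.card = n) ∧
      (∀ ℓ : ℕ, 2 ≤ ℓ → ℓ < g → ¬ HypergraphCycle E ℓ) ∧
      (∀ c : V → Fin k, ∃ F ∈ E, ∃ a : Fin k, ∀ x ∈ F, c x = a) := by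
  classical
  obtain ⟨n1, rfl⟩ : ∃ n1, n = n1 + 1 := ⟨n - 1, by omega⟩
  have hn1 : 1 ≤ n1 := by omega
  set L : ℕ := 32 * k * (8 * k) ^ (n1+1) * (n1+1) ^ (n1+1) with hLdef
  set t : ℕ := 2 * g * L ^ g + 1 with htdef
  set c1 : ℕ := 4 * k * (2 * t * (n1+1) + t + 1) with hc1def
  set c2 : ℕ := 4 * k * (n1+1) * t with hc2def
  set A : ℕ := c1 + c2 + L + 2 * (n1+1) * k with hAdef
  set R : ℕ := 2 ^ (A + 4) with hRdef
  set N : ℕ := 2 ^ R with hNdef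
  set z : ℕ := R * (n1+1) * t with hzdef
  set V : Type := Fin N with hVdef
  set U : Finset (Finset V) := Finset.powersetCard (n1+1) (Finset.univ : Finset V) with hUdef
  set P : ℕ := N ^ n1 with hPdef
  set p : ℚ := (L : ℚ) / (P : ℚ) with hpdef
  set s : ℕ := N / k with hsdef
  set m : ℕ := s.choose (n1+1) with hmdef
  set u : ℕ := P / L + 1 with hudef
  set b : ℕ := s / 4 with hbdef
  set w : ℕ := N + 1 + t + z with hwdef
  set X : Finset (Finset V) → ℕ := fun H => ∑ ℓ ∈ Finset.Ico 2 g, (cycleFinset H ℓ).card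
    with hXdef
  clear_value L t c1 c2 A R N z P p s m u b w
  -- basic numeric facts
  have hL1 : 1 ≤ L := by
    have h1 : 0 < L := by
      rw [hLdef]
      exact Nat.mul_pos (Nat.mul_pos (by omega) (pow_pos (by omega) _)) (pow_pos (by omega) _)
    omega
  have ht1 : 1 ≤ t := by rw [htdef]; exact Nat.le_add_left 1 _
  have hR1 : 1 ≤ R := by rw [hRdef]; exact Nat.one_le_two_pow
  have hAR : A < R := by
    rw [hRdef]
    calc A < 2 ^ A := (Nat.lt_two_pow_self (n := A))
      _ ≤ 2 ^ (A + 4) := Nat.pow_le_pow_right (by norm_num) (by omega)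
  have hRN : R < N := by rw [hNdef]; exact (Nat.lt_two_pow_self (n := R))
  have hN1 : 1 ≤ N := by rw [hNdef]; exact Nat.one_le_two_pow
  have hLA : L ≤ A := by omega
  have hLN : L ≤ N := by omega
  have hNP : N ≤ P := by
    rw [hPdef]
    calc N = N ^ 1 := (pow_one N).symm
      _ ≤ N ^ n1 := Nat.pow_le_pow_right hN1 hn1
  have hLP : L ≤ P := le_trans hLN hNP
  have hP0 : 0 < P := by omega
  have hP0Q : (0:ℚ) < (P:ℚ) := by exact_mod_cast hP0
  have hL0Q : (0:ℚ) ≤ (L:ℚ) := by positivity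
  have hp0 : 0 ≤ p := by rw [hpdef]; positivity
  have hp1 : p ≤ 1 := by
    rw [hpdef, div_le_one hP0Q]
    exact_mod_cast hLP
  have hq0 : 0 ≤ 1 - p := by linarith
  have hq1 : 1 - p ≤ 1 := by linarith
  have hpq : p + (1 - p) = 1 := by ring
  have hPp : (P : ℚ) * p = (L : ℚ) := by
    rw [hpdef]
    field_simp
  have hcardV : Fintype.card V = N := Fintype.card_fin N
  have hUcard : ∀ F ∈ U, F.card = n1 + 1 := fun F hF => (Finset.mem_powersetCard.1 hF).2
  -- expectation bound per cycle length
  have hEcyc : ∀ ℓ ∈ Finset.Ico 2 g,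
      ∑ H ∈ U.powerset, pw p (1-p) U H * ((cycleFinset H ℓ).card : ℚ) ≤ (L:ℚ)^g := by
    intro ℓ hℓ
    rw [Finset.mem_Ico] at hℓ
    rw [expectation_cycle hpq U ℓ]
    have hcount : (cycleFinset U ℓ).card ≤ P ^ ℓ := by
      calc (cycleFinset U ℓ).card
          ≤ (Fintype.card V)^ℓ * ((Fintype.card V)^(n1+1-2))^ℓ :=
            card_cycleFinset_le (by omega) hUcard hℓ.1
        _ = P ^ ℓ := by
            rw [hcardV, ← pow_mul N (n1+1-2) ℓ, ← pow_add N ℓ ((n1+1-2)*ℓ), hPdef,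
              ← pow_mul N n1 ℓ]
            congr 1
            obtain ⟨n2, rfl⟩ : ∃ n2, n1 = n2 + 1 := ⟨n1 - 1, by omega⟩
            rw [show n2 + 1 + 1 - 2 = n2 from by omega]
            ring
    calc ((cycleFinset U ℓ).card : ℚ) * p ^ ℓ
        ≤ ((P:ℚ))^ℓ * p^ℓ := by
          have hc : ((cycleFinset U ℓ).card : ℚ) ≤ ((P:ℚ))^ℓ := by exact_mod_cast hcount
          exact mul_le_mul_of_nonneg_right hc (pow_nonneg hp0 _)
      _ = ((P:ℚ) * p)^ℓ := (mul_pow _ _ _).symm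
      _ = (L:ℚ)^ℓ := by rw [hPp]
      _ ≤ (L:ℚ)^g := pow_le_pow_right₀ (by exact_mod_cast hL1) (by omega)
  -- Markov bound
  have hMark : ∑ H ∈ U.powerset.filter (fun H => t ≤ X H), pw p (1-p) U H < 1/2 := by
    have h1 := markov_bound hp0 hq0 U X t
    have h2 : ∑ H ∈ U.powerset, pw p (1-p) U H * (X H : ℚ) ≤ (g : ℚ) * (L:ℚ)^g := by
      calc ∑ H ∈ U.powerset, pw p (1-p) U H * (X H : ℚ)
          = ∑ ℓ ∈ Finset.Ico 2 g, ∑ H ∈ U.powerset,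
              pw p (1-p) U H * ((cycleFinset H ℓ).card : ℚ) := by
            rw [Finset.sum_comm]
            refine Finset.sum_congr rfl ?_
            intro H _
            rw [hXdef]
            push_cast
            rw [Finset.mul_sum]
        _ ≤ ∑ _ℓ ∈ Finset.Ico 2 g, (L:ℚ)^g := Finset.sum_le_sum hEcyc
        _ = ((g - 2 : ℕ) : ℚ) * (L:ℚ)^g := by
            rw [Finset.sum_const, Nat.card_Ico, nsmul_eq_mul]
        _ ≤ (g : ℚ) * (L:ℚ)^g := by
            have hgc : ((g-2:ℕ):ℚ) ≤ (g:ℚ) := by exact_mod_cast Nat.sub_le g 2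
            exact mul_le_mul_of_nonneg_right hgc (by positivity)
    have hx0 : 0 ≤ ∑ H ∈ U.powerset.filter (fun H => t ≤ X H), pw p (1-p) U H :=
      Finset.sum_nonneg (fun H _ => pw_nonneg hp0 hq0 U H)
    have h3 : (t:ℚ) * ∑ H ∈ U.powerset.filter (fun H => t ≤ X H), pw p (1-p) U H
        ≤ (g:ℚ) * (L:ℚ)^g := le_trans h1 h2
    have h4 : (t:ℚ) = 2 * (g:ℚ) * (L:ℚ)^g + 1 := by rw [htdef]; push_cast; ring
    by_contra hcon
    push_neg at hcon
    have h5 : (t:ℚ) * (1/2) ≤ (t:ℚ) * ∑ H ∈ U.powerset.filter (fun H => t ≤ X H),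
        pw p (1-p) U H := mul_le_mul_of_nonneg_left hcon (by positivity)
    rw [h4] at h5
    have hgL : (0:ℚ) ≤ (g:ℚ) * (L:ℚ)^g := by positivity
    nlinarith [h3, h5, h4]
  -- arithmetic chain
  have hu0 : 0 < u := by rw [hudef]; exact Nat.succ_pos _
  have h2nk : 2 * (n1+1) ≤ s := by
    rw [hsdef, Nat.le_div_iff_mul_le hk]
    calc 2 * (n1+1) * k ≤ A := by
          rw [hAdef]
          exact Nat.le_add_left _ _
      _ ≤ N := by omega
  have hbig : 2*t*(n1+1) + (t + 1 + z) ≤ b := by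
    rw [hbdef, hsdef, Nat.div_div_eq_div_mul, Nat.le_div_iff_mul_le (by positivity)]
    have e1 : (2*t*(n1+1) + (t + 1 + z)) * (k*4) = c1 + c2*R := by
      rw [hc1def, hc2def, hzdef]; ring
    have e2 : c1 + c2*R ≤ (c1+c2)*(R+1) := by
      calc c1 + c2*R ≤ (c1*R + c1) + (c2*R + c2) :=
            Nat.add_le_add (Nat.le_add_left c1 (c1*R)) (Nat.le_add_right _ _)
        _ = (c1+c2)*(R+1) := by ring
    have e3 : (c1+c2)*(R+1) ≤ 2^R := by
      refine aux_two_pow ?_ hRdef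
      rw [hAdef]
      exact le_trans (Nat.le_add_right _ L) (Nat.le_add_right _ _)
    rw [e1]
    exact le_trans (le_trans e2 e3) (le_of_eq hNdef.symm)
  have hb2 : 2*t*(n1+1) ≤ b := le_trans (Nat.le_add_right _ _) hbig
  have h1tz : t + 1 + z ≤ b := le_trans (Nat.le_add_left _ _) hbig
  have hb1 : 0 < b := by
    have : 0 < t + 1 + z := by positivity
    omega
  have hsb : b + (n1+1) ≤ s := by omega
  have hN8kb : N ≤ 8*k*b := by
    have hbe : b = N / (k*4) := by rw [hbdef, hsdef, Nat.div_div_eq_div_mul]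
    have hd1 : (k*4) * b + N % (k*4) = N := by rw [hbe]; exact Nat.div_add_mod N (k*4)
    have hd2 : N % (k*4) < k*4 := Nat.mod_lt _ (by positivity)
    calc N = (k*4)*b + N % (k*4) := hd1.symm
      _ ≤ (k*4)*b + k*4 := Nat.add_le_add_left hd2.le _
      _ ≤ (k*4)*b + (k*4)*b := by
          refine Nat.add_le_add_left ?_ _
          calc k*4 = k*4*1 := (Nat.mul_one _).symm
            _ ≤ k*4*b := Nat.mul_le_mul_left _ hb1
      _ = 8*k*b := by ring
  have hP8kb : P ≤ (8*k*b)^n1 := by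
    rw [hPdef]
    exact Nat.pow_le_pow_left hN8kb n1
  have hwb : w ≤ 64 * k^2 * b := by
    calc w = N + (1 + t + z) := by rw [hwdef]; ring
      _ ≤ 8*k*b + b := by
          refine Nat.add_le_add hN8kb ?_
          calc 1 + t + z = t + 1 + z := by ring
            _ ≤ b := h1tz
      _ ≤ 64 * k^2 * b := by
          have h1 : b ≤ k*b := Nat.le_mul_of_pos_left b hk
          calc 8*k*b + b ≤ 8*k*b + k*b := Nat.add_le_add_left h1 _
            _ = 9*(k*b) := by ring
            _ ≤ (64*k)*(k*b) := Nat.mul_le_mul_right (k*b) (by omega)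
            _ = 64*k^2*b := by ring
  have hmn : b ^ (n1+1) ≤ m * (n1+1)^(n1+1) := by
    calc b^(n1+1) ≤ (s + 1 - (n1+1))^(n1+1) := Nat.pow_le_pow_left (by omega) _
      _ ≤ s.descFactorial (n1+1) := Nat.pow_sub_le_descFactorial s (n1+1)
      _ = Nat.factorial (n1+1) * m := by rw [Nat.descFactorial_eq_factorial_mul_choose, hmdef]
      _ ≤ (n1+1)^(n1+1) * m := Nat.mul_le_mul_right _ (Nat.factorial_le_pow _)
      _ = m * (n1+1)^(n1+1) := Nat.mul_comm _ _
  have hkey1 := numeric_key hLdef hb2 hwb hP8kb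
  have hLm : L * t + 2 * P * w ≤ L * m := by
    have h1 : (L*t + 2*P*w) * (n1+1)^(n1+1) ≤ L * m * (n1+1)^(n1+1) := by
      calc (L*t + 2*P*w) * (n1+1)^(n1+1) ≤ L * b^(n1+1) := hkey1
        _ ≤ L * (m * (n1+1)^(n1+1)) := Nat.mul_le_mul_left _ hmn
        _ = L * m * (n1+1)^(n1+1) := by ring
    exact Nat.le_of_mul_le_mul_right h1 (by positivity)
  have hLu : L * u ≤ 2 * P := by
    rw [hudef, Nat.mul_add, Nat.mul_one]
    have h1 : L*(P/L) ≤ P := by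
      rw [Nat.mul_comm]
      exact Nat.div_mul_le_self P L
    have h2 := Nat.add_le_add h1 hLP
    omega
  have hwu : w * u + t ≤ m := by
    have h1 : L * (w*u+t) ≤ L * m := by
      calc L * (w*u+t) = w*(L*u) + L*t := by ring
        _ ≤ w*(2*P) + L*t := Nat.add_le_add_right (Nat.mul_le_mul le_rfl hLu) _
        _ = L*t + 2*P*w := by ring
        _ ≤ L*m := hLm
    exact Nat.le_of_mul_le_mul_left h1 (by omega)
  have htm : t ≤ m := le_trans (Nat.le_add_left t (w*u)) hwu
  have hm1 : 1 ≤ m := le_trans ht1 htm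
  have hDw : w ≤ (m-t)/u := by
    rw [Nat.le_div_iff_mul_le hu0]
    exact Nat.le_sub_of_add_le hwu
  have hup : (1:ℚ) ≤ (u:ℚ) * p := by
    have h1 : P < u * L := by
      have hd : L * (P/L) + P % L = P := Nat.div_add_mod P L
      have hm2 : P % L < L := Nat.mod_lt _ (by omega)
      calc P = L*(P/L) + P % L := hd.symm
        _ < L*(P/L) + L := Nat.add_lt_add_left hm2 _
        _ = (P/L + 1)*L := by ring
        _ = u * L := by rw [hudef]
    rw [hpdef, ← mul_div_assoc, one_le_div hP0Q]
    exact_mod_cast h1.le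
  have hqpow : (1 - p)^(m - t) ≤ (1/2:ℚ)^w := by
    calc (1-p)^(m-t) ≤ (1/2:ℚ)^((m-t)/u) := qpow_bound hp0 hp1 u (m-t) hup
      _ ≤ (1/2:ℚ)^w := pow_le_pow_of_le_one (by norm_num) (by norm_num) hDw
  -- bad event 2 bound
  have hchoose2N : (N.choose s : ℚ) ≤ ((2:ℚ))^N := by
    have h1 : N.choose s ≤ 2^N := by
      have hsN : s ∈ Finset.range (N+1) := by
        rw [Finset.mem_range, hsdef]
        exact lt_of_le_of_lt (Nat.div_le_self N k) (Nat.lt_succ_self N)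
      calc N.choose s ≤ ∑ j ∈ Finset.range (N+1), N.choose j :=
            Finset.single_le_sum (fun j _ => Nat.zero_le _) hsN
        _ = 2^N := Nat.sum_range_choose N
    exact_mod_cast h1
  have hnatexp : (2^N * (t * m^t)) * 2 ≤ 2^w := by
    have hm2R : m ≤ 2^(R*(n1+1)) := by
      calc m ≤ s^(n1+1) := by rw [hmdef]; exact nat_choose_le_pow s (n1+1)
        _ ≤ N^(n1+1) := Nat.pow_le_pow_left (by rw [hsdef]; exact Nat.div_le_self N k) _
        _ = 2^(R*(n1+1)) := by rw [hNdef, ← pow_mul]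
    have hmt : m^t ≤ 2^z := by
      calc m^t ≤ (2^(R*(n1+1)))^t := Nat.pow_le_pow_left hm2R t
        _ = 2^z := by rw [← pow_mul, hzdef]
    have ht2 : t ≤ 2^t := (Nat.lt_two_pow_self (n := t)).le
    calc (2^N * (t * m^t)) * 2 ≤ (2^N * (2^t * 2^z)) * 2 :=
          Nat.mul_le_mul_right _ (Nat.mul_le_mul_left _ (Nat.mul_le_mul ht2 hmt))
      _ = 2^(N + t + z + 1) := by rw [pow_add, pow_add, pow_add, pow_one]; ring
      _ = 2^w := by rw [hwdef]; congr 1; ring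
  have hbad2 : ∑ H ∈ U.powerset.filter (fun H => ∃ S ∈ Finset.powersetCard s
      (Finset.univ : Finset V), (H ∩ Finset.powersetCard (n1+1) S).card < t),
      pw p (1-p) U H ≤ 1/2 := by
    have hsub : U.powerset.filter (fun H => ∃ S ∈ Finset.powersetCard s
        (Finset.univ : Finset V), (H ∩ Finset.powersetCard (n1+1) S).card < t)
        ⊆ (Finset.powersetCard s (Finset.univ : Finset V)).biUnion (fun S =>
          U.powerset.filter (fun H => (H ∩ Finset.powersetCard (n1+1) S).card < t)) := by
      intro H hH
      obtain ⟨h1, S, hS, h2⟩ := Finset.mem_filter.1 hH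
      exact Finset.mem_biUnion.2 ⟨S, hS, Finset.mem_filter.2 ⟨h1, h2⟩⟩
    have hperS : ∀ S ∈ Finset.powersetCard s (Finset.univ : Finset V),
        ∑ H ∈ U.powerset.filter (fun H => (H ∩ Finset.powersetCard (n1+1) S).card < t),
          pw p (1-p) U H ≤ (t:ℚ) * (m:ℚ)^t * (1/2:ℚ)^w := by
      intro S hS
      have hTU : Finset.powersetCard (n1+1) S ⊆ U := by
        rw [hUdef]
        exact Finset.powersetCard_mono (Finset.subset_univ S)
      have hTcard : (Finset.powersetCard (n1+1) S).card = m := by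
        rw [Finset.card_powersetCard, (Finset.mem_powersetCard.1 hS).2, hmdef]
      have hb := badT_bound hp0 hp1 hq0 hq1 hpq hTU (t := t)
        (by rw [hTcard]; exact htm) (by rw [hTcard]; exact hm1)
      rw [hTcard] at hb
      refine le_trans hb ?_
      refine mul_le_mul_of_nonneg_left hqpow ?_
      positivity
    calc ∑ H ∈ U.powerset.filter (fun H => ∃ S ∈ Finset.powersetCard s
          (Finset.univ : Finset V), (H ∩ Finset.powersetCard (n1+1) S).card < t),
          pw p (1-p) U H
        ≤ ∑ H ∈ (Finset.powersetCard s (Finset.univ : Finset V)).biUnion (fun S =>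
            U.powerset.filter (fun H => (H ∩ Finset.powersetCard (n1+1) S).card < t)),
            pw p (1-p) U H :=
          Finset.sum_le_sum_of_subset_of_nonneg hsub (fun H _ _ => pw_nonneg hp0 hq0 U H)
      _ ≤ ∑ S ∈ Finset.powersetCard s (Finset.univ : Finset V),
            ∑ H ∈ U.powerset.filter (fun H =>
              (H ∩ Finset.powersetCard (n1+1) S).card < t), pw p (1-p) U H :=
          sum_biUnion_le_sum_sum (pw_nonneg hp0 hq0 U) _ _
      _ ≤ ∑ _S ∈ Finset.powersetCard s (Finset.univ : Finset V),
            (t:ℚ) * (m:ℚ)^t * (1/2:ℚ)^w := Finset.sum_le_sum hperS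
      _ = (N.choose s : ℚ) * ((t:ℚ) * (m:ℚ)^t * (1/2:ℚ)^w) := by
          rw [Finset.sum_const, Finset.card_powersetCard, Finset.card_univ, hcardV,
            nsmul_eq_mul]
      _ ≤ ((2:ℚ))^N * ((t:ℚ) * (m:ℚ)^t * (1/2:ℚ)^w) := by
          refine mul_le_mul_of_nonneg_right hchoose2N ?_
          positivity
      _ ≤ 1/2 := by
          have hpow2 : (0:ℚ) < (2:ℚ)^w := by positivity
          rw [div_pow, one_pow, ← mul_div_assoc, ← mul_div_assoc,
            div_le_div_iff₀ hpow2 (by norm_num : (0:ℚ) < 2), mul_one]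
          have hcast : ((2^N * (t * m^t)) * 2 : ℕ) ≤ (2^w : ℕ) := hnatexp
          have hcast2 : (((2^N * (t * m^t)) * 2 : ℕ) : ℚ) ≤ ((2^w : ℕ) : ℚ) := by
            exact_mod_cast hcast
          push_cast at hcast2
          calc (2:ℚ)^N * ((t:ℚ) * (m:ℚ)^t) * 2 ≤ (2:ℚ)^w := by
                convert hcast2 using 2
            _ = 1 * (2:ℚ)^w := (one_mul _).symm
  -- existence of a good H
  have hone : ∑ H ∈ U.powerset, pw p (1-p) U H = 1 := by
    rw [sum_pw, hpq, one_pow]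
  have hex : ∃ H ∈ U.powerset, X H < t ∧ ∀ S ∈ Finset.powersetCard s
      (Finset.univ : Finset V), t ≤ (H ∩ Finset.powersetCard (n1+1) S).card := by
    by_contra hcon
    push_neg at hcon
    have hcover : U.powerset ⊆ (U.powerset.filter (fun H => t ≤ X H))
        ∪ (U.powerset.filter (fun H => ∃ S ∈ Finset.powersetCard s
          (Finset.univ : Finset V), (H ∩ Finset.powersetCard (n1+1) S).card < t)) := by
      intro H hH
      rcases le_or_gt t (X H) with h | h
      · exact Finset.mem_union_left _ (Finset.mem_filter.2 ⟨hH, h⟩)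
      · obtain ⟨S, hS1, hS2⟩ := hcon H hH h
        exact Finset.mem_union_right _ (Finset.mem_filter.2 ⟨hH, S, hS1, hS2⟩)
    have h1 := Finset.sum_le_sum_of_subset_of_nonneg hcover
        (fun H _ _ => pw_nonneg hp0 hq0 U H)
    have h1' := le_trans (le_of_eq hone.symm) h1
    have h2 := sum_union_le_add (pw_nonneg hp0 hq0 U)
      (U.powerset.filter (fun H => t ≤ X H))
      (U.powerset.filter (fun H => ∃ S ∈ Finset.powersetCard s
        (Finset.univ : Finset V), (H ∩ Finset.powersetCard (n1+1) S).card < t))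
    linarith [hMark, hbad2, h1', h2]
  obtain ⟨H, hHU, hHX, hHgood⟩ := hex
  have hHsub : H ⊆ U := Finset.mem_powerset.1 hHU
  have hpig : ∀ c : V → Fin k, ∃ a : Fin k,
      s ≤ (Finset.univ.filter (fun x => c x = a)).card := by
    intro c
    obtain ⟨a, ha⟩ := pigeonhole_color hk c
    refine ⟨a, ?_⟩
    have he : Fintype.card V / k = s := by rw [hcardV, hsdef]
    exact he.symm.le.trans (he ▸ ha)
  obtain ⟨E, hE1, hE2, hE3⟩ := construction H (fun F hF => hUcard F (hHsub hF)) hHX hpig hHgood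
  exact ⟨V, inferInstance, E, hE1, hE2, hE3⟩
end
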